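/- arXiv:1001.0895 — 3 statements merged into one kernel-verified Lean document; each statement's English description precedes it below -/
import Mathlib

section
/- Let (z(t))_{t≥0} be the solution of ż = v(z) in D starting from the zero sequence, and let (x(t))_{t≥0} be the solution of the truncated system ẋ = u^{(d)}(x) in D(d) starting from the zero vector. Then for all t ≥ 0, Σ_{k=1}^d |z_k(t) − x_k(t)| ≤ t · a_{d+1}. -/
open Filter

noncomputable section

/-- `pcoef n z j` is `p_j(z) = n (z_j - z_{j+1}) z_{j+1}^(n-1)`. -/
def pcoef (n : ℕ) (z : ℕ → ℝ) (j : ℕ) : ℝ :=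
  (n : ℝ) * (z j - z (j + 1)) * z (j + 1) ^ (n - 1)

/-- The `j`-th factor `z_{j+1}^n / (1 - p_j(z))` of `μ(z,·)`,
with the convention that a factor of the form `0/0` equals `1`. -/
def muFactor (n : ℕ) (z : ℕ → ℝ) (j : ℕ) : ℝ :=
  if z (j + 1) ^ n = 0 ∧ 1 - pcoef n z j = 0 then 1
  else z (j + 1) ^ n / (1 - pcoef n z j)

/-- `mu n z k` is `μ(z,k) = ∏_{j=1}^k z_j^n / (1 - p_{j-1}(z))`. -/
def mu (n : ℕ) (z : ℕ → ℝ) (k : ℕ) : ℝ :=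
  ∏ j ∈ Finset.range k, muFactor n z j

/-- The vector field `v_k(z) = λ z_{k-1}^n μ(z,k-1) - λ z_k^n μ(z,k) - (z_k - z_{k+1})`,
meaningful for `k ≥ 1`. -/
def vfield (lam : ℝ) (n : ℕ) (z : ℕ → ℝ) (k : ℕ) : ℝ :=
  lam * z (k - 1) ^ n * mu n z (k - 1) - lam * z k ^ n * mu n z k - (z k - z (k + 1))

/-- Membership in `D`: non-increasing `[0,1]`-valued summable sequences,
with the convention `z 0 = 1`. -/
def memD (z : ℕ → ℝ) : Prop :=
  z 0 = 1 ∧ (∀ k, z (k + 1) ≤ z k) ∧ (∀ k, 0 ≤ z k ∧ z k ≤ 1) ∧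
    Summable (fun k => z (k + 1))

/-- A solution of `ż = v(z)` in `D`: a family of functions `z k : [0,∞) → [0,1]`,
lying in `D` at each time `t ≥ 0`, differentiable with derivative `v_k(z(t))` for `k ≥ 1`. -/
def IsSolution (lam : ℝ) (n : ℕ) (z : ℕ → ℝ → ℝ) : Prop :=
  (∀ t : ℝ, 0 ≤ t → memD (fun k => z k t)) ∧
  (∀ k : ℕ, 1 ≤ k → ∀ t : ℝ, 0 ≤ t →
    HasDerivWithinAt (z k) (vfield lam n (fun j => z j t) k) (Set.Ici 0) t)

/-- Membership in `D(d)`: `0 ≤ x_d ≤ ⋯ ≤ x_1 ≤ 1` and `x_k = 0` for `k > d`,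
with the convention `x 0 = 1`. -/
def memDd (d : ℕ) (x : ℕ → ℝ) : Prop :=
  x 0 = 1 ∧ (∀ k, x (k + 1) ≤ x k) ∧ (∀ k, 0 ≤ x k ∧ x k ≤ 1) ∧
    (∀ k, d < k → x k = 0)

/-- The truncated vector field `u = u^(d)`. -/
def ufield (lam : ℝ) (n : ℕ) (d : ℕ) (x : ℕ → ℝ) (k : ℕ) : ℝ :=
  if k < d then vfield lam n x k
  else if k = d then
    lam * x (d - 1) ^ n * mu n x (d - 1) - lam * x d ^ n * mu n x d - x d
  else 0

/-- A solution of the truncated system `ẋ = u^(d)(x)` in `D(d)`. -/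
def IsSolutionTrunc (lam : ℝ) (n : ℕ) (d : ℕ) (x : ℕ → ℝ → ℝ) : Prop :=
  (∀ t : ℝ, 0 ≤ t → memDd d (fun k => x k t)) ∧
  (∀ k : ℕ, 1 ≤ k → ∀ t : ℝ, 0 ≤ t →
    HasDerivWithinAt (x k) (ufield lam n d (fun j => x j t) k) (Set.Ici 0) t)

open Set Topology

namespace Stmt14

section ALL
variable {n : ℕ} {y w : ℕ → ℝ} {j k : ℕ} {δ η : ℝ}

lemma geom_bounds {x y : ℝ} (n : ℕ) (h0 : 0 ≤ y) (hyx : y ≤ x) (hx1 : x ≤ 1) :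
    (n : ℝ) * y ^ (n - 1) * (x - y) ≤ x ^ n - y ^ n ∧
      x ^ n - y ^ n ≤ (n : ℝ) * (x - y) := by
  have hy1 : y ≤ 1 := hyx.trans hx1
  have hx0 : 0 ≤ x := h0.trans hyx
  have hid := geom_sum₂_mul x y n
  constructor
  · rw [← hid]
    have hsum : (n : ℝ) * y ^ (n - 1) ≤ ∑ i ∈ Finset.range n, x ^ i * y ^ (n - 1 - i) := by
      have := Finset.card_nsmul_le_sum (Finset.range n)
        (fun i => x ^ i * y ^ (n - 1 - i)) (y ^ (n - 1)) ?_
      · simpa [nsmul_eq_mul] using this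
      · intro i hi
        rw [Finset.mem_range] at hi
        calc y ^ (n - 1) = y ^ i * y ^ (n - 1 - i) := by
              rw [← pow_add]
              congr 1
              omega
          _ ≤ x ^ i * y ^ (n - 1 - i) := by
              apply mul_le_mul_of_nonneg_right (pow_le_pow_left₀ h0 hyx i) (pow_nonneg h0 _)
    exact mul_le_mul_of_nonneg_right hsum (by linarith)
  · rw [← hid]
    have hsum : ∑ i ∈ Finset.range n, x ^ i * y ^ (n - 1 - i) ≤ (n : ℝ) := by
      calc ∑ i ∈ Finset.range n, x ^ i * y ^ (n - 1 - i)
          ≤ ∑ _i ∈ Finset.range n, (1 : ℝ) := by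
            apply Finset.sum_le_sum
            intro i _
            calc x ^ i * y ^ (n - 1 - i) ≤ 1 * 1 := by
                  apply mul_le_mul (pow_le_one₀ hx0 hx1) (pow_le_one₀ h0 hy1)
                    (pow_nonneg h0 _) zero_le_one
              _ = 1 := by ring
        _ = (n : ℝ) := by simp
    exact mul_le_mul_of_nonneg_right hsum (by linarith)


/-- local region hypothesis at index `j` -/
def LocReg (y : ℕ → ℝ) (j : ℕ) : Prop :=
  0 ≤ y (j + 1) ∧ y (j + 1) ≤ y j ∧ y j ≤ 1

lemma pcoef_nonneg (h : LocReg y j) : 0 ≤ pcoef n y j := by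
  obtain ⟨h0, h1, h2⟩ := h
  unfold pcoef
  have h3 : (0:ℝ) ≤ y (j+1) ^ (n-1) := pow_nonneg h0 _
  apply mul_nonneg (mul_nonneg n.cast_nonneg (by linarith)) h3

lemma pcoef_le (h : LocReg y j) : pcoef n y j ≤ y j ^ n - y (j + 1) ^ n := by
  obtain ⟨h0, h1, h2⟩ := h
  have := (geom_bounds n h0 h1 h2).1
  unfold pcoef
  nlinarith

lemma den_ge_pow (h : LocReg y j) : y (j + 1) ^ n ≤ 1 - pcoef n y j := by
  have h2 := pcoef_le (n := n) h
  have : y j ^ n ≤ 1 := pow_le_one₀ (h.1.trans h.2.1) h.2.2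
  linarith

lemma den_nonneg (h : LocReg y j) : 0 ≤ 1 - pcoef n y j :=
  le_trans (pow_nonneg h.1 _) (den_ge_pow h)

lemma den_ge_inv_sq (hn : 2 ≤ n) (h : LocReg y j) :
    1 / (4 * (n : ℝ) ^ 2) ≤ 1 - pcoef n y j := by
  obtain ⟨h0, h1, h2⟩ := h
  have hn0 : (0:ℝ) < n := by positivity
  have hs1 : y (j+1) ≤ 1 := h1.trans h2
  by_cases hc : (n : ℝ) * y (j+1) ^ (n-1) ≤ 1/2
  · have hp : pcoef n y j ≤ 1/2 := by
      unfold pcoef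
      have h3 : (0:ℝ) ≤ y (j+1) ^ (n-1) := pow_nonneg h0 _
      calc (n : ℝ) * (y j - y (j+1)) * y (j+1) ^ (n-1)
          ≤ (n : ℝ) * 1 * y (j+1) ^ (n-1) := by
            apply mul_le_mul_of_nonneg_right _ h3
            apply mul_le_mul_of_nonneg_left (by linarith) hn0.le
        _ ≤ 1/2 := by nlinarith
    have h4 : (1:ℝ) ≤ (n:ℝ) := by exact_mod_cast Nat.one_le_iff_ne_zero.mpr (by omega)
    have : (1:ℝ) / (4 * (n:ℝ)^2) ≤ 1/2 := by
      rw [div_le_div_iff₀ (by positivity) (by norm_num)]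
      nlinarith
    linarith
  · push_neg at hc
    have hsl : 1 / (2 * (n:ℝ)) < y (j+1) ^ (n-1) := by
      rw [div_lt_iff₀ (by positivity)]
      nlinarith
    have hs' : y (j+1) ^ (n-1) ≤ y (j+1) := by
      calc y (j+1) ^ (n-1) ≤ y (j+1) ^ 1 := by
            apply pow_le_pow_of_le_one h0 hs1
            omega
        _ = y (j+1) := pow_one _
    have h1n : 0 < 1 / (2*(n:ℝ)) := by positivity
    have hpow : 1 / (4 * (n:ℝ)^2) ≤ y (j+1) ^ n := by
      have hyn : y (j+1) ^ n = y (j+1) ^ (n-1) * y (j+1) := by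
        rw [← pow_succ]
        congr 1
        omega
      rw [hyn]
      calc 1 / (4 * (n:ℝ)^2) = (1/(2*(n:ℝ))) * (1/(2*(n:ℝ))) := by ring
        _ ≤ y (j+1) ^ (n-1) * y (j+1) :=
          mul_le_mul hsl.le (hsl.le.trans hs') h1n.le
            (le_trans h1n.le hsl.le)
    exact hpow.trans (den_ge_pow ⟨h0, h1, h2⟩)

lemma pcoef_n1 (h : n = 1) : pcoef n y j = y j - y (j + 1) := by
  subst h; simp [pcoef]

lemma muFactor_eq (h : 1 - pcoef n y j ≠ 0) :
    muFactor n y j = y (j + 1) ^ n / (1 - pcoef n y j) := by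
  unfold muFactor
  rw [if_neg]
  rintro ⟨-, h2⟩
  exact h h2

lemma den_pos_of_ne (h : LocReg y j) (hne : 1 - pcoef n y j ≠ 0) :
    0 < 1 - pcoef n y j :=
  lt_of_le_of_ne (den_nonneg h) (Ne.symm hne)

lemma muFactor_nonneg (h : LocReg y j) : 0 ≤ muFactor n y j := by
  unfold muFactor
  split
  · norm_num
  · exact div_nonneg (pow_nonneg h.1 _) (den_nonneg h)

lemma muFactor_le_one (h : LocReg y j) : muFactor n y j ≤ 1 := by
  unfold muFactor
  split
  · exact le_refl 1
  · next hc =>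
    rcases eq_or_lt_of_le (den_nonneg (n := n) h) with heq | hpos
    · exfalso
      apply hc
      refine ⟨?_, heq.symm⟩
      have := den_ge_pow (n := n) h
      have h2 := pow_nonneg h.1 n
      exact le_antisymm (by linarith) h2
    · rw [div_le_one hpos]
      exact den_ge_pow h

lemma mu_nonneg {k : ℕ} (h : ∀ j, j < k → LocReg y j) : 0 ≤ mu n y k :=
  Finset.prod_nonneg fun j hj => muFactor_nonneg (h j (Finset.mem_range.mp hj))

lemma mu_le_one {k : ℕ} (h : ∀ j, j < k → LocReg y j) : mu n y k ≤ 1 :=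
  Finset.prod_le_one (fun j hj => muFactor_nonneg (h j (Finset.mem_range.mp hj)))
    (fun j hj => muFactor_le_one (h j (Finset.mem_range.mp hj)))

lemma mu_zero : mu n y 0 = 1 := by simp [mu]

lemma mu_succ (k : ℕ) : mu n y (k + 1) = mu n y k * muFactor n y k :=
  Finset.prod_range_succ _ _

/-- for n = 1 and y 0 = 1, the 0-th factor is always 1 -/
lemma muFactor_zero_n1 (h1 : n = 1) (h0 : y 0 = 1) : muFactor n y 0 = 1 := by
  subst h1
  unfold muFactor
  rw [pcoef_n1 rfl, h0]
  by_cases hy : y 1 = 0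
  · rw [if_pos]
    simp [hy]
  · rw [if_neg]
    · rw [pow_one]
      have : 1 - (1 - y 1) = y 1 := by ring
      rw [this, div_self hy]
    · rintro ⟨h, -⟩
      rw [pow_one] at h
      exact hy h


/-- either both denominators are at least `δ`, or we are in the special case `n = 1, j = 0`. -/
def DenOK (n : ℕ) (y w : ℕ → ℝ) (δ : ℝ) (j : ℕ) : Prop :=
  (δ ≤ 1 - pcoef n y j ∧ δ ≤ 1 - pcoef n w j) ∨ (n = 1 ∧ j = 0 ∧ y 0 = 1 ∧ w 0 = 1)

lemma pow_pred_mul {s : ℝ} (hn : 1 ≤ n) : s ^ (n - 1) * s = s ^ n := by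
  rw [← pow_succ]; congr 1; omega

lemma muFactor_mono (hn : 1 ≤ n) (hδ : 0 < δ) (hy : LocReg y j) (hw : LocReg w j)
    (h1 : y j ≤ w j) (h2 : y (j + 1) ≤ w (j + 1)) (hden : DenOK n y w δ j) :
    muFactor n y j ≤ muFactor n w j := by
  rcases hden with ⟨hdy, hdw⟩ | ⟨hn1, hj, hy0, hw0⟩
  · have hdy0 : (0:ℝ) < 1 - pcoef n y j := lt_of_lt_of_le hδ hdy
    have hdw0 : (0:ℝ) < 1 - pcoef n w j := lt_of_lt_of_le hδ hdw
    rw [muFactor_eq hdy0.ne', muFactor_eq hdw0.ne', div_le_div_iff₀ hdy0 hdw0]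
    -- notation
    obtain ⟨hy1, hy2, hy3⟩ := hy
    obtain ⟨hw1, hw2, hw3⟩ := hw
    set s1 := y (j+1) with hs1
    set s2 := w (j+1) with hs2
    set c := w j with hc
    -- step 1: 1 - pcoef n y j ≥ 1 - n (c - s1) s1^(n-1) =: Dmid
    have hstep1 : 1 - (n:ℝ) * (c - s1) * s1 ^ (n-1) ≤ 1 - pcoef n y j := by
      unfold pcoef
      have h3 : (0:ℝ) ≤ s1 ^ (n-1) := pow_nonneg hy1 _
      have : (n:ℝ) * (y j - s1) * s1 ^ (n-1) ≤ (n:ℝ) * (c - s1) * s1 ^ (n-1) := by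
        apply mul_le_mul_of_nonneg_right _ h3
        apply mul_le_mul_of_nonneg_left (by linarith) n.cast_nonneg
      linarith
    have hs2n : (0:ℝ) ≤ s2 ^ n := pow_nonneg hw1 _
    have hmid : s1 ^ n * (1 - pcoef n w j) ≤ s2 ^ n * (1 - (n:ℝ) * (c - s1) * s1 ^ (n-1)) := by
      unfold pcoef
      have e1 : s1 ^ n = s1 ^ (n-1) * s1 := (pow_pred_mul hn).symm
      have e2 : s2 ^ n = s2 ^ (n-1) * s2 := (pow_pred_mul hn).symm
      have hA := (geom_bounds n hy1 h2 (hw2.trans hw3)).1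
      have hcb : c * s2 ^ (n-1) ≤ 1 := by
        have : s2 ^ (n-1) ≤ 1 := pow_le_one₀ hw1 (hw2.trans hw3)
        have hc0 : 0 ≤ c := hw1.trans hw2
        nlinarith
    -- key : n * c * (s1^(n-1) * s2^(n-1) * (s2 - s1)) ≤ s2^n - s1^n
      have h3 : (0:ℝ) ≤ (n:ℝ) * s1 ^ (n-1) * (s2 - s1) := by
        apply mul_nonneg (mul_nonneg n.cast_nonneg (pow_nonneg hy1 _)) (by linarith)
      have key : (n:ℝ) * c * (s1 ^ (n-1) * s2 ^ (n-1) * (s2 - s1)) ≤ s2 ^ n - s1 ^ n := by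
        calc (n:ℝ) * c * (s1 ^ (n-1) * s2 ^ (n-1) * (s2 - s1))
            = (c * s2 ^ (n-1)) * ((n:ℝ) * s1 ^ (n-1) * (s2 - s1)) := by ring
          _ ≤ 1 * ((n:ℝ) * s1 ^ (n-1) * (s2 - s1)) := mul_le_mul_of_nonneg_right hcb h3
          _ = (n:ℝ) * s1 ^ (n-1) * (s2 - s1) := by ring
          _ ≤ s2 ^ n - s1 ^ n := hA
      rw [e1, e2] at key ⊢
      nlinarith [key]
    calc s1 ^ n * (1 - pcoef n w j) ≤ s2 ^ n * (1 - (n:ℝ) * (c - s1) * s1 ^ (n-1)) := hmid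
      _ ≤ s2 ^ n * (1 - pcoef n y j) := mul_le_mul_of_nonneg_left hstep1 hs2n
  · subst hj
    rw [muFactor_zero_n1 hn1 hy0, muFactor_zero_n1 hn1 hw0]

lemma muFactor_lip (hn : 1 ≤ n) (hδ : 0 < δ) {η : ℝ} (hη : 0 ≤ η)
    (hy : LocReg y j) (hw : LocReg w j)
    (h1 : y j ≤ w j) (h1' : w j ≤ y j + η) (h2 : y (j + 1) ≤ w (j + 1))
    (h2' : w (j + 1) ≤ y (j + 1) + η) (hden : DenOK n y w δ j) :
    muFactor n w j - muFactor n y j ≤ (4 * (n:ℝ)^2 / δ^2) * η := by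
  rcases hden with ⟨hdy, hdw⟩ | ⟨hn1, hj, hy0, hw0⟩
  · have hdy0 : (0:ℝ) < 1 - pcoef n y j := lt_of_lt_of_le hδ hdy
    have hdw0 : (0:ℝ) < 1 - pcoef n w j := lt_of_lt_of_le hδ hdw
    rw [muFactor_eq hdy0.ne', muFactor_eq hdw0.ne']
    obtain ⟨hy1, hy2, hy3⟩ := hy
    obtain ⟨hw1, hw2, hw3⟩ := hw
    rw [div_sub_div _ _ hdw0.ne' hdy0.ne', div_le_iff₀ (by positivity)]
    -- numerator = s2^n * Dy - s1^n * Dw, where Dy = 1 - pcoef y, Dw = 1 - pcoef w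
    -- = (s2^n - s1^n) * Dy + s1^n * (Dw' ...)
    have hs1c : y (j+1) ≤ 1 := hy2.trans hy3
    have hs2c : w (j+1) ≤ 1 := hw2.trans hw3
    have e1 : w (j+1) ^ n - y (j+1) ^ n ≤ (n:ℝ) * η := by
      have g1 := (geom_bounds n hy1 h2 hs2c).2
      have g2 : (n:ℝ) * (w (j+1) - y (j+1)) ≤ (n:ℝ) * η :=
        mul_le_mul_of_nonneg_left (by linarith) n.cast_nonneg
      linarith
    have e1' : 0 ≤ w (j+1) ^ n - y (j+1) ^ n := by
      have := pow_le_pow_left₀ hy1 h2 n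
      linarith
    -- |pcoef y - pcoef w| ≤ 2 n^2 η
    have e2 : |pcoef n y j - pcoef n w j| ≤ 2 * (n:ℝ)^2 * η := by
      unfold pcoef
      have expand : (n:ℝ) * (y j - y (j+1)) * y (j+1) ^ (n-1)
            - (n:ℝ) * (w j - w (j+1)) * w (j+1) ^ (n-1)
          = (n:ℝ) * ((y j * y (j+1) ^ (n-1) - w j * w (j+1) ^ (n-1))
              - (y (j+1) ^ n - w (j+1) ^ n)) := by
        rw [← pow_pred_mul (s := y (j+1)) hn, ← pow_pred_mul (s := w (j+1)) hn]
        ring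
      rw [expand, abs_mul, Nat.abs_cast]
      have t1 : |y j * y (j+1) ^ (n-1) - w j * w (j+1) ^ (n-1)| ≤ (n:ℝ) * η := by
        have split : y j * y (j+1) ^ (n-1) - w j * w (j+1) ^ (n-1)
            = (y j - w j) * y (j+1) ^ (n-1) + w j * (y (j+1) ^ (n-1) - w (j+1) ^ (n-1)) := by
          ring
        rw [split]
        have b1 : |(y j - w j) * y (j+1) ^ (n-1)| ≤ η := by
          rw [abs_mul]
          have : |y j - w j| ≤ η := by rw [abs_le]; constructor <;> linarith
          have h9 : |y (j+1) ^ (n-1)| ≤ 1 := by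
            rw [abs_of_nonneg (pow_nonneg hy1 _)]
            exact pow_le_one₀ hy1 hs1c
          calc |y j - w j| * |y (j+1) ^ (n-1)| ≤ η * 1 :=
              mul_le_mul this h9 (abs_nonneg _) hη
            _ = η := by ring
        have b2 : |w j * (y (j+1) ^ (n-1) - w (j+1) ^ (n-1))| ≤ ((n:ℝ) - 1) * η := by
          rw [abs_mul]
          have hwj : |w j| ≤ 1 := by rw [abs_of_nonneg (hw1.trans hw2)]; exact hw3
          have hp : |y (j+1) ^ (n-1) - w (j+1) ^ (n-1)| ≤ ((n:ℝ) - 1) * η := by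
            have hmono : y (j+1) ^ (n-1) ≤ w (j+1) ^ (n-1) :=
              pow_le_pow_left₀ hy1 h2 (n-1)
            rw [abs_sub_comm, abs_of_nonneg (by linarith)]
            have g1 := (geom_bounds (n-1) hy1 h2 hs2c).2
            have hcast : ((n - 1 : ℕ) : ℝ) = (n:ℝ) - 1 := by
              have h7 : (1:ℕ) ≤ n := hn
              push_cast [Nat.cast_sub h7]
              ring
            rw [hcast] at g1
            have hn1R : (1:ℝ) ≤ (n:ℝ) := by exact_mod_cast hn
            have h8 : ((n:ℝ) - 1) * (w (j+1) - y (j+1)) ≤ ((n:ℝ) - 1) * η :=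
              mul_le_mul_of_nonneg_left (by linarith) (by linarith)
            linarith
          have hq := mul_le_mul hwj hp (abs_nonneg _) zero_le_one
          linarith
        calc |(y j - w j) * y (j+1) ^ (n-1) + w j * (y (j+1) ^ (n-1) - w (j+1) ^ (n-1))|
            ≤ |(y j - w j) * y (j+1) ^ (n-1)| + |w j * (y (j+1) ^ (n-1) - w (j+1) ^ (n-1))| :=
              abs_add_le _ _
          _ ≤ η + ((n:ℝ) - 1) * η := add_le_add b1 b2
          _ = (n:ℝ) * η := by ring
      have t2 : |y (j+1) ^ n - w (j+1) ^ n| ≤ (n:ℝ) * η := by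
        rw [abs_sub_comm, abs_of_nonneg e1']
        exact e1
      calc (n:ℝ) * |y j * y (j+1) ^ (n-1) - w j * w (j+1) ^ (n-1)
              - (y (j+1) ^ n - w (j+1) ^ n)|
          ≤ (n:ℝ) * (|y j * y (j+1) ^ (n-1) - w j * w (j+1) ^ (n-1)|
              + |y (j+1) ^ n - w (j+1) ^ n|) := by
            apply mul_le_mul_of_nonneg_left _ n.cast_nonneg
            exact abs_sub _ _
        _ ≤ (n:ℝ) * ((n:ℝ) * η + (n:ℝ) * η) := by
            apply mul_le_mul_of_nonneg_left (add_le_add t1 t2) n.cast_nonneg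
        _ = 2 * (n:ℝ)^2 * η := by ring
    -- now assemble: s2^n / Dw - s1^n / Dy = (s2^n * Dy - s1^n * Dw)/(Dy * Dw)
    -- numerator = (s2^n - s1^n) * Dy + s1^n * (Dy - Dw)
    have hDy1 : 1 - pcoef n y j ≤ 1 := by
      have := pcoef_nonneg (n := n) (y := y) (j := j) ⟨hy1, hy2, hy3⟩
      linarith
    have hs1n : (0:ℝ) ≤ y (j+1) ^ n := pow_nonneg hy1 _
    have hs1n1 : y (j+1) ^ n ≤ 1 := pow_le_one₀ hy1 hs1c
    have hnum : w (j+1) ^ n * (1 - pcoef n y j) - y (j+1) ^ n * (1 - pcoef n w j)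
        ≤ (n:ℝ) * η + 2 * (n:ℝ)^2 * η := by
      have expand : w (j+1) ^ n * (1 - pcoef n y j) - y (j+1) ^ n * (1 - pcoef n w j)
          = (w (j+1) ^ n - y (j+1) ^ n) * (1 - pcoef n y j)
            + y (j+1) ^ n * (pcoef n w j - pcoef n y j) := by ring
      rw [expand]
      have b1 : (w (j+1) ^ n - y (j+1) ^ n) * (1 - pcoef n y j) ≤ (n:ℝ) * η := by
        calc (w (j+1) ^ n - y (j+1) ^ n) * (1 - pcoef n y j)
            ≤ (w (j+1) ^ n - y (j+1) ^ n) * 1 := by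
              apply mul_le_mul_of_nonneg_left hDy1 e1'
          _ ≤ (n:ℝ) * η := by linarith
      have b2 : y (j+1) ^ n * (pcoef n w j - pcoef n y j) ≤ 2 * (n:ℝ)^2 * η := by
        have h9 : pcoef n w j - pcoef n y j ≤ 2 * (n:ℝ)^2 * η := by
          have := abs_le.mp e2
          linarith [this.1]
        rcases le_or_gt (pcoef n w j - pcoef n y j) 0 with hc | hc
        · have : y (j+1) ^ n * (pcoef n w j - pcoef n y j) ≤ 0 :=
            mul_nonpos_of_nonneg_of_nonpos hs1n hc
          have h10 : (0:ℝ) ≤ 2 * (n:ℝ)^2 * η := by positivity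
          linarith
        · calc y (j+1) ^ n * (pcoef n w j - pcoef n y j)
              ≤ 1 * (pcoef n w j - pcoef n y j) :=
                mul_le_mul_of_nonneg_right hs1n1 hc.le
            _ ≤ 2 * (n:ℝ)^2 * η := by linarith
      linarith
    calc w (j+1) ^ n * (1 - pcoef n y j) - (1 - pcoef n w j) * y (j+1) ^ n
        = w (j+1) ^ n * (1 - pcoef n y j) - y (j+1) ^ n * (1 - pcoef n w j) := by ring
      _ ≤ (n:ℝ) * η + 2 * (n:ℝ)^2 * η := hnum
      _ ≤ 4 * (n:ℝ)^2 / δ^2 * η * ((1 - pcoef n y j) * (1 - pcoef n w j)) := by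
        have hn1 : (1:ℝ) ≤ (n:ℝ) := by exact_mod_cast hn
        have hd2 : δ^2 ≤ (1 - pcoef n y j) * (1 - pcoef n w j) := by
          calc δ^2 = δ * δ := sq δ
            _ ≤ (1 - pcoef n y j) * (1 - pcoef n w j) :=
              mul_le_mul hdy hdw hδ.le (by linarith)
        have hδ2 : (0:ℝ) < δ^2 := by positivity
        rw [div_mul_eq_mul_div, div_mul_eq_mul_div, le_div_iff₀ hδ2]
        have key : ((n:ℝ) * η + 2 * (n:ℝ)^2 * η) * δ^2
            ≤ (4 * (n:ℝ)^2 * η) * δ^2 := by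
          apply mul_le_mul_of_nonneg_right _ hδ2.le
          nlinarith
        calc ((n:ℝ) * η + 2 * (n:ℝ)^2 * η) * δ^2 ≤ (4 * (n:ℝ)^2 * η) * δ^2 := key
          _ ≤ 4 * (n:ℝ)^2 * η * ((1 - pcoef n y j) * (1 - pcoef n w j)) := by
            apply mul_le_mul_of_nonneg_left hd2 (by positivity)
      _ = 4 * (n:ℝ)^2 / δ^2 * η * ((1 - pcoef n w j) * (1 - pcoef n y j)) := by ring
  · subst hj
    rw [muFactor_zero_n1 hn1 hy0, muFactor_zero_n1 hn1 hw0]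
    simp
    positivity


-- new material
lemma mu_mono (hy : ∀ j, j < k → LocReg y j)
    (hf : ∀ j, j < k → muFactor n y j ≤ muFactor n w j) : mu n y k ≤ mu n w k := by
  apply Finset.prod_le_prod
  · intro i hi; exact muFactor_nonneg (hy i (Finset.mem_range.mp hi))
  · intro i hi; exact hf i (Finset.mem_range.mp hi)

lemma mu_lip {c : ℝ} (hc : 0 ≤ c) (hy : ∀ j, j < k → LocReg y j)
    (hw : ∀ j, j < k → LocReg w j)
    (hf : ∀ j, j < k → muFactor n y j ≤ muFactor n w j)
    (hl : ∀ j, j < k → muFactor n w j - muFactor n y j ≤ c) :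
    mu n w k - mu n y k ≤ k * c := by
  induction k with
  | zero => simp [mu_zero]
  | succ m ih =>
    have hym : ∀ j, j < m → LocReg y j := fun j hj => hy j (by omega)
    have hwm : ∀ j, j < m → LocReg w j := fun j hj => hw j (by omega)
    have hfm : ∀ j, j < m → muFactor n y j ≤ muFactor n w j := fun j hj => hf j (by omega)
    have hlm : ∀ j, j < m → muFactor n w j - muFactor n y j ≤ c := fun j hj => hl j (by omega)
    have ihm := ih hym hwm hfm hlm
    rw [mu_succ, mu_succ]
    have h1 : (0:ℝ) ≤ mu n w m := mu_nonneg hwm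
    have h2 : mu n w m ≤ 1 := mu_le_one hwm
    have h3 : 0 ≤ muFactor n y m := muFactor_nonneg (hy m (by omega))
    have h4 : muFactor n y m ≤ 1 := muFactor_le_one (hy m (by omega))
    have h5 : mu n y m ≤ mu n w m := mu_mono hym hfm
    have h6 : muFactor n y m ≤ muFactor n w m := hf m (by omega)
    have h7 : muFactor n w m - muFactor n y m ≤ c := hl m (by omega)
    have expand : mu n w m * muFactor n w m - mu n y m * muFactor n y m
        = mu n w m * (muFactor n w m - muFactor n y m)
          + (mu n w m - mu n y m) * muFactor n y m := by ring
    rw [expand]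
    have b1 : mu n w m * (muFactor n w m - muFactor n y m) ≤ c := by
      calc mu n w m * (muFactor n w m - muFactor n y m) ≤ 1 * c := by
            apply mul_le_mul h2 h7 (by linarith) zero_le_one
        _ = c := one_mul c
    have b2 : (mu n w m - mu n y m) * muFactor n y m ≤ m * c := by
      calc (mu n w m - mu n y m) * muFactor n y m ≤ (mu n w m - mu n y m) * 1 := by
            apply mul_le_mul_of_nonneg_left h4 (by linarith)
        _ = mu n w m - mu n y m := by ring
        _ ≤ m * c := ihm
    push_cast
    linarith

/-- the `B` function appearing in the rewritten vector field -/
def Bf (n : ℕ) (y : ℕ → ℝ) (k : ℕ) : ℝ := y k ^ n - y (k + 1) ^ n * muFactor n y k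

lemma vfield_rw (lam : ℝ) (k : ℕ) :
    vfield lam n y (k + 1) = lam * mu n y k * Bf n y k - (y (k + 1) - y (k + 2)) := by
  unfold vfield Bf
  simp only [Nat.add_sub_cancel]
  rw [mu_succ]
  ring

lemma Bf_nonneg (h : LocReg y k) : 0 ≤ Bf n y k := by
  unfold Bf
  have h1 : y (k+1) ^ n * muFactor n y k ≤ y (k+1) ^ n * 1 :=
    mul_le_mul_of_nonneg_left (muFactor_le_one h) (pow_nonneg h.1 _)
  have h2 : y (k+1) ^ n ≤ y k ^ n := pow_le_pow_left₀ h.1 h.2.1 n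
  linarith

lemma Bf_le_one (h : LocReg y k) : Bf n y k ≤ 1 := by
  unfold Bf
  have h1 : 0 ≤ y (k+1) ^ n * muFactor n y k :=
    mul_nonneg (pow_nonneg h.1 _) (muFactor_nonneg h)
  have h2 : y k ^ n ≤ 1 := pow_le_one₀ (h.1.trans h.2.1) h.2.2
  linarith

lemma Bf_mono (hn : 1 ≤ n) (hδ : 0 < δ) (hy : LocReg y k) (hw : LocReg w k)
    (h1 : y k ≤ w k) (h2 : y (k + 1) = w (k + 1)) (hden : DenOK n y w δ k) :
    Bf n y k ≤ Bf n w k := by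
  rcases hden with ⟨hdy, hdw⟩ | ⟨hn1, hj, hy0, hw0⟩
  · have hdy0 : (0:ℝ) < 1 - pcoef n y k := lt_of_lt_of_le hδ hdy
    have hdw0 : (0:ℝ) < 1 - pcoef n w k := lt_of_lt_of_le hδ hdw
    unfold Bf
    rw [muFactor_eq hdy0.ne', muFactor_eq hdw0.ne', ← h2]
    set s := y (k+1) with hs
    have hsn : (0:ℝ) ≤ s ^ n := pow_nonneg hy.1 _
    -- key : s^n/Dw - s^n/Dy  ≤ n * s^(n-1) * (w k - y k) / 1 (after mult by s^n)
    have hr1 : s ^ n ≤ 1 - pcoef n y k := den_ge_pow hy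
    have hr2 : s ^ n ≤ 1 - pcoef n w k := by
      have := den_ge_pow (n := n) hw
      rw [← h2] at this
      exact this
    have hq1 : s ^ n / (1 - pcoef n y k) ≤ 1 := by
      rw [div_le_one hdy0]; exact hr1
    have hq2 : s ^ n / (1 - pcoef n w k) ≤ 1 := by
      rw [div_le_one hdw0]; exact hr2
    have hq1' : 0 ≤ s ^ n / (1 - pcoef n y k) := div_nonneg hsn hdy0.le
    have hq2' : 0 ≤ s ^ n / (1 - pcoef n w k) := div_nonneg hsn hdw0.le
    have hDdiff : (1 - pcoef n y k) - (1 - pcoef n w k)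
        = (n:ℝ) * s ^ (n-1) * (w k - y k) := by
      unfold pcoef
      rw [← h2]
      ring
    have hmain : s ^ n * (s ^ n / (1 - pcoef n w k)) - s ^ n * (s ^ n / (1 - pcoef n y k))
        ≤ (n:ℝ) * s ^ (n-1) * (w k - y k) := by
      have hident : s ^ n * (s ^ n / (1 - pcoef n w k)) - s ^ n * (s ^ n / (1 - pcoef n y k))
          = (s ^ n / (1 - pcoef n y k)) * (s ^ n / (1 - pcoef n w k))
            * ((1 - pcoef n y k) - (1 - pcoef n w k)) := by
        field_simp
      rw [hident, hDdiff]
      have hpos : 0 ≤ (n:ℝ) * s ^ (n-1) * (w k - y k) := by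
        apply mul_nonneg (mul_nonneg n.cast_nonneg (pow_nonneg hy.1 _)) (by linarith)
      calc (s ^ n / (1 - pcoef n y k)) * (s ^ n / (1 - pcoef n w k))
            * ((n:ℝ) * s ^ (n-1) * (w k - y k))
          ≤ 1 * 1 * ((n:ℝ) * s ^ (n-1) * (w k - y k)) := by
            apply mul_le_mul_of_nonneg_right _ hpos
            apply mul_le_mul hq1 hq2 hq2' zero_le_one
        _ = (n:ℝ) * s ^ (n-1) * (w k - y k) := by ring
    have hgeo : (n:ℝ) * y k ^ (n-1) * (w k - y k) ≤ w k ^ n - y k ^ n :=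
      (geom_bounds n (hy.1.trans hy.2.1) h1 hw.2.2).1
    have hsk : s ^ (n-1) ≤ y k ^ (n-1) := pow_le_pow_left₀ hy.1 hy.2.1 _
    have hstep : (n:ℝ) * s ^ (n-1) * (w k - y k) ≤ w k ^ n - y k ^ n := by
      calc (n:ℝ) * s ^ (n-1) * (w k - y k) ≤ (n:ℝ) * y k ^ (n-1) * (w k - y k) := by
            apply mul_le_mul_of_nonneg_right _ (by linarith)
            exact mul_le_mul_of_nonneg_left hsk n.cast_nonneg
        _ ≤ w k ^ n - y k ^ n := hgeo
    nlinarith [hmain, hstep]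
  · subst hj
    unfold Bf
    rw [muFactor_zero_n1 hn1 hy0, muFactor_zero_n1 hn1 hw0, hy0, hw0, ← h2]

lemma Bf_lip (hn : 1 ≤ n) (hδ : 0 < δ) (hη : 0 ≤ η) (hy : LocReg y k) (hw : LocReg w k)
    (h1 : y k ≤ w k) (h1' : w k ≤ y k + η) (h2 : y (k + 1) ≤ w (k + 1))
    (h2' : w (k + 1) ≤ y (k + 1) + η) (hden : DenOK n y w δ k) :
    Bf n w k - Bf n y k ≤ (n:ℝ) * η := by
  unfold Bf
  have hmonoF : muFactor n y k ≤ muFactor n w k := muFactor_mono hn hδ hy hw h1 h2 hden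
  have hmonoP : y (k+1) ^ n ≤ w (k+1) ^ n := pow_le_pow_left₀ hy.1 h2 n
  have hterm : y (k+1) ^ n * muFactor n y k ≤ w (k+1) ^ n * muFactor n w k := by
    apply mul_le_mul hmonoP hmonoF (muFactor_nonneg hy) (pow_nonneg (hy.1.trans h2) _)
  have hpow : w k ^ n - y k ^ n ≤ (n:ℝ) * η := by
    have hg := (geom_bounds n (hy.1.trans hy.2.1) h1 hw.2.2).2
    have : (n:ℝ) * (w k - y k) ≤ (n:ℝ) * η :=
      mul_le_mul_of_nonneg_left (by linarith) n.cast_nonneg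
    linarith
  linarith

/-- quasimonotonicity of the vector field -/
lemma vfield_quasi (lam : ℝ) (hlam : 0 ≤ lam) (hn : 1 ≤ n) (hδ : 0 < δ) (k : ℕ)
    (hy : ∀ j, j ≤ k → LocReg y j) (hw : ∀ j, j ≤ k → LocReg w j)
    (hle : ∀ j, j ≤ k + 2 → y j ≤ w j) (heq : y (k + 1) = w (k + 1))
    (hden : ∀ j, j ≤ k → DenOK n y w δ j) :
    vfield lam n y (k + 1) ≤ vfield lam n w (k + 1) := by
  rw [vfield_rw, vfield_rw]
  have hmu : mu n y k ≤ mu n w k := by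
    apply mu_mono (fun j hj => hy j (by omega))
    intro j hj
    exact muFactor_mono hn hδ (hy j (by omega)) (hw j (by omega))
      (hle j (by omega)) (hle (j+1) (by omega)) (hden j (by omega))
  have hB : Bf n y k ≤ Bf n w k :=
    Bf_mono hn hδ (hy k le_rfl) (hw k le_rfl) (hle k (by omega)) heq (hden k le_rfl)
  have hprod : mu n y k * Bf n y k ≤ mu n w k * Bf n w k := by
    apply mul_le_mul hmu hB (Bf_nonneg (hy k le_rfl))
      (mu_nonneg (fun j hj => hw j (by omega)))
  have h3 : y (k + 2) ≤ w (k + 2) := hle (k+2) le_rfl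
  have h4 : lam * mu n y k * Bf n y k ≤ lam * mu n w k * Bf n w k := by
    rw [mul_assoc, mul_assoc]
    exact mul_le_mul_of_nonneg_left hprod hlam
  rw [heq]
  linarith

/-- one-sided Lipschitz bound for the vector field -/
lemma vfield_lip (lam : ℝ) (hlam : 0 ≤ lam) (hn : 1 ≤ n) (hδ : 0 < δ) (hη : 0 ≤ η) (k : ℕ)
    (hy : ∀ j, j ≤ k → LocReg y j) (hw : ∀ j, j ≤ k → LocReg w j)
    (hle : ∀ j, j ≤ k + 2 → y j ≤ w j) (hcl : ∀ j, j ≤ k + 2 → w j ≤ y j + η)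
    (hden : ∀ j, j ≤ k → DenOK n y w δ j) :
    vfield lam n w (k + 1) - vfield lam n y (k + 1)
      ≤ (lam * ((n:ℝ) + k * (4 * (n:ℝ)^2 / δ^2)) + 1) * η := by
  rw [vfield_rw, vfield_rw]
  set c : ℝ := 4 * (n:ℝ)^2 / δ^2 with hc
  have hc0 : 0 ≤ c := by positivity
  have hfmono : ∀ j, j < k → muFactor n y j ≤ muFactor n w j := fun j hj =>
    muFactor_mono hn hδ (hy j (by omega)) (hw j (by omega)) (hle j (by omega))
      (hle (j+1) (by omega)) (hden j (by omega))
  have hmu : mu n w k - mu n y k ≤ k * (c * η) := by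
    have := mu_lip (c := c * η) (by positivity) (fun j hj => hy j (by omega))
      (fun j hj => hw j (by omega)) hfmono ?_
    · exact this
    · intro j hj
      exact muFactor_lip hn hδ hη (hy j (by omega)) (hw j (by omega)) (hle j (by omega))
        (hcl j (by omega)) (hle (j+1) (by omega)) (hcl (j+1) (by omega)) (hden j (by omega))
  have hmu' : mu n y k ≤ mu n w k := mu_mono (fun j hj => hy j (by omega)) hfmono
  have hB : Bf n w k - Bf n y k ≤ (n:ℝ) * η :=
    Bf_lip hn hδ hη (hy k le_rfl) (hw k le_rfl) (hle k (by omega)) (hcl k (by omega))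
      (hle (k+1) (by omega)) (hcl (k+1) (by omega)) (hden k le_rfl)
  have hmu0 : 0 ≤ mu n w k := mu_nonneg (fun j hj => hw j (by omega))
  have hmu1 : mu n w k ≤ 1 := mu_le_one (fun j hj => hw j (by omega))
  have hB0 : 0 ≤ Bf n y k := Bf_nonneg (hy k le_rfl)
  have hB1 : Bf n y k ≤ 1 := Bf_le_one (hy k le_rfl)
  have hexp : mu n w k * Bf n w k - mu n y k * Bf n y k
      = mu n w k * (Bf n w k - Bf n y k) + (mu n w k - mu n y k) * Bf n y k := by ring
  have hbd : mu n w k * Bf n w k - mu n y k * Bf n y k ≤ (n:ℝ) * η + k * (c * η) := by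
    rw [hexp]
    have b1 : mu n w k * (Bf n w k - Bf n y k) ≤ (n:ℝ) * η := by
      rcases le_or_gt (Bf n w k - Bf n y k) 0 with hneg | hpos
      · have : mu n w k * (Bf n w k - Bf n y k) ≤ 0 := mul_nonpos_of_nonneg_of_nonpos hmu0 hneg
        have : (0:ℝ) ≤ (n:ℝ) * η := by positivity
        linarith [mul_nonpos_of_nonneg_of_nonpos hmu0 hneg]
      · calc mu n w k * (Bf n w k - Bf n y k) ≤ 1 * (Bf n w k - Bf n y k) :=
            mul_le_mul_of_nonneg_right hmu1 hpos.le
          _ ≤ (n:ℝ) * η := by linarith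
    have b2 : (mu n w k - mu n y k) * Bf n y k ≤ k * (c * η) := by
      calc (mu n w k - mu n y k) * Bf n y k ≤ (mu n w k - mu n y k) * 1 :=
          mul_le_mul_of_nonneg_left hB1 (by linarith)
        _ ≤ k * (c * η) := by linarith
    linarith
  have hfin : lam * mu n w k * Bf n w k - lam * mu n y k * Bf n y k
      ≤ lam * ((n:ℝ) * η + k * (c * η)) := by
    calc lam * mu n w k * Bf n w k - lam * mu n y k * Bf n y k
        = lam * (mu n w k * Bf n w k - mu n y k * Bf n y k) := by ring
      _ ≤ lam * ((n:ℝ) * η + k * (c * η)) := mul_le_mul_of_nonneg_left hbd hlam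
  have h5 : y (k+1) ≤ w (k+1) := hle (k+1) (by omega)
  have h6 : w (k+2) ≤ y (k+2) + η := hcl (k+2) le_rfl
  have h7 : y (k+2) ≤ w (k+2) := hle (k+2) le_rfl
  nlinarith [hfin]

/-- telescoping sum of the vector field over `Icc 1 N` -/
lemma vfield_telescope (lam : ℝ) (N : ℕ) :
    ∑ k ∈ Finset.Icc 1 N, vfield lam n y k
      = lam * y 0 ^ n * mu n y 0 - lam * y N ^ n * mu n y N - (y 1 - y (N + 1)) := by
  induction N with
  | zero => simp
  | succ m ih =>
    rw [Finset.sum_Icc_succ_top (by omega), ih]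
    have : vfield lam n y (m + 1)
        = lam * y m ^ n * mu n y m - lam * y (m+1) ^ n * mu n y (m+1)
          - (y (m+1) - y (m+2)) := by
      unfold vfield
      simp only [Nat.add_sub_cancel]
    rw [this]
    ring

lemma ufield_eq_vfield (lam : ℝ) {d : ℕ} {x : ℕ → ℝ} (k : ℕ) (hk : 1 ≤ k) (hkd : k ≤ d)
    (hx : x (d + 1) = 0) : ufield lam n d x k = vfield lam n x k := by
  unfold ufield
  rcases lt_or_eq_of_le hkd with h | h
  · rw [if_pos h]
  · subst h
    rw [if_neg (lt_irrefl _), if_pos rfl]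
    unfold vfield
    rw [hx]
    ring


/-- monotonicity tool on `Icc 0 T` from `HasDerivWithinAt` within `Ici 0` -/
lemma monoOn_Icc_of_deriv {f f' : ℝ → ℝ} {T : ℝ}
    (hder : ∀ t ∈ Icc (0:ℝ) T, HasDerivWithinAt f (f' t) (Ici 0) t)
    (h0 : ∀ t ∈ Ioo (0:ℝ) T, 0 ≤ f' t) : MonotoneOn f (Icc 0 T) := by
  apply monotoneOn_of_hasDerivWithinAt_nonneg (convex_Icc 0 T) (f' := f')
  · intro t ht
    exact ((hder t ht).continuousWithinAt).mono Icc_subset_Ici_self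
  · intro t ht
    rw [interior_Icc] at ht ⊢
    exact (hder t (Ioo_subset_Icc_self ht)).mono
      (fun s hs => (mem_Ioo.mp hs).1.le)
  · intro t ht
    rw [interior_Icc] at ht
    exact h0 t ht

lemma le_of_deriv_le_const {f f' : ℝ → ℝ} {T C : ℝ}
    (hder : ∀ t ∈ Icc (0:ℝ) T, HasDerivWithinAt f (f' t) (Ici 0) t)
    (hb : ∀ t ∈ Icc (0:ℝ) T, f' t ≤ C) :
    ∀ t ∈ Icc (0:ℝ) T, f t ≤ f 0 + C * t := by
  intro t ht
  have hT : (0:ℝ) ≤ T := le_trans (mem_Icc.mp ht).1 (mem_Icc.mp ht).2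
  have hmono : MonotoneOn (fun s => C * s - f s) (Icc 0 T) := by
    apply monoOn_Icc_of_deriv (f' := fun s => C - f' s)
    · intro s hs
      exact ((hasDerivWithinAt_id s _).const_mul C).sub (hder s hs) |>.congr_deriv (by ring)
    · intro s hs
      have := hb s (Ioo_subset_Icc_self hs)
      linarith
  have h0 : (0:ℝ) ∈ Icc (0:ℝ) T := left_mem_Icc.mpr hT
  have := hmono h0 ht (mem_Icc.mp ht).1
  simp only [mul_zero] at this
  linarith

/-- at a right-endpoint minimum the (within-)derivative is nonpositive -/
lemma deriv_nonpos_at_right_min {f : ℝ → ℝ} {τ c : ℝ} (hτ : 0 < τ)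
    (hder : HasDerivWithinAt f c (Icc 0 τ) τ) (hmin : ∀ t ∈ Icc 0 τ, f τ ≤ f t) :
    c ≤ 0 := by
  rw [hasDerivWithinAt_iff_tendsto_slope] at hder
  have hne : (𝓝[Icc (0:ℝ) τ \ {τ}] τ).NeBot := by
    rw [Icc_sdiff_right]
    apply mem_closure_iff_nhdsWithin_neBot.mp
    rw [closure_Ico hτ.ne]
    exact right_mem_Icc.mpr hτ.le
  apply le_of_tendsto hder
  filter_upwards [self_mem_nhdsWithin] with t ht
  obtain ⟨ht1, ht2⟩ := ht
  have h1 : f τ ≤ f t := hmin t ht1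
  have h2 : t < τ := lt_of_le_of_ne (mem_Icc.mp ht1).2 (by simpa using ht2)
  rw [slope_def_field]
  apply div_nonpos_of_nonneg_of_nonpos (by linarith) (by linarith)


def RegFun (y : ℕ → ℝ) : Prop :=
  y 0 = 1 ∧ (∀ k, y (k + 1) ≤ y k) ∧ (∀ k, 0 ≤ y k ∧ y k ≤ 1)

lemma RegFun.locReg (h : RegFun y) (j : ℕ) : LocReg y j :=
  ⟨(h.2.2 (j+1)).1, h.2.1 j, (h.2.2 j).2⟩

lemma RegFun.anti (h : RegFun y) : Antitone y :=
  antitone_nat_of_succ_le h.2.1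

lemma RegFun.max (hy : RegFun y) (hw : RegFun w) : RegFun (fun j => Max.max (y j) (w j)) := by
  refine ⟨by simp [hy.1, hw.1], fun k => max_le_max (hy.2.1 k) (hw.2.1 k), fun k => ?_⟩
  constructor
  · exact le_max_of_le_left (hy.2.2 k).1
  · exact max_le (hy.2.2 k).2 (hw.2.2 k).2

lemma den_master (hn : 1 ≤ n) (hδ4 : δ ≤ 1 / (4 * (n:ℝ)^2)) (hy : RegFun y)
    (h1 : n = 1 → y 1 ≤ 1 - δ) (j : ℕ) (hj : 1 ≤ j ∨ 2 ≤ n) :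
    δ ≤ 1 - pcoef n y j := by
  rcases eq_or_lt_of_le hn with hn1 | hn2
  · have hn1 := hn1.symm
    have hjj : 1 ≤ j := by
      rcases hj with h | h
      · exact h
      · omega
    rw [pcoef_n1 hn1]
    have h2 : y j ≤ y 1 := hy.anti hjj
    have h3 : 0 ≤ y (j+1) := (hy.2.2 (j+1)).1
    have h4 := h1 hn1
    linarith
  · have : 2 ≤ n := hn2
    exact le_trans hδ4 (den_ge_inv_sq this (hy.locReg j))

lemma denOK_master (hn : 1 ≤ n) (hδ4 : δ ≤ 1 / (4 * (n:ℝ)^2)) (hy : RegFun y) (hw : RegFun w)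
    (hy1 : n = 1 → y 1 ≤ 1 - δ) (hw1 : n = 1 → w 1 ≤ 1 - δ) (j : ℕ) :
    DenOK n y w δ j := by
  by_cases hc : n = 1 ∧ j = 0
  · exact Or.inr ⟨hc.1, hc.2, hy.1, hw.1⟩
  · left
    have hj : 1 ≤ j ∨ 2 ≤ n := by
      rcases Nat.eq_or_lt_of_le hn with h | h
      · left
        rcases Nat.eq_zero_or_pos j with hj0 | hj1
        · exact absurd ⟨h.symm, hj0⟩ hc
        · exact hj1
      · right; omega
    exact ⟨den_master hn hδ4 hy hy1 j hj, den_master hn hδ4 hw hw1 j hj⟩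

lemma gronwall_one {f f' : ℝ → ℝ} {T lam : ℝ} (hlam : 0 < lam)
    (hder : ∀ t ∈ Icc (0:ℝ) T, HasDerivWithinAt f (f' t) (Ici 0) t)
    (hb : ∀ t ∈ Icc (0:ℝ) T, f' t ≤ lam * (1 - f t)) (hf0 : f 0 = 0) :
    ∀ t ∈ Icc (0:ℝ) T, f t ≤ 1 - Real.exp (-(lam * t)) := by
  have hmono : MonotoneOn (fun t => (1 - f t) * Real.exp (lam * t)) (Icc 0 T) := by
    apply monotoneOn_of_hasDerivWithinAt_nonneg (convex_Icc 0 T)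
      (f' := fun t => Real.exp (lam * t) * (lam * (1 - f t) - f' t))
    · intro t ht
      apply ContinuousWithinAt.mul
      · exact (continuousWithinAt_const.sub
          (((hder t ht).continuousWithinAt).mono Icc_subset_Ici_self))
      · exact (Real.continuous_exp.comp (continuous_const.mul continuous_id)).continuousWithinAt
    · intro t ht
      rw [interior_Icc] at ht ⊢
      have hft : HasDerivWithinAt f (f' t) (Ioo 0 T) t :=
        (hder t (Ioo_subset_Icc_self ht)).mono (fun s hs => (mem_Ioo.mp hs).1.le)
      have hexp : HasDerivAt (fun t : ℝ => Real.exp (lam * t)) (Real.exp (lam * t) * lam) t := by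
        have h1 : HasDerivAt (fun t : ℝ => lam * t) lam t := by
          simpa using (hasDerivAt_id t).const_mul lam
        exact h1.exp
      have := ((hasDerivWithinAt_const t _ (1:ℝ)).sub hft).mul hexp.hasDerivWithinAt
      apply this.congr_deriv
      simp only [Pi.sub_apply]
      ring
    · intro t ht
      rw [interior_Icc] at ht
      have h1 := hb t (Ioo_subset_Icc_self ht)
      have h2 : (0:ℝ) < Real.exp (lam * t) := Real.exp_pos _
      have : 0 ≤ lam * (1 - f t) - f' t := by linarith
      positivity
  intro t ht
  have hT : (0:ℝ) ≤ T := le_trans (mem_Icc.mp ht).1 (mem_Icc.mp ht).2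
  have h0 : (0:ℝ) ∈ Icc (0:ℝ) T := left_mem_Icc.mpr hT
  have := hmono h0 ht (mem_Icc.mp ht).1
  simp only [hf0, mul_zero, Real.exp_zero, sub_zero, mul_one] at this
  -- this : 1 ≤ (1 - f t) * exp (lam * t)
  have h2 : (0:ℝ) < Real.exp (lam * t) := Real.exp_pos _
  have h3 : Real.exp (-(lam * t)) = (Real.exp (lam * t))⁻¹ := by
    rw [Real.exp_neg]
  rw [h3]
  have h4 : (Real.exp (lam * t))⁻¹ ≤ 1 - f t := by
    rw [inv_le_iff_one_le_mul₀ h2]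
    linarith [this]
  linarith


lemma comparison (lam : ℝ) (hlam0 : 0 < lam) {n d : ℕ} (hn : 1 ≤ n) (hd : 1 ≤ d)
    {T δ : ℝ} (hδ : 0 < δ) (hδ4 : δ ≤ 1 / (4 * (n:ℝ)^2))
    (x w : ℕ → ℝ → ℝ)
    (hxReg : ∀ t ∈ Icc (0:ℝ) T, RegFun (fun k => x k t))
    (hwReg : ∀ t ∈ Icc (0:ℝ) T, RegFun (fun k => w k t))
    (hx1 : n = 1 → ∀ t ∈ Icc (0:ℝ) T, x 1 t ≤ 1 - δ)
    (hw1 : n = 1 → ∀ t ∈ Icc (0:ℝ) T, w 1 t ≤ 1 - δ)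
    (htail : ∀ t ∈ Icc (0:ℝ) T, x (d + 1) t ≤ w (d + 1) t)
    (gw : ℕ → ℝ → ℝ)
    (hxder : ∀ k, 1 ≤ k → k ≤ d → ∀ t ∈ Icc (0:ℝ) T,
      HasDerivWithinAt (x k) (vfield lam n (fun j => x j t) k) (Ici 0) t)
    (hwder : ∀ k, 1 ≤ k → k ≤ d → ∀ t ∈ Icc (0:ℝ) T,
      HasDerivWithinAt (w k) (gw k t) (Ici 0) t)
    (hgw : ∀ k, 1 ≤ k → k ≤ d → ∀ t ∈ Icc (0:ℝ) T,
      vfield lam n (fun j => w j t) k ≤ gw k t)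
    (hinit : ∀ k, 1 ≤ k → k ≤ d → x k 0 ≤ w k 0) :
    ∀ t ∈ Icc (0:ℝ) T, ∀ k, 1 ≤ k → k ≤ d → x k t ≤ w k t := by
  set C : ℝ := 4 * (n:ℝ)^2 / δ^2 with hC
  have hC0 : 0 ≤ C := by positivity
  set L : ℝ := lam * ((n:ℝ) + d * C) + 1 with hL
  have hn0 : (0:ℝ) ≤ (n:ℝ) := n.cast_nonneg
  have hL1 : 1 ≤ L := by
    have : 0 ≤ lam * ((n:ℝ) + d * C) := by positivity
    linarith
  have hL0 : 0 < L := by linarith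
  -- main claim with ε-margin
  have key : ∀ ε : ℝ, 0 < ε → ∀ t ∈ Icc (0:ℝ) T, ∀ k, 1 ≤ k → k ≤ d →
      0 < w k t - x k t + ε * Real.exp (2 * L * t) := by
    intro ε hε
    by_contra hcon
    push_neg at hcon
    obtain ⟨t₀, ht₀, k₁, hk₁1, hk₁d, hneg⟩ := hcon
    -- the "bad set"
    set φ : ℕ → ℝ → ℝ := fun k t => w k t - x k t + ε * Real.exp (2 * L * t) with hφ
    have hφcont : ∀ k, 1 ≤ k → k ≤ d → ContinuousOn (φ k) (Icc 0 T) := by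
      intro k h1 h2
      apply ContinuousOn.add
      · apply ContinuousOn.sub
        · intro t ht
          exact ((hwder k h1 h2 t ht).continuousWithinAt).mono Icc_subset_Ici_self
        · intro t ht
          exact ((hxder k h1 h2 t ht).continuousWithinAt).mono Icc_subset_Ici_self
      · exact (continuous_const.mul
          (Real.continuous_exp.comp (continuous_const.mul continuous_id))).continuousOn
    set S : Set ℝ := ⋃ k ∈ Finset.Icc 1 d, (Icc (0:ℝ) T ∩ (φ k) ⁻¹' (Iic 0)) with hS
    have hSclosed : IsClosed S := by
      apply Set.Finite.isClosed_biUnion (Finset.Icc 1 d).finite_toSet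
      intro k hk
      rw [Finset.coe_Icc, mem_Icc] at hk
      exact ContinuousOn.preimage_isClosed_of_isClosed (hφcont k hk.1 hk.2)
        isClosed_Icc isClosed_Iic
    have hSne : S.Nonempty := by
      refine ⟨t₀, ?_⟩
      rw [hS, mem_iUnion]
      exact ⟨k₁, by
        rw [mem_iUnion]
        exact ⟨Finset.mem_Icc.mpr ⟨hk₁1, hk₁d⟩, ⟨ht₀, by simpa using hneg⟩⟩⟩
    have hSbdd : BddBelow S := by
      refine ⟨0, fun s hs => ?_⟩
      rw [hS, mem_iUnion] at hs
      obtain ⟨k, hk⟩ := hs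
      rw [mem_iUnion] at hk
      obtain ⟨-, hk2, -⟩ := hk
      exact hk2.1
    set τ := sInf S with hτdef
    have hτS : τ ∈ S := hSclosed.csInf_mem hSne hSbdd
    obtain ⟨k₀, hk₀mem⟩ := mem_iUnion.mp hτS
    rw [mem_iUnion] at hk₀mem
    obtain ⟨hk₀rng, hτIcc, hφk₀⟩ := hk₀mem
    rw [Finset.mem_Icc] at hk₀rng
    obtain ⟨hk₀1, hk₀d⟩ := hk₀rng
    rw [mem_preimage, mem_Iic] at hφk₀
    have hτ0 : 0 ≤ τ := hτIcc.1
    have hτT : τ ≤ T := hτIcc.2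
    have hτpos : 0 < τ := by
      rcases eq_or_lt_of_le hτ0 with h | h
      · exfalso
        have h0 : φ k₀ 0 = w k₀ 0 - x k₀ 0 + ε := by
          simp [hφ]
        have h1 := hinit k₀ hk₀1 hk₀d
        rw [← h] at hφk₀
        rw [h0] at hφk₀
        linarith
      · exact h
    -- before τ, all φ are positive
    have hpre : ∀ t ∈ Ico (0:ℝ) τ, ∀ k, 1 ≤ k → k ≤ d → 0 < φ k t := by
      intro t ht k h1 h2
      by_contra hc
      push_neg at hc
      have htS : t ∈ S := by
        rw [hS, mem_iUnion]
        refine ⟨k, ?_⟩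
        rw [mem_iUnion]
        exact ⟨Finset.mem_Icc.mpr ⟨h1, h2⟩, ⟨⟨ht.1, le_trans ht.2.le hτT⟩, by simpa using hc⟩⟩
      have := csInf_le hSbdd htS
      rw [← hτdef] at this
      exact absurd this (not_le.mpr ht.2)
    -- at τ, all φ are nonnegative (by left continuity)
    have hneIco : (𝓝[Ico (0:ℝ) τ] τ).NeBot := by
      apply mem_closure_iff_nhdsWithin_neBot.mp
      rw [closure_Ico hτpos.ne]
      exact right_mem_Icc.mpr hτ0
    have hφτ : ∀ k, 1 ≤ k → k ≤ d → 0 ≤ φ k τ := by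
      intro k h1 h2
      have hcw : ContinuousWithinAt (φ k) (Ico 0 τ) τ := by
        apply ((hφcont k h1 h2) τ hτIcc).mono
        intro s hs
        exact ⟨hs.1, le_trans hs.2.le hτT⟩
      apply ge_of_tendsto hcw
      filter_upwards [self_mem_nhdsWithin] with t ht
      exact (hpre t ht k h1 h2).le
    have hφk₀τ : φ k₀ τ = 0 := le_antisymm hφk₀ (hφτ k₀ hk₀1 hk₀d)
    -- set up the pointwise comparison at time τ
    set η : ℝ := ε * Real.exp (2 * L * τ) with hη
    have hη0 : 0 < η := by positivity
    set X : ℕ → ℝ := fun j => x j τ with hX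
    set W : ℕ → ℝ := fun j => w j τ with hW
    set M : ℕ → ℝ := fun j => Max.max (W j) (X j) with hM
    have hXreg : RegFun X := hxReg τ hτIcc
    have hWreg : RegFun W := hwReg τ hτIcc
    have hMreg : RegFun M := hWreg.max hXreg
    have hWX : W k₀ = X k₀ - η := by
      have : w k₀ τ - x k₀ τ + η = 0 := hφk₀τ
      simp only [hX, hW]
      linarith
    have hXW : ∀ j, 1 ≤ j → j ≤ d → X j ≤ W j + η := by
      intro j h1 h2
      have := hφτ j h1 h2
      simp only [hφ] at this
      simp only [hX, hW, hη]
      linarith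
    -- closeness of M to W
    have hMW : ∀ j, j ≤ d + 1 → M j ≤ W j + η := by
      intro j hj
      rcases Nat.eq_zero_or_pos j with h0 | h1
      · subst h0
        have hM0 : M 0 = 1 := hMreg.1
        have hW0 : W 0 = 1 := hWreg.1
        rw [hM0, hW0]
        linarith
      · rcases Nat.lt_or_ge j (d+1) with hlt | hge
        · have hXL := hXW j h1 (by omega)
          simp only [hM]
          apply max_le (by linarith) hXL
        · have hj1 : j = d + 1 := by omega
          subst hj1
          have htl : X (d+1) ≤ W (d+1) := htail τ hτIcc
          simp only [hM]
          apply max_le (by linarith) (by linarith)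
    have hWM : ∀ j, W j ≤ M j := fun j => le_max_left _ _
    have hXM : ∀ j, X j ≤ M j := fun j => le_max_right _ _
    -- index bookkeeping : k₀ = k' + 1
    obtain ⟨k', rfl⟩ : ∃ k', k₀ = k' + 1 := ⟨k₀ - 1, by omega⟩
    have hk'd : k' + 2 ≤ d + 1 := by omega
    have hx1' : n = 1 → X 1 ≤ 1 - δ := fun h => hx1 h τ hτIcc
    have hw1' : n = 1 → W 1 ≤ 1 - δ := fun h => hw1 h τ hτIcc
    have hm1' : n = 1 → M 1 ≤ 1 - δ := by
      intro h
      simp only [hM]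
      exact max_le (hw1' h) (hx1' h)
    -- quasimonotonicity : v(X) ≤ v(M)
    have hq : vfield lam n X (k' + 1) ≤ vfield lam n M (k' + 1) := by
      apply vfield_quasi lam hlam0.le hn hδ k'
        (fun j _ => hXreg.locReg j) (fun j _ => hMreg.locReg j)
        (fun j _ => hXM j)
      · have hWle : W (k' + 1) ≤ X (k' + 1) := by rw [hWX]; linarith
        simp only [hM]
        exact (max_eq_right hWle).symm
      · exact fun j _ => denOK_master hn hδ4 hXreg hMreg hx1' hm1' j
    -- Lipschitz : v(M) ≤ v(W) + L' η
    have hlip : vfield lam n M (k' + 1) - vfield lam n W (k' + 1)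
        ≤ (lam * ((n:ℝ) + k' * C) + 1) * η := by
      apply vfield_lip lam hlam0.le hn hδ hη0.le k'
        (fun j _ => hWreg.locReg j) (fun j _ => hMreg.locReg j)
        (fun j _ => hWM j) (fun j hj => hMW j (by omega))
        (fun j _ => denOK_master hn hδ4 hWreg hMreg hw1' hm1' j)
    have hLL : (lam * ((n:ℝ) + k' * C) + 1) * η ≤ L * η := by
      apply mul_le_mul_of_nonneg_right _ hη0.le
      rw [hL]
      have h1 : (k' : ℝ) ≤ (d : ℝ) := by exact_mod_cast (by omega : k' ≤ d)
      have h2 : (k':ℝ) * C ≤ (d:ℝ) * C := mul_le_mul_of_nonneg_right h1 hC0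
      have := mul_le_mul_of_nonneg_left (add_le_add_left h2 (n:ℝ)) hlam0.le
      linarith
    -- the derivative of φ k₀ at τ within Icc 0 τ
    have hderφ : HasDerivWithinAt (φ (k' + 1))
        (gw (k' + 1) τ - vfield lam n (fun j => x j τ) (k' + 1)
          + ε * (Real.exp (2 * L * τ) * (2 * L))) (Icc 0 τ) τ := by
      have hIcc : Icc (0:ℝ) τ ⊆ Ici 0 := fun s hs => hs.1
      have h1 := (hwder (k'+1) hk₀1 hk₀d τ hτIcc).mono hIcc
      have h2 := (hxder (k'+1) hk₀1 hk₀d τ hτIcc).mono hIcc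
      have h3 : HasDerivAt (fun t : ℝ => ε * Real.exp (2 * L * t))
          (ε * (Real.exp (2 * L * τ) * (2 * L))) τ := by
        have h4 : HasDerivAt (fun t : ℝ => (2 * L) * t) (2 * L) τ := by
          simpa using (hasDerivAt_id τ).const_mul (2 * L)
        exact (h4.exp).const_mul ε
      exact ((h1.sub h2).add h3.hasDerivWithinAt)
    -- the minimum property
    have hmin : ∀ t ∈ Icc (0:ℝ) τ, φ (k'+1) τ ≤ φ (k'+1) t := by
      intro t ht
      rcases eq_or_lt_of_le ht.2 with h | h
      · subst h; exact le_refl _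
      · rw [hφk₀τ]
        exact (hpre t ⟨ht.1, h⟩ (k'+1) hk₀1 hk₀d).le
    have hnonpos := deriv_nonpos_at_right_min hτpos hderφ hmin
    -- contradiction : derivative is positive
    have hvX : vfield lam n (fun j => x j τ) (k' + 1) = vfield lam n X (k' + 1) := rfl
    have hvW : vfield lam n (fun j => w j τ) (k' + 1) = vfield lam n W (k' + 1) := rfl
    have hgwτ := hgw (k'+1) hk₀1 hk₀d τ hτIcc
    rw [hvW] at hgwτ
    have hchain : vfield lam n X (k' + 1) ≤ vfield lam n W (k' + 1) + L * η := by
      have := le_trans hlip hLL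
      linarith
    have hpos : 0 < gw (k' + 1) τ - vfield lam n (fun j => x j τ) (k' + 1)
        + ε * (Real.exp (2 * L * τ) * (2 * L)) := by
      rw [hvX]
      have he : ε * (Real.exp (2 * L * τ) * (2 * L)) = 2 * L * η := by
        rw [hη]; ring
      rw [he]
      have h5 : 0 < L * η := by positivity
      linarith
    linarith
  -- conclude by letting ε → 0
  intro t ht k h1 h2
  apply le_of_forall_pos_le_add
  intro ε' hε'
  have hexp : (0:ℝ) < Real.exp (2 * L * t) := Real.exp_pos _
  have := key (ε' / Real.exp (2 * L * t)) (by positivity) t ht k h1 h2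
  have heq : ε' / Real.exp (2 * L * t) * Real.exp (2 * L * t) = ε' := by
    field_simp
  rw [heq] at this
  linarith


/-- facts about the sequence `a` -/
lemma a_facts (lam : ℝ) (hlam0 : 0 < lam) (hlam1 : lam < 1) (hn : 1 ≤ n) {a : ℕ → ℝ}
    (ha0 : a 0 = 1) (harec : ∀ k, a (k + 1) = lam * a k ^ n * mu n a k) :
    RegFun a ∧ a 1 = lam := by
  have ha1 : a 1 = lam := by
    rw [harec 0, ha0, mu_zero, one_pow]
    ring
  have main : ∀ m : ℕ, 0 ≤ a m ∧ a m ≤ 1 ∧ a (m + 1) ≤ a m ∧ 0 ≤ a (m + 1) := by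
    intro m
    induction m using Nat.strong_induction_on with
    | _ m ih =>
      rcases Nat.eq_zero_or_pos m with hm | hm
      · subst hm
        rw [ha0, ha1]
        exact ⟨zero_le_one, le_refl 1, hlam1.le, hlam0.le⟩
      · obtain ⟨l, rfl⟩ : ∃ l, m = l + 1 := ⟨m - 1, by omega⟩
        have hl := ih l (by omega)
        have hloc : ∀ j, j < l + 1 → LocReg a j := by
          intro j hj
          have hj1 := ih j (by omega)
          rcases Nat.lt_or_ge (j+1) (l+1) with h | h
          · have hj2 := ih (j+1) (by omega)
            exact ⟨hj2.1, hj1.2.2.1, hj1.2.1⟩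
          · have : j = l := by omega
            subst this
            exact ⟨hj1.2.2.2, hj1.2.2.1, hj1.2.1⟩
        have h0 : 0 ≤ a (l+1) := hl.2.2.2
        have h1 : a (l+1) ≤ 1 := le_trans hl.2.2.1 hl.2.1
        have hmu0 : 0 ≤ mu n a (l+1) := mu_nonneg hloc
        have hmu1 : mu n a (l+1) ≤ 1 := mu_le_one hloc
        have hpow : a (l+1) ^ n ≤ a (l+1) := pow_le_of_le_one h0 h1 (by omega)
        have hpow0 : 0 ≤ a (l+1) ^ n := pow_nonneg h0 n
        have hnext : a (l + 2) = lam * a (l+1) ^ n * mu n a (l+1) := harec (l+1)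
        have h2 : 0 ≤ a (l+2) := by
          rw [hnext]; positivity
        have h3 : a (l+2) ≤ a (l+1) := by
          rw [hnext]
          calc lam * a (l+1) ^ n * mu n a (l+1) ≤ lam * a (l+1) ^ n * 1 := by
                apply mul_le_mul_of_nonneg_left hmu1 (by positivity)
            _ = lam * a (l+1) ^ n := by ring
            _ ≤ 1 * a (l+1) := by
                apply mul_le_mul hlam1.le hpow hpow0 zero_le_one
            _ = a (l+1) := one_mul _
        exact ⟨h0, h1, h3, h2⟩
  refine ⟨⟨ha0, fun k => (main k).2.2.1, fun k => ⟨(main k).1, (main k).2.1⟩⟩, ha1⟩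

lemma vfield_a (lam : ℝ) {a : ℕ → ℝ}
    (harec : ∀ k, a (k + 1) = lam * a k ^ n * mu n a k) (k : ℕ) (hk : 1 ≤ k) :
    vfield lam n a k = 0 := by
  obtain ⟨l, rfl⟩ : ∃ l, k = l + 1 := ⟨k - 1, by omega⟩
  unfold vfield
  simp only [Nat.add_sub_cancel]
  rw [← harec l, ← harec (l+1)]
  ring

/-- monotonicity of the flux `lam * y d ^ n * mu n y d` -/
lemma flux_mono (lam : ℝ) (hlam : 0 ≤ lam) (hn : 1 ≤ n) (hδ : 0 < δ) (d : ℕ)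
    (hy : RegFun y) (hw : RegFun w) (hle : ∀ j, j ≤ d → y j ≤ w j)
    (hden : ∀ j, j < d → DenOK n y w δ j) :
    lam * y d ^ n * mu n y d ≤ lam * w d ^ n * mu n w d := by
  have hmu : mu n y d ≤ mu n w d := by
    apply mu_mono (fun j hj => hy.locReg j)
    intro j hj
    exact muFactor_mono hn hδ (hy.locReg j) (hw.locReg j) (hle j (by omega))
      (hle (j+1) (by omega)) (hden j hj)
  have hpow : y d ^ n ≤ w d ^ n := pow_le_pow_left₀ (hy.2.2 d).1 (hle d le_rfl) n
  have h1 : 0 ≤ mu n y d := mu_nonneg (fun j _ => hy.locReg j)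
  have h2 : 0 ≤ y d ^ n := pow_nonneg (hy.2.2 d).1 n
  have h3 : 0 ≤ w d ^ n := pow_nonneg (hw.2.2 d).1 n
  have : y d ^ n * mu n y d ≤ w d ^ n * mu n w d :=
    mul_le_mul hpow hmu h1 h3
  calc lam * y d ^ n * mu n y d = lam * (y d ^ n * mu n y d) := by ring
    _ ≤ lam * (w d ^ n * mu n w d) := mul_le_mul_of_nonneg_left this hlam
    _ = lam * w d ^ n * mu n w d := by ring


end ALL
end Stmt14

open Stmt14

/-- truncation estimate ∑_(k=1)^d |z_k(t) - x_k(t)| ≤ t a_(d+1),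
where z solves ż = v(z) from 0 and x solves the truncated system from 0. -/
theorem stmt14 (lam : ℝ) (hlam0 : 0 < lam) (hlam1 : lam < 1) (n : ℕ) (hn : 1 ≤ n)
    (a : ℕ → ℝ) (ha0 : a 0 = 1)
    (harec : ∀ k, a (k + 1) = lam * a k ^ n * mu n a k)
    (d : ℕ) (hd : 1 ≤ d)
    (z : ℕ → ℝ → ℝ) (hz : IsSolution lam n z) (hzinit : ∀ k, 1 ≤ k → z k 0 = 0)
    (x : ℕ → ℝ → ℝ) (hx : IsSolutionTrunc lam n d x) (hxinit : ∀ k, 1 ≤ k → x k 0 = 0) :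
    ∀ t : ℝ, 0 ≤ t →
      ∑ k ∈ Finset.Icc 1 d, |z k t - x k t| ≤ t * a (d + 1) := by 
  obtain ⟨hzmem, hzder⟩ := hz
  obtain ⟨hxmem, hxder⟩ := hx
  intro T hT
  -- regularity of trajectories
  have hzReg : ∀ t ∈ Icc (0:ℝ) T, RegFun (fun k => z k t) := by
    intro t ht
    obtain ⟨h1, h2, h3, -⟩ := hzmem t ht.1
    exact ⟨h1, h2, h3⟩
  have hxReg : ∀ t ∈ Icc (0:ℝ) T, RegFun (fun k => x k t) := by
    intro t ht
    obtain ⟨h1, h2, h3, -⟩ := hxmem t ht.1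
    exact ⟨h1, h2, h3⟩
  have hxzero : ∀ t ∈ Icc (0:ℝ) T, ∀ k, d < k → x k t = 0 := by
    intro t ht k hk
    exact (hxmem t ht.1).2.2.2 k hk
  have ha := a_facts lam hlam0 hlam1 hn ha0 harec
  have haReg : RegFun a := ha.1
  have ha1 : a 1 = lam := ha.2
  -- choice of δ
  set δ : ℝ := min (1 / (4 * (n:ℝ)^2)) (min (1 - lam) (Real.exp (-(lam * T)))) with hδdef
  have hδpos : 0 < δ := by
    apply lt_min (by positivity)
    apply lt_min (by linarith) (Real.exp_pos _)
  have hδ4 : δ ≤ 1 / (4 * (n:ℝ)^2) := min_le_left _ _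
  have hδlam : δ ≤ 1 - lam := le_trans (min_le_right _ _) (min_le_left _ _)
  have hδexp : δ ≤ Real.exp (-(lam * T)) := le_trans (min_le_right _ _) (min_le_right _ _)
  -- the Grönwall bound on the first coordinate, needed only when n = 1
  have hexpT : ∀ t ∈ Icc (0:ℝ) T, Real.exp (-(lam * T)) ≤ Real.exp (-(lam * t)) := by
    intro t ht
    apply Real.exp_le_exp.mpr
    have := mul_le_mul_of_nonneg_left ht.2 hlam0.le
    linarith
  have hz1 : n = 1 → ∀ t ∈ Icc (0:ℝ) T, z 1 t ≤ 1 - δ := by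
    intro hn1 t ht
    have hder1 : ∀ s ∈ Icc (0:ℝ) T, HasDerivWithinAt (z 1)
        (vfield lam n (fun j => z j s) 1) (Ici 0) s := fun s hs => hzder 1 le_rfl s hs.1
    have hb : ∀ s ∈ Icc (0:ℝ) T, vfield lam n (fun j => z j s) 1 ≤ lam * (1 - z 1 s) := by
      intro s hs
      have hreg := hzReg s hs
      have h0 : z 0 s = 1 := hreg.1
      have hmf : muFactor n (fun j => z j s) 0 = 1 := muFactor_zero_n1 hn1 h0
      have hmu1 : mu n (fun j => z j s) 1 = 1 := by
        rw [mu_succ 0, mu_zero, hmf]; ring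
      have h21 : z 2 s ≤ z 1 s := hreg.2.1 1
      unfold vfield
      rw [hmu1, mu_zero]
      simp only [Nat.sub_self]
      rw [h0, hn1]
      simp only [pow_one]
      linarith
    have := gronwall_one hlam0 hder1 hb (hzinit 1 le_rfl) t ht
    have h2 := hexpT t ht
    have h3 : δ ≤ Real.exp (-(lam * t)) := le_trans hδexp h2
    linarith
  have hx1 : n = 1 → ∀ t ∈ Icc (0:ℝ) T, x 1 t ≤ 1 - δ := by
    intro hn1 t ht
    have hder1 : ∀ s ∈ Icc (0:ℝ) T, HasDerivWithinAt (x 1)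
        (ufield lam n d (fun j => x j s) 1) (Ici 0) s := fun s hs => hxder 1 le_rfl s hs.1
    have hb : ∀ s ∈ Icc (0:ℝ) T, ufield lam n d (fun j => x j s) 1 ≤ lam * (1 - x 1 s) := by
      intro s hs
      have hreg := hxReg s hs
      have h0 : x 0 s = 1 := hreg.1
      have hmf : muFactor n (fun j => x j s) 0 = 1 := muFactor_zero_n1 hn1 h0
      have hmu1 : mu n (fun j => x j s) 1 = 1 := by
        rw [mu_succ 0, mu_zero, hmf]; ring
      have h21 : x 2 s ≤ x 1 s := hreg.2.1 1
      have h10 : 0 ≤ x 1 s := (hreg.2.2 1).1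
      unfold ufield
      rcases lt_or_ge 1 d with hdd | hdd
      · rw [if_pos hdd]
        unfold vfield
        rw [hmu1, mu_zero]
        simp only [Nat.sub_self]
        rw [h0, hn1]
        simp only [pow_one]
        linarith
      · have hd1 : d = 1 := by omega
        subst hd1
        rw [if_neg (lt_irrefl 1), if_pos rfl]
        simp only [Nat.sub_self]
        rw [hmu1, mu_zero, h0, hn1]
        simp only [pow_one]
        linarith
    have := gronwall_one hlam0 hder1 hb (hxinit 1 le_rfl) t ht
    have h2 := hexpT t ht
    have h3 : δ ≤ Real.exp (-(lam * t)) := le_trans hδexp h2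
    linarith
  have ha1b : n = 1 → a 1 ≤ 1 - δ := by
    intro _
    rw [ha1]
    linarith
  -- the x-derivatives equal the untruncated field
  have hxderV : ∀ k, 1 ≤ k → k ≤ d → ∀ t ∈ Icc (0:ℝ) T,
      HasDerivWithinAt (x k) (vfield lam n (fun j => x j t) k) (Ici 0) t := by
    intro k h1 h2 t ht
    have h3 := hxder k h1 t ht.1
    rwa [ufield_eq_vfield lam k h1 h2 (hxzero t ht (d+1) (by omega))] at h3
  -- comparison 1 : x ≤ a
  have hxa : ∀ t ∈ Icc (0:ℝ) T, ∀ k, 1 ≤ k → k ≤ d → x k t ≤ a k := by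
    apply comparison lam hlam0 hn hd hδpos hδ4 x (fun k _ => a k) hxReg
      (fun t _ => haReg) hx1 (fun h _ _ => ha1b h)
      (fun t ht => by
        have := hxzero t ht (d+1) (by omega)
        simp only [this]
        exact (haReg.2.2 (d+1)).1)
      (fun _ _ => 0) hxderV
      (fun k _ _ t _ => hasDerivWithinAt_const t _ (a k))
      (fun k h1 _ t _ => le_of_eq (vfield_a lam harec k h1))
      (fun k h1 _ => by rw [hxinit k h1]; exact (haReg.2.2 k).1)
  -- comparison 2 : x ≤ z
  have hxz : ∀ t ∈ Icc (0:ℝ) T, ∀ k, 1 ≤ k → k ≤ d → x k t ≤ z k t := by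
    apply comparison lam hlam0 hn hd hδpos hδ4 x z hxReg hzReg hx1 hz1
      (fun t ht => by
        have := hxzero t ht (d+1) (by omega)
        simp only [this]
        exact ((hzReg t ht).2.2 (d+1)).1)
      (fun k t => vfield lam n (fun j => z j t) k) hxderV
      (fun k h1 _ t ht => hzder k h1 t ht.1)
      (fun k _ _ t _ => le_refl _)
      (fun k h1 _ => by rw [hxinit k h1, hzinit k h1])
  -- flux bound
  have hflux : ∀ s ∈ Icc (0:ℝ) T,
      lam * x d s ^ n * mu n (fun j => x j s) d ≤ a (d + 1) := by
    intro s hs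
    have hle : ∀ j, j ≤ d → x j s ≤ a j := by
      intro j hj
      rcases Nat.eq_zero_or_pos j with h0 | h1
      · subst h0
        have h1 : x 0 s = 1 := (hxReg s hs).1
        rw [h1, ha0]
      · exact hxa s hs j h1 hj
    have h2 := flux_mono lam hlam0.le hn hδpos d (hxReg s hs) haReg hle
      (fun j _ => denOK_master hn hδ4 (hxReg s hs) haReg (hx1 · s hs) (fun h => ha1b h) j)
    rw [harec d]
    exact h2
  -- mass bound for z
  have hmass : ∀ M : ℕ, ∀ s ∈ Icc (0:ℝ) T,
      ∑ k ∈ Finset.Icc 1 M, z k s ≤ lam * s := by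
    intro M
    have hderS : ∀ s ∈ Icc (0:ℝ) T, HasDerivWithinAt (fun u => ∑ k ∈ Finset.Icc 1 M, z k u)
        (∑ k ∈ Finset.Icc 1 M, vfield lam n (fun j => z j s) k) (Ici 0) s := by
      intro s hs
      apply HasDerivWithinAt.fun_sum
      intro k hk
      exact hzder k (Finset.mem_Icc.mp hk).1 s hs.1
    have hbS : ∀ s ∈ Icc (0:ℝ) T,
        (∑ k ∈ Finset.Icc 1 M, vfield lam n (fun j => z j s) k) ≤ lam := by
      intro s hs
      rw [vfield_telescope]
      have hreg := hzReg s hs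
      have h0 : z 0 s = 1 := hreg.1
      have hF : 0 ≤ lam * z M s ^ n * mu n (fun j => z j s) M := by
        apply mul_nonneg (mul_nonneg hlam0.le (pow_nonneg ((hreg.2.2 M).1) n))
        exact mu_nonneg (fun j _ => hreg.locReg j)
      have hanti : z (M+1) s ≤ z 1 s := by
        have := hreg.anti (show 1 ≤ M + 1 by omega)
        exact this
      have h1 : (fun k => z k s) 0 = 1 := h0
      simp only [h1, one_pow, mu_zero]
      linarith
    intro s hs
    have := le_of_deriv_le_const hderS hbS s hs
    have h0 : (∑ k ∈ Finset.Icc 1 M, z k 0) = 0 := by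
      apply Finset.sum_eq_zero
      intro k hk
      exact hzinit k (Finset.mem_Icc.mp hk).1
    rw [h0] at this
    linarith
  -- tail bound for z
  have htailz : ∀ N : ℕ, ∀ s ∈ Icc (0:ℝ) T, ((N:ℝ) + 1) * z (N+1) s ≤ lam * T := by
    intro N s hs
    have hreg := hzReg s hs
    have hsum : ((N:ℝ) + 1) * z (N+1) s ≤ ∑ k ∈ Finset.Icc 1 (N+1), z k s := by
      have hcard : (Finset.Icc 1 (N+1)).card = N + 1 := by
        rw [Nat.card_Icc]
        omega
      have := Finset.card_nsmul_le_sum (Finset.Icc 1 (N+1)) (fun k => z k s) (z (N+1) s) ?_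
      · rw [hcard] at this
        rw [nsmul_eq_mul] at this
        push_cast at this
        linarith
      · intro k hk
        exact hreg.anti (Finset.mem_Icc.mp hk).2
    have h2 := hmass (N+1) s hs
    have h3 : lam * s ≤ lam * T := mul_le_mul_of_nonneg_left hs.2 hlam0.le
    linarith
  -- main estimate for fixed N ≥ d
  have hmain : ∀ N : ℕ, d ≤ N →
      (∑ k ∈ Finset.Icc 1 d, |z k T - x k T|)
        ≤ (a (d+1) + lam * T / ((N:ℝ)+1)) * T := by
    intro N hdN
    set F : ℝ → ℝ := fun s => (∑ k ∈ Finset.Icc 1 N, z k s) - ∑ k ∈ Finset.Icc 1 d, x k s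
      with hF
    have hderF : ∀ s ∈ Icc (0:ℝ) T, HasDerivWithinAt F
        ((∑ k ∈ Finset.Icc 1 N, vfield lam n (fun j => z j s) k)
          - ∑ k ∈ Finset.Icc 1 d, ufield lam n d (fun j => x j s) k) (Ici 0) s := by
      intro s hs
      apply HasDerivWithinAt.sub
      · apply HasDerivWithinAt.fun_sum
        intro k hk
        exact hzder k (Finset.mem_Icc.mp hk).1 s hs.1
      · apply HasDerivWithinAt.fun_sum
        intro k hk
        exact hxder k (Finset.mem_Icc.mp hk).1 s hs.1
    have hbF : ∀ s ∈ Icc (0:ℝ) T,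
        (∑ k ∈ Finset.Icc 1 N, vfield lam n (fun j => z j s) k)
          - (∑ k ∈ Finset.Icc 1 d, ufield lam n d (fun j => x j s) k)
        ≤ a (d+1) + lam * T / ((N:ℝ)+1) := by
      intro s hs
      have hzr := hzReg s hs
      have hxr := hxReg s hs
      -- z sum
      have hzsum : (∑ k ∈ Finset.Icc 1 N, vfield lam n (fun j => z j s) k)
          = lam - lam * z N s ^ n * mu n (fun j => z j s) N - (z 1 s - z (N+1) s) := by
        rw [vfield_telescope]
        have h1 : (fun k => z k s) 0 = 1 := hzr.1
        simp only [h1, one_pow, mu_zero]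
        ring
      -- x sum
      have hxsum : (∑ k ∈ Finset.Icc 1 d, ufield lam n d (fun j => x j s) k)
          = lam - lam * x d s ^ n * mu n (fun j => x j s) d - x 1 s := by
        have hcongr : ∀ k ∈ Finset.Icc 1 d,
            ufield lam n d (fun j => x j s) k = vfield lam n (fun j => x j s) k := by
          intro k hk
          exact ufield_eq_vfield lam k (Finset.mem_Icc.mp hk).1 (Finset.mem_Icc.mp hk).2
            (hxzero s hs (d+1) (by omega))
        rw [Finset.sum_congr rfl hcongr, vfield_telescope]
        have h1 : (fun k => x k s) 0 = 1 := hxr.1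
        have h2 : (fun k => x k s) (d+1) = 0 := hxzero s hs (d+1) (by omega)
        simp only [h1, h2, one_pow, mu_zero]
        ring
      rw [hzsum, hxsum]
      have hFz : 0 ≤ lam * z N s ^ n * mu n (fun j => z j s) N := by
        apply mul_nonneg (mul_nonneg hlam0.le (pow_nonneg ((hzr.2.2 N).1) n))
        exact mu_nonneg (fun j _ => hzr.locReg j)
      have hx1z : x 1 s ≤ z 1 s := hxz s hs 1 le_rfl hd
      have hfluxs := hflux s hs
      have hts := htailz N s hs
      have hNpos : (0:ℝ) < (N:ℝ) + 1 := by positivity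
      have hzN1 : z (N+1) s ≤ lam * T / ((N:ℝ)+1) := by
        rw [le_div_iff₀ hNpos]
        linarith [hts]
      linarith
    have hFT := le_of_deriv_le_const hderF hbF T (right_mem_Icc.mpr hT)
    have hF0 : F 0 = 0 := by
      rw [hF]
      simp only
      have h1 : (∑ k ∈ Finset.Icc 1 N, z k 0) = 0 :=
        Finset.sum_eq_zero (fun k hk => hzinit k (Finset.mem_Icc.mp hk).1)
      have h2 : (∑ k ∈ Finset.Icc 1 d, x k 0) = 0 :=
        Finset.sum_eq_zero (fun k hk => hxinit k (Finset.mem_Icc.mp hk).1)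
      rw [h1, h2]
      ring
    rw [hF0] at hFT
    -- |z - x| sums
    have habs : (∑ k ∈ Finset.Icc 1 d, |z k T - x k T|)
        = ∑ k ∈ Finset.Icc 1 d, (z k T - x k T) := by
      apply Finset.sum_congr rfl
      intro k hk
      apply abs_of_nonneg
      have := hxz T (right_mem_Icc.mpr hT) k (Finset.mem_Icc.mp hk).1 (Finset.mem_Icc.mp hk).2
      linarith
    have hsub : (∑ k ∈ Finset.Icc 1 d, (z k T - x k T)) ≤ F T := by
      rw [hF]
      simp only
      rw [Finset.sum_sub_distrib]
      have : (∑ k ∈ Finset.Icc 1 d, z k T) ≤ ∑ k ∈ Finset.Icc 1 N, z k T := by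
        apply Finset.sum_le_sum_of_subset_of_nonneg
        · apply Finset.Icc_subset_Icc_right hdN
        · intro k _ _
          exact (((hzReg T (right_mem_Icc.mpr hT)).2.2 k)).1
      linarith
    rw [habs]
    calc (∑ k ∈ Finset.Icc 1 d, (z k T - x k T)) ≤ F T := hsub
      _ ≤ 0 + (a (d+1) + lam * T / ((N:ℝ)+1)) * T := hFT
      _ = (a (d+1) + lam * T / ((N:ℝ)+1)) * T := by ring
  -- let N → ∞
  apply le_of_forall_pos_le_add
  intro ε hε
  obtain ⟨N₀, hN₀⟩ := exists_nat_gt (lam * T * T / ε)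
  set N := max d N₀ with hN
  have h1 := hmain N (le_max_left _ _)
  have hNpos : (0:ℝ) < (N:ℝ) + 1 := by positivity
  have h2 : lam * T / ((N:ℝ)+1) * T ≤ ε := by
    rw [div_mul_eq_mul_div, div_le_iff₀ hNpos]
    have h3 : lam * T * T / ε < (N:ℝ) := by
      have : (N₀:ℝ) ≤ (N:ℝ) := by
        exact_mod_cast le_max_right d N₀
      linarith
    rw [div_lt_iff₀ hε] at h3
    nlinarith
  calc (∑ k ∈ Finset.Icc 1 d, |z k T - x k T|)
      ≤ (a (d+1) + lam * T / ((N:ℝ)+1)) * T := h1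
    _ = T * a (d+1) + lam * T / ((N:ℝ)+1) * T := by ring
    _ ≤ T * a (d+1) + ε := by linarith


end
end

section
/- Let (w(t))_{t≥0} be a solution of ẇ = v(w) in D and set m(w(t)) = Σ_{k≥1} w_k(t). Then for all t ≥ 0, m(w(t)) ≤ m(w(0)) + λt < ∞ and m(w(t)) = m(w(0)) + λt − ∫_0^t w_1(s) ds. -/
open Filter

noncomputable section

theorem key_ineq (n : ℕ) (a b : ℝ) (hb : 0 ≤ b) (hab : b ≤ a) :
    (n:ℝ) * (a - b) * b ^ (n-1) ≤ a ^ n - b ^ n := by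
  have h := geom_sum₂_mul a b n
  have hsum : (n:ℝ) * b ^ (n-1) ≤ ∑ i ∈ Finset.range n, a ^ i * b ^ (n - 1 - i) := by
    calc (n:ℝ) * b ^ (n-1) = ∑ _i ∈ Finset.range n, b ^ (n-1) := by
          rw [Finset.sum_const, Finset.card_range, nsmul_eq_mul]
      _ ≤ ∑ i ∈ Finset.range n, a ^ i * b ^ (n - 1 - i) := by
          apply Finset.sum_le_sum
          intro i hi
          have hin : i ≤ n - 1 := Nat.le_sub_one_of_lt (Finset.mem_range.mp hi)
          have : b ^ (n-1) = b ^ i * b ^ (n - 1 - i) := by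
            rw [← pow_add]; congr 1; omega
          rw [this]
          gcongr
  calc (n:ℝ) * (a - b) * b ^ (n-1) = ((n:ℝ) * b ^ (n-1)) * (a - b) := by ring
    _ ≤ (∑ i ∈ Finset.range n, a ^ i * b ^ (n - 1 - i)) * (a - b) :=
        mul_le_mul_of_nonneg_right hsum (by linarith)
    _ = a ^ n - b ^ n := h

theorem muFactor_mem (n : ℕ) (z : ℕ → ℝ)
    (hmono : ∀ k, z (k + 1) ≤ z k) (hbd : ∀ k, 0 ≤ z k ∧ z k ≤ 1) (j : ℕ) :
    0 ≤ muFactor n z j ∧ muFactor n z j ≤ 1 := by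
  have hb0 : 0 ≤ z (j+1) := (hbd _).1
  have hab : z (j+1) ≤ z j := hmono j
  have ha1 : z j ≤ 1 := (hbd _).2
  have hp : pcoef n z j ≤ z j ^ n - z (j+1) ^ n := key_ineq n (z j) (z (j+1)) hb0 hab
  have hden : z (j+1) ^ n ≤ 1 - pcoef n z j := by
    have : z j ^ n ≤ 1 := pow_le_one₀ (le_trans hb0 hab) ha1
    linarith
  by_cases hzero : z (j+1) ^ n = 0
  · by_cases hd : 1 - pcoef n z j = 0
    · simp [muFactor, hzero, hd]
    · have : muFactor n z j = 0 := by simp [muFactor, hzero, hd]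
      simp [this]
  · have hpos : 0 < z (j+1) ^ n := lt_of_le_of_ne (pow_nonneg hb0 _) (Ne.symm hzero)
    have hdpos : 0 < 1 - pcoef n z j := lt_of_lt_of_le hpos hden
    have : muFactor n z j = z (j+1) ^ n / (1 - pcoef n z j) := by
      simp [muFactor, hzero]
    rw [this]
    exact ⟨by positivity, by rw [div_le_one hdpos]; exact hden⟩

theorem mu_mem (n : ℕ) (z : ℕ → ℝ)
    (hmono : ∀ k, z (k + 1) ≤ z k) (hbd : ∀ k, 0 ≤ z k ∧ z k ≤ 1) (k : ℕ) :
    0 ≤ mu n z k ∧ mu n z k ≤ 1 :=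
  ⟨Finset.prod_nonneg fun j _ => (muFactor_mem n z hmono hbd j).1,
   Finset.prod_le_one (fun j _ => (muFactor_mem n z hmono hbd j).1)
     (fun j _ => (muFactor_mem n z hmono hbd j).2)⟩

theorem sum_vfield (lam : ℝ) (n : ℕ) (z : ℕ → ℝ) (K : ℕ) :
    ∑ k ∈ Finset.range K, vfield lam n z (k + 1)
      = lam * z 0 ^ n * mu n z 0 - lam * z K ^ n * mu n z K - (z 1 - z (K + 1)) := by
  have h1 : ∀ k, vfield lam n z (k + 1)
      = (lam * z k ^ n * mu n z k - lam * z (k+1) ^ n * mu n z (k+1))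
        - (z (k+1) - z (k+2)) := by
    intro k; simp [vfield]
  simp only [h1]
  rw [Finset.sum_sub_distrib, Finset.sum_range_sub' (fun k => lam * z k ^ n * mu n z k),
    Finset.sum_range_sub' (fun k => z (k+1))]

theorem aemeasurable_ite_div {h g : ℝ → ℝ} {μ : MeasureTheory.Measure ℝ}
    (hh : AEMeasurable h μ) (hg : AEMeasurable g μ) :
    AEMeasurable (fun s => if h s = 0 ∧ g s = 0 then 1 else h s / g s) μ := by
  obtain ⟨h', hm, hhe⟩ := hh
  obtain ⟨g', gm, hge⟩ := hg
  refine ⟨fun s => if h' s = 0 ∧ g' s = 0 then 1 else h' s / g' s, ?_, ?_⟩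
  · exact Measurable.ite
      ((hm (measurableSet_singleton 0)).inter (gm (measurableSet_singleton 0)))
      measurable_const (hm.div gm)
  · filter_upwards [hhe, hge] with s e1 e2
    simp only [e1, e2]

/-- for a solution w of ẇ = v(w) in D, with m(w(t)) = ∑_(k≥1) w_k(t),
one has m(w(t)) ≤ m(w(0)) + λt < ∞ and m(w(t)) = m(w(0)) + λt - ∫_0^t w_1(s) ds. -/
theorem stmt15 (lam : ℝ) (hlam0 : 0 < lam) (hlam1 : lam < 1) (n : ℕ) (hn : 1 ≤ n)
    (w : ℕ → ℝ → ℝ) (hw : IsSolution lam n w) :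
    ∀ t : ℝ, 0 ≤ t →
      Summable (fun k => w (k + 1) t) ∧
      (∑' k : ℕ, w (k + 1) t) ≤ (∑' k : ℕ, w (k + 1) 0) + lam * t ∧
      (∑' k : ℕ, w (k + 1) t) =
        (∑' k : ℕ, w (k + 1) 0) + lam * t - ∫ s in (0 : ℝ)..t, w 1 s := by
  obtain ⟨hmemD, hderiv⟩ := hw
  intro t ht
  have hsum : ∀ s : ℝ, 0 ≤ s → Summable (fun k => w (k+1) s) :=
    fun s hs => (hmemD s hs).2.2.2
  have hbd : ∀ s : ℝ, 0 ≤ s → ∀ k, 0 ≤ w k s ∧ w k s ≤ 1 :=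
    fun s hs => (hmemD s hs).2.2.1
  have hmono : ∀ s : ℝ, 0 ≤ s → ∀ k, w (k+1) s ≤ w k s :=
    fun s hs => (hmemD s hs).2.1
  have hz0 : ∀ s : ℝ, 0 ≤ s → w 0 s = 1 := fun s hs => (hmemD s hs).1
  -- continuity of each w k, k ≥ 1, on [0, t]
  have hcont : ∀ k : ℕ, 1 ≤ k → ContinuousOn (w k) (Set.Icc 0 t) := by
    intro k hk x hx
    exact ((hderiv k hk x hx.1).continuousWithinAt).mono Set.Icc_subset_Ici_self
  -- abbreviations
  set μr := MeasureTheory.volume.restrict (Set.Ioc (0:ℝ) t) with hμr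
  -- a.e. measurability of every w k on (0,t]
  have hmeas : ∀ k : ℕ, AEMeasurable (fun s => w k s) μr := by
    intro k
    rcases Nat.eq_zero_or_pos k with rfl | hk
    · refine (aemeasurable_const (b := (1:ℝ))).congr ?_
      rw [Filter.EventuallyEq, MeasureTheory.ae_restrict_iff' measurableSet_Ioc]
      filter_upwards with s hs
      exact (hz0 s hs.1.le).symm
    · exact ((hcont k hk).mono Set.Ioc_subset_Icc_self).aemeasurable measurableSet_Ioc
  -- a.e. measurability of mu along the solution
  have hmeasMu : ∀ K : ℕ, AEMeasurable (fun s => mu n (fun j => w j s) K) μr := by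
    intro K
    apply Finset.aemeasurable_fun_prod
    intro j _
    have hnum : AEMeasurable (fun s => w (j+1) s ^ n) μr := (hmeas (j+1)).pow_const n
    have hden : AEMeasurable (fun s => 1 - pcoef n (fun i => w i s) j) μr := by
      have : AEMeasurable (fun s =>
          (n:ℝ) * (w j s - w (j+1) s) * w (j+1) s ^ (n-1)) μr :=
        ((aemeasurable_const.mul ((hmeas j).sub (hmeas (j+1)))).mul
          ((hmeas (j+1)).pow_const (n-1)))
      exact aemeasurable_const.sub this
    exact aemeasurable_ite_div hnum hden
  -- the tail term  f K s = lam * w K s ^ n * mu(...)  and its bounds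
  set f : ℕ → ℝ → ℝ := fun K s => lam * w K s ^ n * mu n (fun j => w j s) K with hf
  have hfbd : ∀ s : ℝ, 0 ≤ s → ∀ K, 0 ≤ f K s ∧ f K s ≤ lam * w K s := by
    intro s hs K
    have hmu := mu_mem n (fun j => w j s) (hmono s hs) (hbd s hs) K
    have hwb := hbd s hs K
    constructor
    · apply mul_nonneg (mul_nonneg hlam0.le (pow_nonneg hwb.1 n)) hmu.1
    · calc lam * w K s ^ n * mu n (fun j => w j s) K ≤ lam * w K s ^ n * 1 := by
            apply mul_le_mul_of_nonneg_left hmu.2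
            exact mul_nonneg hlam0.le (pow_nonneg hwb.1 n)
        _ = lam * w K s ^ n := mul_one _
        _ ≤ lam * w K s := by
            apply mul_le_mul_of_nonneg_left _ hlam0.le
            exact pow_le_of_le_one hwb.1 hwb.2 (by omega)
  have hfmeas : ∀ K, AEMeasurable (f K) μr :=
    fun K => (aemeasurable_const.mul ((hmeas K).pow_const n)).mul (hmeasMu K)
  -- D K s : the derivative of the K-th partial sum
  set D : ℕ → ℝ → ℝ := fun K s => lam - f K s - (w 1 s - w (K+1) s) with hD
  have hDval : ∀ s : ℝ, 0 ≤ s → ∀ K,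
      ∑ k ∈ Finset.range K, vfield lam n (fun j => w j s) (k+1) = D K s := by
    intro s hs K
    rw [sum_vfield]
    have h0 : w 0 s = 1 := hz0 s hs
    simp only [hD, hf, mu, Finset.range_zero, Finset.prod_empty, h0, one_pow, mul_one]
  -- partial sums
  set S : ℕ → ℝ → ℝ := fun K s => ∑ k ∈ Finset.range K, w (k+1) s with hS
  have hScont : ∀ K, ContinuousOn (S K) (Set.Icc 0 t) := by
    intro K
    apply continuousOn_finset_sum
    intro k _
    exact hcont (k+1) (by omega)
  have hSderiv : ∀ K, ∀ x ∈ Set.Ioo (0:ℝ) t, HasDerivWithinAt (S K) (D K x) (Set.Ioi x) x := by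
    intro K x hx
    have : HasDerivWithinAt (S K)
        (∑ k ∈ Finset.range K, vfield lam n (fun j => w j x) (k+1)) (Set.Ici 0) x :=
      HasDerivWithinAt.fun_sum fun k _ => hderiv (k+1) (by omega) x hx.1.le
    rw [hDval x hx.1.le K] at this
    exact this.mono (fun y hy => le_of_lt (lt_trans hx.1 hy))
  -- bound |D K s| ≤ 4 on (0, t]
  have hDbd : ∀ s ∈ Set.Ioc (0:ℝ) t, ∀ K, |D K s| ≤ 4 := by
    intro s hs K
    have hs0 : (0:ℝ) ≤ s := hs.1.le
    have h1 := hfbd s hs0 K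
    have h2 := hbd s hs0 K
    have h3 := hbd s hs0 1
    have h4 := hbd s hs0 (K+1)
    have h5 : lam * w K s ≤ 1 := by nlinarith [h2.1, h2.2]
    rw [abs_le]; constructor <;> simp only [hD] <;> nlinarith
  have hDmeas : ∀ K, MeasureTheory.AEStronglyMeasurable (D K) μr := by
    intro K
    exact ((aemeasurable_const.sub (hfmeas K)).sub
      ((hmeas 1).sub (hmeas (K+1)))).aestronglyMeasurable
  -- interval integrability of D K
  have huIoc : Set.uIoc (0:ℝ) t = Set.Ioc 0 t := Set.uIoc_of_le ht
  have hDint : ∀ K, IntervalIntegrable (D K) MeasureTheory.volume 0 t := by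
    intro K
    apply IntervalIntegrable.mono_fun (f := fun _ => (4:ℝ))
      (intervalIntegrable_const)
    · rw [huIoc]; exact hDmeas K
    · rw [huIoc, Filter.EventuallyLE]
      rw [MeasureTheory.ae_restrict_iff' measurableSet_Ioc]
      filter_upwards with s hs
      simp only [Real.norm_eq_abs]
      rw [abs_of_nonneg (by norm_num : (0:ℝ) ≤ 4)]
      exact hDbd s hs K
  -- FTC for each K
  have hFTC : ∀ K, ∫ s in (0:ℝ)..t, D K s = S K t - S K 0 := by
    intro K
    exact intervalIntegral.integral_eq_sub_of_hasDeriv_right_of_le ht (hScont K)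
      (hSderiv K) (hDint K)
  -- dominated convergence: ∫ D K → ∫ (lam - w 1 s)
  have hw1int : IntervalIntegrable (fun s => w 1 s) MeasureTheory.volume 0 t := by
    apply ContinuousOn.intervalIntegrable
    rw [Set.uIcc_of_le ht]
    exact hcont 1 le_rfl
  have hDtendsto : Tendsto (fun K => ∫ s in (0:ℝ)..t, D K s) atTop
      (nhds (∫ s in (0:ℝ)..t, (lam - w 1 s))) := by
    have h1 : ∀ K, ∫ s in (0:ℝ)..t, D K s = ∫ s in Set.Ioc (0:ℝ) t, D K s := by
      intro K; rw [intervalIntegral.integral_of_le ht]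
    have h2 : ∫ s in (0:ℝ)..t, (lam - w 1 s) = ∫ s in Set.Ioc (0:ℝ) t, (lam - w 1 s) := by
      rw [intervalIntegral.integral_of_le ht]
    simp only [h1, h2]
    apply MeasureTheory.tendsto_integral_of_dominated_convergence (fun _ => (4:ℝ))
      hDmeas
    · rw [MeasureTheory.integrable_const_iff]
      right
      exact ⟨by simp [hμr, Real.volume_Ioc]⟩
    · intro K
      rw [MeasureTheory.ae_restrict_iff' measurableSet_Ioc]
      filter_upwards with s hs
      simp only [Real.norm_eq_abs]
      exact hDbd s hs K
    · rw [MeasureTheory.ae_restrict_iff' measurableSet_Ioc]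
      filter_upwards with s hs
      have hs0 : (0:ℝ) ≤ s := hs.1.le
      -- w (K+1) s → 0 and f K s → 0
      have htail : Tendsto (fun K => w (K+1) s) atTop (nhds 0) :=
        (hsum s hs0).tendsto_atTop_zero
      have htail' : Tendsto (fun K => w K s) atTop (nhds 0) :=
        (Filter.tendsto_add_atTop_iff_nat 1).mp htail
      have hft : Tendsto (fun K => f K s) atTop (nhds 0) := by
        apply squeeze_zero (fun K => (hfbd s hs0 K).1) (fun K => (hfbd s hs0 K).2)
        simpa using htail'.const_mul lam
      have : Tendsto (fun K => lam - f K s - (w 1 s - w (K+1) s)) atTop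
          (nhds (lam - 0 - (w 1 s - 0))) :=
        (tendsto_const_nhds.sub hft).sub (tendsto_const_nhds.sub htail)
      simpa using this
  -- partial sums converge
  have hStend_t : Tendsto (fun K => S K t) atTop (nhds (∑' k : ℕ, w (k+1) t)) :=
    (hsum t ht).hasSum.tendsto_sum_nat
  have hStend_0 : Tendsto (fun K => S K 0) atTop (nhds (∑' k : ℕ, w (k+1) 0)) :=
    (hsum 0 le_rfl).hasSum.tendsto_sum_nat
  -- identify limits
  have hlim : (∑' k : ℕ, w (k+1) t) - (∑' k : ℕ, w (k+1) 0)
      = ∫ s in (0:ℝ)..t, (lam - w 1 s) := by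
    apply tendsto_nhds_unique (f := fun K => S K t - S K 0) (l := atTop)
    · exact hStend_t.sub hStend_0
    · have : (fun K => S K t - S K 0) = fun K => ∫ s in (0:ℝ)..t, D K s := by
        funext K; rw [hFTC K]
      rw [this]
      exact hDtendsto
  have hintval : ∫ s in (0:ℝ)..t, (lam - w 1 s) = lam * t - ∫ s in (0:ℝ)..t, w 1 s := by
    rw [intervalIntegral.integral_sub intervalIntegrable_const hw1int,
      intervalIntegral.integral_const]
    simp [mul_comm]
  have heq : (∑' k : ℕ, w (k+1) t) =
      (∑' k : ℕ, w (k+1) 0) + lam * t - ∫ s in (0:ℝ)..t, w 1 s := by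
    rw [hintval] at hlim; linarith
  refine ⟨hsum t ht, ?_, heq⟩
  have hintnn : 0 ≤ ∫ s in (0:ℝ)..t, w 1 s :=
    intervalIntegral.integral_nonneg ht (fun u hu => (hbd u hu.1 1).1)
  linarith

end
end

section
/- Fix j ≥ 1 and define the shifted sequence a^{(j)} by a^{(j)}_k = a_{max(k−j,0)} for k ≥ 0 (so a^{(j)}_k = 1 for k ≤ j). Then: (i) a^{(j)} is a fixed point of the modified dynamics, i.e. v_k(a^{(j)}) + (a^{(j)}_j − a^{(j)}_{j+1})·1_{{k=j}} = 0 for every k ≥ 1; and (ii) if (z(t))_{t≥0} is a solution of the original equation ż = v(z) in D with z_k(0) ≤ a^{(j)}_k for all k ≥ 1, then z_k(t) ≤ a^{(j)}_k for all k ≥ 1 and all t ≥ 0. -/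
open Filter

noncomputable section

namespace St17
open Set Nat Topology Filter

/-- denominator of a mu-factor -/
def dnm (n : ℕ) (x y : ℝ) : ℝ := 1 - (n : ℝ) * (x - y) * y ^ (n - 1)

/-- abstract mu-factor -/
def fac (n : ℕ) (x y : ℝ) : ℝ := if y ^ n = 0 ∧ dnm n x y = 0 then 1 else y ^ n / dnm n x y

lemma pow_diff_le (n : ℕ) {u v : ℝ} (hu : 0 ≤ u) (huv : u ≤ v) (hv : v ≤ 1) :
    v ^ n - u ^ n ≤ n * (v - u) := by
  induction n with
  | zero => simp
  | succ m ih =>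
    have h1 : v ^ m ≤ 1 := pow_le_one₀ (le_trans hu huv) hv
    have h2 : 0 ≤ u ^ m := pow_nonneg hu m
    have h3 : u ^ m ≤ v ^ m := pow_le_pow_left₀ hu huv m
    have : v ^ (m+1) - u ^ (m+1) = v * (v ^ m - u ^ m) + u ^ m * (v - u) := by ring
    rw [this]
    have hv0 : 0 ≤ v := le_trans hu huv
    push_cast
    nlinarith [ih, sub_nonneg.mpr huv, sub_nonneg.mpr h3]

lemma pow_diff_ge (N : ℕ) {u v : ℝ} (hu : 0 ≤ u) (huv : u ≤ v) (hv : v ≤ 1) :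
    (N + 1 : ℝ) * (u ^ N * v ^ N) * (v - u) ≤ v ^ (N + 1) - u ^ (N + 1) := by
  induction N with
  | zero => simp
  | succ m ih =>
    have hv0 : 0 ≤ v := le_trans hu huv
    have h3 : u ^ m ≤ v ^ m := pow_le_pow_left₀ hu huv m
    have h2 : 0 ≤ u ^ m := pow_nonneg hu m
    have h4 : 0 ≤ v ^ m := pow_nonneg hv0 m
    have hum1 : u ^ (m+1) ≤ u ^ m := pow_le_pow_of_le_one hu (le_trans huv hv) (by omega)
    have hvm1 : v ^ (m+1) ≤ v ^ m := pow_le_pow_of_le_one hv0 hv (by omega)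
    have key : v ^ (m+2) - u ^ (m+2) = v * (v ^ (m+1) - u ^ (m+1)) + u ^ (m+1) * (v - u) := by
      ring
    have h5 : 0 ≤ v - u := sub_nonneg.mpr huv
    have h6 : 0 ≤ u ^ (m+1) := pow_nonneg hu _
    have h7 : 0 ≤ v ^ (m+1) := pow_nonneg hv0 _
    -- v * ((m+1) u^m v^m (v-u)) = (m+1) u^m v^(m+1) (v-u) ≥ (m+1) u^(m+1) v^(m+1) (v-u)
    have step1 : (m + 1 : ℝ) * (u ^ m * v ^ m) * (v - u) * v ≤ v * (v ^ (m+1) - u ^ (m+1)) := by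
      have := mul_le_mul_of_nonneg_left ih hv0
      nlinarith [this]
    have step2 : (m + 2 : ℝ) * (u ^ (m+1) * v ^ (m+1)) * (v - u)
        ≤ (m + 1 : ℝ) * (u ^ m * v ^ m) * (v - u) * v + u ^ (m+1) * (v - u) := by
      have e1 : (m + 1 : ℝ) * (u ^ m * v ^ m) * (v - u) * v
          = (m + 1 : ℝ) * (u ^ m * v ^ (m+1)) * (v - u) := by ring
      rw [e1]
      have t1 : (m + 1 : ℝ) * (u ^ (m+1) * v ^ (m+1)) * (v - u)
          ≤ (m + 1 : ℝ) * (u ^ m * v ^ (m+1)) * (v - u) := by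
        have h8 : u ^ (m+1) * v ^ (m+1) ≤ u ^ m * v ^ (m+1) :=
          mul_le_mul_of_nonneg_right hum1 h7
        exact mul_le_mul_of_nonneg_right (mul_le_mul_of_nonneg_left h8 (by positivity)) h5
      have t2 : u ^ (m+1) * v ^ (m+1) * (v - u) ≤ u ^ (m+1) * (v - u) := by
        have h9 : u ^ (m+1) * v ^ (m+1) ≤ u ^ (m+1) := by
          nlinarith [pow_le_one₀ hv0 hv (n := m+1), pow_nonneg hu (m+1)]
        exact mul_le_mul_of_nonneg_right h9 h5
      nlinarith [t1, t2]
    push_cast at *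
    nlinarith [step1, step2]

lemma pow_diff_ge2 (N : ℕ) {u v : ℝ} (hu : 0 ≤ u) (huv : u ≤ v) :
    (N + 1 : ℝ) * u ^ N * (v - u) ≤ v ^ (N + 1) - u ^ (N + 1) := by
  induction N with
  | zero => simp
  | succ m ih =>
    have hv0 : 0 ≤ v := le_trans hu huv
    have h3 : u ^ m ≤ v ^ m := pow_le_pow_left₀ hu huv m
    have h5 : 0 ≤ v - u := sub_nonneg.mpr huv
    have h2 : 0 ≤ u ^ m := pow_nonneg hu m
    have key : v ^ (m+2) - u ^ (m+2) = v * (v ^ (m+1) - u ^ (m+1)) + u ^ (m+1) * (v - u) := by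
      ring
    have step1 : v * ((m + 1 : ℝ) * u ^ m * (v - u)) ≤ v * (v ^ (m+1) - u ^ (m+1)) :=
      mul_le_mul_of_nonneg_left ih hv0
    have step2 : (m + 2 : ℝ) * u ^ (m+1) * (v - u)
        ≤ v * ((m + 1 : ℝ) * u ^ m * (v - u)) + u ^ (m+1) * (v - u) := by
      have huv' : u * u ^ m ≤ v * u ^ m := mul_le_mul_of_nonneg_right huv h2
      have h10 : u ^ (m+1) * (v-u) ≤ v * u ^ m * (v-u) := by
        have : u ^ (m+1) = u * u ^ m := by ring
        rw [this]; exact mul_le_mul_of_nonneg_right huv' h5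
      have h11 : (m+1:ℝ) * (u ^ (m+1) * (v-u)) ≤ (m+1:ℝ) * (v * u ^ m * (v-u)) :=
        mul_le_mul_of_nonneg_left h10 (by positivity)
      nlinarith [h11]
    push_cast at *
    nlinarith [step1, step2]

lemma K1' (m : ℕ) {y : ℝ} (h0 : 0 ≤ y) (h1 : y ≤ 1) :
    y ^ m * ((m + 1 : ℝ) - m * y) ≤ 1 := by
  induction m with
  | zero => simp
  | succ k ih =>
    have e : y ^ (k+1) * ((k + 2 : ℝ) - (k+1) * y) ≤ y ^ k * ((k + 1 : ℝ) - k * y) := by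
      have : y ^ (k+1) * ((k + 2 : ℝ) - (k+1) * y)
          = y ^ k * ((k + 1 : ℝ) - k * y) - y ^ k * ((k+1:ℝ) * (1 - y) ^ 2) := by ring
      rw [this]
      have : 0 ≤ y ^ k * ((k+1:ℝ) * (1 - y) ^ 2) := by positivity
      linarith
    push_cast at *
    linarith

/-- key inequality: `y^n + n (x-y) y^(n-1) ≤ 1`, i.e. `y^n ≤ dnm n x y`. -/
lemma pow_le_dnm (N : ℕ) {x y : ℝ} (h0 : 0 ≤ y) (hyx : y ≤ x) (hx : x ≤ 1) :
    y ^ (N + 1) ≤ dnm (N + 1) x y := by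
  have h1 : y ≤ 1 := le_trans hyx hx
  have hN : 0 ≤ y ^ N := pow_nonneg h0 N
  have key : y ^ (N+1) + (N + 1 : ℝ) * (x - y) * y ^ N ≤ 1 := by
    have step : y ^ (N+1) + (N + 1 : ℝ) * (x - y) * y ^ N
        ≤ y ^ N * ((N + 1 : ℝ) - N * y) := by
      have : y ^ (N+1) + (N + 1 : ℝ) * (x - y) * y ^ N
          = y ^ N * (y + (N+1:ℝ)*(x - y)) := by ring
      rw [this]
      have : y + (N+1:ℝ)*(x-y) ≤ (N + 1 : ℝ) - N * y := by nlinarith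
      exact mul_le_mul_of_nonneg_left this hN
    exact le_trans step (K1' N h0 h1)
  simp only [dnm, Nat.add_sub_cancel]
  push_cast
  linarith

lemma dnm_succ (N : ℕ) (x y : ℝ) :
    dnm (N + 1) x y = 1 - (N + 1 : ℝ) * (x - y) * y ^ N := by
  simp only [dnm, Nat.add_sub_cancel]; push_cast; ring

lemma dnm_nonneg (N : ℕ) {x y : ℝ} (h0 : 0 ≤ y) (hyx : y ≤ x) (hx : x ≤ 1) :
    0 ≤ dnm (N + 1) x y :=
  le_trans (pow_nonneg h0 _) (pow_le_dnm N h0 hyx hx)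

lemma dnm_pos (N : ℕ) {x y : ℝ} (h0 : 0 < y) (hyx : y ≤ x) (hx : x ≤ 1) :
    0 < dnm (N + 1) x y :=
  lt_of_lt_of_le (pow_pos h0 _) (pow_le_dnm N h0.le hyx hx)

lemma fac_of_dnm_pos {n : ℕ} {x y : ℝ} (h : 0 < dnm n x y) :
    fac n x y = y ^ n / dnm n x y := by
  rw [fac, if_neg]; rintro ⟨-, h2⟩; exact absurd h2 (ne_of_gt h)

lemma fac_nonneg (N : ℕ) {x y : ℝ} (h0 : 0 ≤ y) (hyx : y ≤ x) (hx : x ≤ 1) :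
    0 ≤ fac (N + 1) x y := by
  rw [fac]; split
  · exact zero_le_one
  · exact div_nonneg (pow_nonneg h0 _) (dnm_nonneg N h0 hyx hx)

lemma fac_le_one (N : ℕ) {x y : ℝ} (h0 : 0 ≤ y) (hyx : y ≤ x) (hx : x ≤ 1) :
    fac (N + 1) x y ≤ 1 := by
  rw [fac]; split
  · exact le_refl 1
  · rename_i h
    rcases eq_or_lt_of_le (dnm_nonneg N h0 hyx hx) with hd | hd
    · exact absurd ⟨le_antisymm (hd ▸ pow_le_dnm N h0 hyx hx) (pow_nonneg h0 _), hd.symm⟩ h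
    · exact div_le_one_of_le₀ (pow_le_dnm N h0 hyx hx) hd.le

lemma fac_zero_right (N : ℕ) (x : ℝ) :
    fac (N + 1) x 0 = if (N = 0 ∧ x = 1) then 1 else 0 := by
  have hz : (0:ℝ) ^ (N+1) = 0 := by simp
  rcases Nat.eq_zero_or_pos N with rfl | hN
  · by_cases hx : x = 1
    · subst hx
      rw [fac, if_pos]; · simp
      constructor; · simp
      · rw [dnm_succ]; ring
    · rw [if_neg (by tauto), fac, if_neg]
      · simp
      · rintro ⟨-, h2⟩
        rw [dnm_succ] at h2; simp at h2
        exact hx (by linarith)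
  · rw [if_neg (by omega), fac, if_neg]
    · simp
    · rintro ⟨-, h2⟩
      rw [dnm_succ] at h2
      rw [zero_pow (by omega)] at h2
      simp at h2
lemma fac_mono_x (N : ℕ) {x x' y : ℝ} (h0 : 0 ≤ y) (hyx : y ≤ x) (hxx : x ≤ x') (hx : x' ≤ 1) :
    fac (N + 1) x y ≤ fac (N + 1) x' y := by
  rcases eq_or_lt_of_le h0 with h0' | h0'
  · -- y = 0
    subst h0'
    rw [fac_zero_right, fac_zero_right]
    split
    · rename_i h; rw [if_pos ⟨h.1, le_antisymm hx (h.2 ▸ hxx)⟩]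
    · split; · exact zero_le_one
      · exact le_refl 0
  · have hd : 0 < dnm (N+1) x y := dnm_pos N h0' hyx (le_trans hxx hx)
    have hd' : 0 < dnm (N+1) x' y := dnm_pos N h0' (le_trans hyx hxx) hx
    rw [fac_of_dnm_pos hd, fac_of_dnm_pos hd']
    apply div_le_div_of_nonneg_left (pow_nonneg h0 _) hd'
    rw [dnm_succ, dnm_succ]
    have : 0 ≤ y ^ N := pow_nonneg h0 _
    nlinarith [mul_le_mul_of_nonneg_right (sub_le_sub_right hxx y) this]

lemma fac_mono_y (N : ℕ) {x y y' : ℝ} (h0 : 0 ≤ y) (hyy : y ≤ y') (hyx : y' ≤ x) (hx : x ≤ 1) :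
    fac (N + 1) x y ≤ fac (N + 1) x y' := by
  rcases eq_or_lt_of_le (le_trans h0 hyy) with h1 | h1
  · -- y' = 0 so y = 0
    have : y = 0 := le_antisymm (h1 ▸ hyy) h0
    rw [this, ← h1]
  · rcases eq_or_lt_of_le h0 with h0' | h0'
    · -- y = 0 < y'
      subst h0'
      rw [fac_zero_right]
      split
      · rename_i h
        obtain ⟨rfl, rfl⟩ := h
        have hdy : dnm (0+1) (1:ℝ) y' = y' := by rw [dnm_succ]; push_cast; ring
        have hd' : 0 < dnm (0+1) (1:ℝ) y' := by rw [hdy]; exact h1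
        rw [fac_of_dnm_pos hd', hdy, pow_one, div_self (ne_of_gt h1)]
      · exact fac_nonneg N h1.le hyx hx
    · have hd : 0 < dnm (N+1) x y := dnm_pos N h0' (le_trans hyy hyx) hx
      have hd' : 0 < dnm (N+1) x y' := dnm_pos N h1 hyx hx
      rw [fac_of_dnm_pos hd, fac_of_dnm_pos hd']
      rw [div_le_div_iff₀ hd hd']
      rw [dnm_succ, dnm_succ]
      -- key: y'^(N+1) - y^(N+1) ≥ (N+1) x y^N y'^N (y'-y)
      have key : (N + 1 : ℝ) * (y ^ N * y' ^ N) * (y' - y) * x ≤ y' ^ (N+1) - y ^ (N+1) := by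
        have h2 := pow_diff_ge N h0 hyy (le_trans hyx hx)
        have hA : 0 ≤ (N + 1 : ℝ) * (y ^ N * y' ^ N) * (y' - y) := by
          apply mul_nonneg (mul_nonneg (by positivity)
            (mul_nonneg (pow_nonneg h0 _) (pow_nonneg h1.le _))) (sub_nonneg.mpr hyy)
        have h3 : (N + 1 : ℝ) * (y ^ N * y' ^ N) * (y' - y) * x
            ≤ (N + 1 : ℝ) * (y ^ N * y' ^ N) * (y' - y) := by
          nlinarith [mul_le_mul_of_nonneg_left hx hA]
        exact le_trans h3 h2
      rw [pow_succ y N, pow_succ y' N] at key ⊢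
      nlinarith [key]

def Rtil (n : ℕ) (s c : ℝ) : ℝ := s ^ n - c ^ n * fac n s c

lemma Rtil_nonneg (N : ℕ) {s c : ℝ} (h0 : 0 ≤ c) (hcs : c ≤ s) (hs : s ≤ 1) :
    0 ≤ Rtil (N + 1) s c := by
  have h1 : c ^ (N+1) * fac (N+1) s c ≤ c ^ (N+1) * 1 :=
    mul_le_mul_of_nonneg_left (fac_le_one N h0 hcs hs) (pow_nonneg h0 _)
  have h2 : c ^ (N+1) ≤ s ^ (N+1) := pow_le_pow_left₀ h0 hcs _
  simp only [Rtil]; nlinarith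

lemma Rtil_le_one (N : ℕ) {s c : ℝ} (h0 : 0 ≤ c) (hcs : c ≤ s) (hs : s ≤ 1) :
    Rtil (N + 1) s c ≤ 1 := by
  have h1 : 0 ≤ c ^ (N+1) * fac (N+1) s c :=
    mul_nonneg (pow_nonneg h0 _) (fac_nonneg N h0 hcs hs)
  have h2 : s ^ (N+1) ≤ 1 := pow_le_one₀ (le_trans h0 hcs) hs
  simp only [Rtil]; linarith

lemma Rtil_mono (N : ℕ) {s s' c : ℝ} (h0 : 0 ≤ c) (hcs : c ≤ s) (hss : s ≤ s') (hs : s' ≤ 1) :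
    Rtil (N + 1) s c ≤ Rtil (N + 1) s' c := by
  rcases eq_or_lt_of_le h0 with h0' | h0'
  · subst h0'
    simp only [Rtil, zero_pow (Nat.succ_ne_zero N), zero_mul, sub_zero]
    exact pow_le_pow_left₀ (le_trans (le_refl 0) hcs) hss _
  · have hd : 0 < dnm (N+1) s c := dnm_pos N h0' hcs (le_trans hss hs)
    have hd' : 0 < dnm (N+1) s' c := dnm_pos N h0' (le_trans hcs hss) hs
    simp only [Rtil, fac_of_dnm_pos hd, fac_of_dnm_pos hd']
    have hcn : (0:ℝ) < c ^ (N+1) := pow_pos h0' _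
    have hcd : c ^ (N+1) ≤ dnm (N+1) s c := pow_le_dnm N h0 hcs (le_trans hss hs)
    have hcd' : c ^ (N+1) ≤ dnm (N+1) s' c := pow_le_dnm N h0 (le_trans hcs hss) hs
    -- difference of the fractions
    have e1 : c ^ (N+1) * (c ^ (N+1) / dnm (N+1) s' c) - c ^ (N+1) * (c ^ (N+1) / dnm (N+1) s c)
        = c ^ (N+1) * c ^ (N+1) * ((dnm (N+1) s c - dnm (N+1) s' c) / (dnm (N+1) s c * dnm (N+1) s' c)) := by
      field_simp
    have e2 : dnm (N+1) s c - dnm (N+1) s' c = (N+1 : ℝ) * (s' - s) * c ^ N := by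
      rw [dnm_succ, dnm_succ]; ring
    have hfrac : c ^ (N+1) * c ^ (N+1) * ((dnm (N+1) s c - dnm (N+1) s' c) / (dnm (N+1) s c * dnm (N+1) s' c))
        ≤ (N+1 : ℝ) * (s' - s) * c ^ N := by
      rw [e2]
      have hnum : 0 ≤ (N+1 : ℝ) * (s' - s) * c ^ N := by
        have : 0 ≤ s' - s := sub_nonneg.mpr hss
        positivity
      have hprod : c ^ (N+1) * c ^ (N+1) ≤ dnm (N+1) s c * dnm (N+1) s' c :=
        mul_le_mul hcd hcd' (le_of_lt hcn) (le_of_lt hd)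
      have hq : c ^ (N+1) * c ^ (N+1) / (dnm (N+1) s c * dnm (N+1) s' c) ≤ 1 :=
        div_le_one_of_le₀ hprod (by positivity)
      have e3 : c ^ (N+1) * c ^ (N+1) * (((N+1 : ℝ) * (s' - s) * c ^ N) / (dnm (N+1) s c * dnm (N+1) s' c))
          = ((N+1 : ℝ) * (s' - s) * c ^ N) * (c ^ (N+1) * c ^ (N+1) / (dnm (N+1) s c * dnm (N+1) s' c)) := by
        ring
      rw [e3]
      exact mul_le_of_le_one_right hnum hq
    have hfin : (N+1 : ℝ) * (s' - s) * c ^ N ≤ s' ^ (N+1) - s ^ (N+1) := by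
      have h6 : (N+1 : ℝ) * s ^ N * (s' - s) ≤ s' ^ (N+1) - s ^ (N+1) :=
        pow_diff_ge2 N (le_trans h0 hcs) hss
      have h7 : c ^ N ≤ s ^ N := pow_le_pow_left₀ h0 hcs _
      have hss0 : 0 ≤ s' - s := sub_nonneg.mpr hss
      have h8 : (N+1:ℝ) * (s' - s) * c ^ N ≤ (N+1:ℝ) * (s' - s) * s ^ N :=
        mul_le_mul_of_nonneg_left h7 (by positivity)
      nlinarith [h8, h6]
    linarith [e1, hfrac, hfin]

/-- quadratic Bernoulli: `2 (1+t)^N ≥ 2 + 2 N t + N (N-1) t²` for `t ≥ 0`. -/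
lemma QB (N : ℕ) {t : ℝ} (ht : 0 ≤ t) :
    2 + 2 * N * t + N * ((N : ℝ) - 1) * t ^ 2 ≤ 2 * (1 + t) ^ N := by
  induction N with
  | zero => norm_num
  | succ m ih =>
    have h1 : (0:ℝ) ≤ (1 + t) ^ m := by positivity
    have h2 : 2 * (1 + t) ^ (m+1) = (2 * (1 + t) ^ m) * (1 + t) := by ring
    rw [h2]
    have h3 : (2 + 2 * m * t + m * ((m : ℝ) - 1) * t ^ 2) * (1 + t)
        ≤ (2 * (1 + t) ^ m) * (1 + t) := by
      apply mul_le_mul_of_nonneg_right ih (by linarith)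
    have hm : 0 ≤ (m:ℝ) * ((m:ℝ) - 1) := by
      rcases Nat.eq_zero_or_pos m with rfl | hm1
      · norm_num
      · have : (1:ℝ) ≤ (m:ℝ) := by exact_mod_cast hm1
        nlinarith
    push_cast
    nlinarith [h3, mul_nonneg hm (pow_nonneg ht 3)]

set_option maxHeartbeats 1000000 in
/-- for `n ≥ 2` the coefficient `p` is at most `3/4`. -/
lemma p_le_34 (N : ℕ) (hN : 1 ≤ N) {x y : ℝ} (h0 : 0 ≤ y) (hyx : y ≤ x) (hx : x ≤ 1) :
    (N + 1 : ℝ) * (x - y) * y ^ N ≤ 3 / 4 := by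
  have hy1 : y ≤ 1 := le_trans hyx hx
  have hyN : 0 ≤ y ^ N := pow_nonneg h0 N
  have step0 : (N + 1 : ℝ) * (x - y) * y ^ N ≤ (N + 1 : ℝ) * (1 - y) * y ^ N := by
    have : x - y ≤ 1 - y := by linarith
    have h1 : (N + 1 : ℝ) * (x - y) ≤ (N + 1 : ℝ) * (1 - y) :=
      mul_le_mul_of_nonneg_left this (by positivity)
    exact mul_le_mul_of_nonneg_right h1 hyN
  refine le_trans step0 ?_
  rcases eq_or_lt_of_le hN with h1 | h1
  · -- N = 1
    rw [← h1]; push_cast; nlinarith [sq_nonneg (1 - 2*y)]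
  · rcases eq_or_lt_of_le (Nat.succ_le_of_lt h1) with h2 | h2
    · -- N = 2
      rw [← h2]; push_cast
      have h5y : (0:ℝ) ≤ 5*y^2 - 7*y + 3 := by nlinarith [sq_nonneg (y - 7/10)]
      nlinarith [mul_nonneg h0 h5y, pow_nonneg (sub_nonneg.mpr hy1) 3]
    · -- N ≥ 3
      have hN3 : (3:ℝ) ≤ N := by exact_mod_cast Nat.succ_le_of_lt h2
      obtain ⟨t, hty⟩ : ∃ t:ℝ, t = 1 - y := ⟨_, rfl⟩
      obtain ⟨D, hD⟩ : ∃ D:ℝ, D = 1 + N * t + (N * ((N:ℝ) - 1) / 2) * t ^ 2 := ⟨_, rfl⟩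
      have hyt : y = 1 - t := by rw [hty]; ring
      have ht0 : 0 ≤ t := by rw [hty]; linarith
      have ht1 : t ≤ 1 := by rw [hty]; linarith
      have hNN : 0 ≤ (N:ℝ) * ((N:ℝ) - 1) := by nlinarith
      have h1a : 0 ≤ (N:ℝ) * t := by positivity
      have h1b : 0 ≤ (N:ℝ) * ((N:ℝ) - 1) / 2 * t ^ 2 := by positivity
      have hD1 : (1:ℝ) ≤ D := by rw [hD]; linarith
      have hqb := QB N ht0
      have hDle : D ≤ (1 + t) ^ N := by rw [hD]; linarith
      have h1' : y ^ N * D ≤ 1 := by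
        have e : y * (1 + t) = 1 - t ^ 2 := by rw [hyt]; ring
        have hyD : y ^ N * D ≤ y ^ N * (1 + t) ^ N := mul_le_mul_of_nonneg_left hDle hyN
        have e2 : y ^ N * (1 + t) ^ N = (1 - t ^ 2) ^ N := by rw [← mul_pow, e]
        rw [e2] at hyD
        refine le_trans hyD (pow_le_one₀ (by nlinarith) (by nlinarith))
      have h2' : 4 * ((N + 1 : ℝ) * t) ≤ 3 * D := by
        obtain ⟨G, hG⟩ : ∃ G:ℝ, G = 3 - ((N:ℝ)+4)*t + (3/2)*(N:ℝ)*((N:ℝ)-1)*t^2 := ⟨_, rfl⟩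
        have hpos : 0 ≤ 17*(N:ℝ)^2 - 26*(N:ℝ) - 16 := by nlinarith
        have hGr : 6*(N:ℝ)*((N:ℝ)-1)*G
            = (3*(N:ℝ)*((N:ℝ)-1)*t - ((N:ℝ)+4))^2 + (17*(N:ℝ)^2 - 26*(N:ℝ) - 16) := by
          rw [hG]; ring
        have h6N : 0 < 6*(N:ℝ)*((N:ℝ)-1) := by nlinarith
        have hRHS : 0 ≤ (3*(N:ℝ)*((N:ℝ)-1)*t - ((N:ℝ)+4))^2 + (17*(N:ℝ)^2 - 26*(N:ℝ) - 16) :=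
          add_nonneg (sq_nonneg _) hpos
        have hmul : 0 ≤ 6*(N:ℝ)*((N:ℝ)-1)*G := by rw [hGr]; exact hRHS
        have hG0 : 0 ≤ G := by
          have h00 : 6*(N:ℝ)*((N:ℝ)-1) * 0 ≤ 6*(N:ℝ)*((N:ℝ)-1) * G := by
            simpa using hmul
          exact (mul_le_mul_iff_right₀ h6N).mp h00
        rw [hG] at hG0
        rw [hD]
        linarith
      have hB0 : 0 ≤ (N + 1 : ℝ) * t := by positivity
      have hgoal : (N + 1 : ℝ) * (1 - y) * y ^ N = ((N + 1 : ℝ) * t) * y ^ N := by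
        rw [hyt]; ring
      rw [hgoal]
      rcases eq_or_lt_of_le hB0 with hB' | hB'
      · rw [← hB', zero_mul]; norm_num
      · have hAD : (((N + 1 : ℝ) * t) * y ^ N) * D ≤ (N + 1 : ℝ) * t := by
          calc (((N + 1 : ℝ) * t) * y ^ N) * D = ((N + 1 : ℝ) * t) * (y ^ N * D) := by ring
          _ ≤ ((N + 1 : ℝ) * t) * 1 := mul_le_mul_of_nonneg_left h1' hB0
          _ = (N + 1 : ℝ) * t := mul_one _
        have hDB : (4/3) * ((N + 1 : ℝ) * t) ≤ D := by linarith
        have h4 : (((N + 1 : ℝ) * t) * y ^ N) * ((4/3) * ((N + 1 : ℝ) * t)) ≤ (((N + 1 : ℝ) * t) * y ^ N) * D := by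
          apply mul_le_mul_of_nonneg_left hDB
          positivity
        nlinarith [h4, hAD, hB']

lemma dnm_ge_quarter (N : ℕ) (hN : 1 ≤ N) {x y : ℝ} (h0 : 0 ≤ y) (hyx : y ≤ x) (hx : x ≤ 1) :
    1 / 4 ≤ dnm (N + 1) x y := by
  rw [dnm_succ]
  have := p_le_34 N hN h0 hyx hx
  linarith

lemma fac_lip_y (N : ℕ) {x y y' d₀ : ℝ} (h0 : 0 ≤ y') (hyy : y' ≤ y) (hyx : y ≤ x) (hx : x ≤ 1)
    (hd0 : 0 < d₀) (hd : d₀ ≤ dnm (N+1) x y) (hd' : d₀ ≤ dnm (N+1) x y') :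
    fac (N+1) x y - fac (N+1) x y' ≤ (N + 1 : ℝ) * (y - y') / d₀ ^ 2 := by
  have hdp : 0 < dnm (N+1) x y := lt_of_lt_of_le hd0 hd
  have hdp' : 0 < dnm (N+1) x y' := lt_of_lt_of_le hd0 hd'
  rw [fac_of_dnm_pos hdp, fac_of_dnm_pos hdp']
  have hy1 : y ≤ 1 := le_trans hyx hx
  set d := dnm (N+1) x y
  set d' := dnm (N+1) x y'
  have e : y ^ (N+1) / d - y' ^ (N+1) / d'
      = (y ^ (N+1) * d' - y' ^ (N+1) * d) / (d * d') := by
    field_simp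
  have enum : y ^ (N+1) * d' - y' ^ (N+1) * d
      = (y ^ (N+1) - y' ^ (N+1)) - (N+1 : ℝ) * x * (y ^ N * y' ^ N) * (y - y') := by
    show y ^ (N+1) * dnm (N+1) x y' - y' ^ (N+1) * dnm (N+1) x y = _
    rw [dnm_succ, dnm_succ, pow_succ y N, pow_succ y' N]; ring
  have hnum0 : 0 ≤ y ^ (N+1) * d' - y' ^ (N+1) * d := by
    rw [enum]
    have h2 := pow_diff_ge N h0 hyy hy1
    have hA : 0 ≤ (N + 1 : ℝ) * (y' ^ N * y ^ N) * (y - y') :=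
      mul_nonneg (mul_nonneg (by positivity)
        (mul_nonneg (pow_nonneg h0 _) (pow_nonneg (le_trans h0 hyy) _))) (by linarith)
    have h3 : (N+1 : ℝ) * x * (y ^ N * y' ^ N) * (y - y')
        ≤ (N + 1 : ℝ) * (y' ^ N * y ^ N) * (y - y') := by
      nlinarith [mul_le_mul_of_nonneg_left hx hA]
    nlinarith [h2, h3]
  have hnumle : y ^ (N+1) * d' - y' ^ (N+1) * d ≤ (N + 1 : ℝ) * (y - y') := by
    rw [enum]
    have h2 := pow_diff_le (N+1) h0 hyy hy1
    have hA : 0 ≤ (N + 1 : ℝ) * x * (y ^ N * y' ^ N) * (y - y') := by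
      apply mul_nonneg (mul_nonneg (mul_nonneg (by positivity) (le_trans h0 (le_trans hyy hyx)))
        (mul_nonneg (pow_nonneg (le_trans h0 hyy) _) (pow_nonneg h0 _)))
      linarith
    push_cast at h2 ⊢
    linarith
  rw [e]
  have hdd : d₀ ^ 2 ≤ d * d' := by nlinarith
  calc (y ^ (N+1) * d' - y' ^ (N+1) * d) / (d * d')
      ≤ (y ^ (N+1) * d' - y' ^ (N+1) * d) / d₀ ^ 2 := by
        apply div_le_div_of_nonneg_left hnum0 (by positivity) hdd
    _ ≤ (N + 1 : ℝ) * (y - y') / d₀ ^ 2 := by gcongr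

lemma fac_lip_x (N : ℕ) {x x' y d₀ : ℝ} (h0 : 0 ≤ y) (hyx : y ≤ x') (hxx : x' ≤ x) (hx : x ≤ 1)
    (hd0 : 0 < d₀) (hd : d₀ ≤ dnm (N+1) x y) (hd'' : d₀ ≤ dnm (N+1) x' y) :
    fac (N+1) x y - fac (N+1) x' y ≤ (N + 1 : ℝ) * (x - x') / d₀ ^ 2 := by
  have hdp : 0 < dnm (N+1) x y := lt_of_lt_of_le hd0 hd
  have hdp' : 0 < dnm (N+1) x' y := lt_of_lt_of_le hd0 hd''
  rw [fac_of_dnm_pos hdp, fac_of_dnm_pos hdp']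
  have hy1 : y ≤ 1 := le_trans (le_trans hyx hxx) hx
  set d := dnm (N+1) x y
  set d'' := dnm (N+1) x' y
  have e : y ^ (N+1) / d - y ^ (N+1) / d''
      = (y ^ (N+1) * (d'' - d)) / (d * d'') := by
    field_simp
  have ed : d'' - d = (N + 1 : ℝ) * (x - x') * y ^ N := by
    show dnm (N+1) x' y - dnm (N+1) x y = _
    rw [dnm_succ, dnm_succ]; ring
  have hnum0 : 0 ≤ y ^ (N+1) * (d'' - d) := by
    rw [ed]
    have : 0 ≤ x - x' := by linarith
    positivity
  have hnumle : y ^ (N+1) * (d'' - d) ≤ (N + 1 : ℝ) * (x - x') := by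
    rw [ed]
    have h1 : y ^ (N+1) * ((N + 1 : ℝ) * (x - x') * y ^ N) = (N + 1 : ℝ) * (x - x') * (y ^ (N+1) * y ^ N) := by ring
    rw [h1]
    have h2 : y ^ (N+1) * y ^ N ≤ 1 :=
      mul_le_one₀ (pow_le_one₀ h0 hy1) (pow_nonneg h0 _) (pow_le_one₀ h0 hy1)
    have h3 : 0 ≤ (N + 1 : ℝ) * (x - x') := by
      have : 0 ≤ x - x' := by linarith
      positivity
    nlinarith [mul_le_mul_of_nonneg_left h2 h3]
  rw [e]
  have hdd : d₀ ^ 2 ≤ d * d'' := by nlinarith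
  calc (y ^ (N+1) * (d'' - d)) / (d * d'')
      ≤ (y ^ (N+1) * (d'' - d)) / d₀ ^ 2 :=
        div_le_div_of_nonneg_left hnum0 (by positivity) hdd
    _ ≤ (N + 1 : ℝ) * (x - x') / d₀ ^ 2 := by gcongr

/-- ordered sequences in `[0,1]` starting at `1`. -/
def Ord (z : ℕ → ℝ) : Prop :=
  z 0 = 1 ∧ (∀ k, z (k + 1) ≤ z k) ∧ (∀ k, 0 ≤ z k ∧ z k ≤ 1)

lemma muFactor_eq_fac (n : ℕ) (z : ℕ → ℝ) (i : ℕ) :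
    muFactor n z i = fac n (z i) (z (i + 1)) := rfl

lemma one_sub_pcoef (n : ℕ) (z : ℕ → ℝ) (i : ℕ) :
    1 - pcoef n z i = dnm n (z i) (z (i + 1)) := rfl

lemma Ord.nonneg {z : ℕ → ℝ} (hz : Ord z) (k : ℕ) : 0 ≤ z k := (hz.2.2 k).1
lemma Ord.le_one {z : ℕ → ℝ} (hz : Ord z) (k : ℕ) : z k ≤ 1 := (hz.2.2 k).2
lemma Ord.anti {z : ℕ → ℝ} (hz : Ord z) (k : ℕ) : z (k + 1) ≤ z k := hz.2.1 k

lemma muFactor_nonneg {n : ℕ} (hn : 1 ≤ n) {z : ℕ → ℝ} (hz : Ord z) (i : ℕ) :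
    0 ≤ muFactor n z i := by
  obtain ⟨N, rfl⟩ : ∃ N, n = N + 1 := ⟨n - 1, by omega⟩
  rw [muFactor_eq_fac]
  exact fac_nonneg N (hz.nonneg _) (hz.anti i) (hz.le_one i)

lemma muFactor_le_one {n : ℕ} (hn : 1 ≤ n) {z : ℕ → ℝ} (hz : Ord z) (i : ℕ) :
    muFactor n z i ≤ 1 := by
  obtain ⟨N, rfl⟩ : ∃ N, n = N + 1 := ⟨n - 1, by omega⟩
  rw [muFactor_eq_fac]
  exact fac_le_one N (hz.nonneg _) (hz.anti i) (hz.le_one i)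

lemma mu_nonneg {n : ℕ} (hn : 1 ≤ n) {z : ℕ → ℝ} (hz : Ord z) (k : ℕ) :
    0 ≤ mu n z k :=
  Finset.prod_nonneg fun i _ => muFactor_nonneg hn hz i

lemma mu_le_one {n : ℕ} (hn : 1 ≤ n) {z : ℕ → ℝ} (hz : Ord z) (k : ℕ) :
    mu n z k ≤ 1 :=
  Finset.prod_le_one (fun i _ => muFactor_nonneg hn hz i) (fun i _ => muFactor_le_one hn hz i)

lemma muFactor_mono {n : ℕ} (hn : 1 ≤ n) {z w : ℕ → ℝ} (hz : Ord z) (hw : Ord w)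
    (hzw : ∀ i, z i ≤ w i) (i : ℕ) : muFactor n z i ≤ muFactor n w i := by
  obtain ⟨N, rfl⟩ : ∃ N, n = N + 1 := ⟨n - 1, by omega⟩
  rw [muFactor_eq_fac, muFactor_eq_fac]
  calc fac (N+1) (z i) (z (i+1))
      ≤ fac (N+1) (w i) (z (i+1)) :=
        fac_mono_x N (hz.nonneg _) (hz.anti i) (hzw i) (hw.le_one i)
    _ ≤ fac (N+1) (w i) (w (i+1)) :=
        fac_mono_y N (hz.nonneg _) (hzw (i+1)) (hw.anti i) (hw.le_one i)

lemma mu_mono {n : ℕ} (hn : 1 ≤ n) {z w : ℕ → ℝ} (hz : Ord z) (hw : Ord w)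
    (hzw : ∀ i, z i ≤ w i) (k : ℕ) : mu n z k ≤ mu n w k :=
  Finset.prod_le_prod (fun i _ => muFactor_nonneg hn hz i)
    (fun i _ => muFactor_mono hn hz hw hzw i)

lemma mu_succ (n : ℕ) (z : ℕ → ℝ) (m : ℕ) :
    mu n z (m + 1) = mu n z m * muFactor n z m := Finset.prod_range_succ _ _

lemma vfield_eq (lam : ℝ) (n : ℕ) (z : ℕ → ℝ) (m : ℕ) :
    vfield lam n z (m + 1)
      = lam * mu n z m * Rtil n (z m) (z (m + 1)) - (z (m + 1) - z (m + 2)) := by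
  simp only [vfield, Nat.add_sub_cancel, mu_succ, Rtil, muFactor_eq_fac]
  ring

/-- the "T"-terms `x_k^n μ_k(x)` are monotone. -/
lemma T_mono {n : ℕ} (hn : 1 ≤ n) {z w : ℕ → ℝ} (hz : Ord z) (hw : Ord w)
    (hzw : ∀ i, z i ≤ w i) (k : ℕ) :
    z k ^ n * mu n z k ≤ w k ^ n * mu n w k := by
  apply mul_le_mul (pow_le_pow_left₀ (hz.nonneg k) (hzw k) n)
    (mu_mono hn hz hw hzw k) (mu_nonneg hn hz k)
    (pow_nonneg (hw.nonneg k) n)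

section Seq
variable {lam : ℝ} {n : ℕ} {a : ℕ → ℝ} {j : ℕ} {aj : ℕ → ℝ}

lemma fac_one_one {n : ℕ} (hn : 1 ≤ n) : fac n 1 1 = 1 := by
  have hd : dnm n 1 1 = 1 := by simp [dnm]
  rw [fac, if_neg, hd, one_pow, div_one]
  rw [hd, one_pow]
  rintro ⟨h, -⟩; exact one_ne_zero h

lemma mu_zero (n : ℕ) (z : ℕ → ℝ) : mu n z 0 = 1 := Finset.prod_range_zero _

lemma a_ord (hlam0 : 0 < lam) (hlam1 : lam < 1) (hn : 1 ≤ n) (ha0 : a 0 = 1)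
    (harec : ∀ k, a (k + 1) = lam * a k ^ n * mu n a k) : Ord a := by
  obtain ⟨N, rfl⟩ : ∃ N, n = N + 1 := ⟨n - 1, by omega⟩
  have key : ∀ k, (∀ i, i ≤ k → 0 ≤ a i ∧ a i ≤ 1) ∧ (∀ i, i + 1 ≤ k → a (i+1) ≤ a i) := by
    intro k
    induction k with
    | zero =>
      refine ⟨fun i hi => ?_, fun i hi => by omega⟩
      interval_cases i; rw [ha0]; norm_num
    | succ m ih =>
      obtain ⟨ihb, ihd⟩ := ih
      have hfac : ∀ i, i < m → 0 ≤ muFactor (N+1) a i ∧ muFactor (N+1) a i ≤ 1 := by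
        intro i hi
        rw [muFactor_eq_fac]
        exact ⟨fac_nonneg N (ihb (i+1) (by omega)).1 (ihd i (by omega)) (ihb i (by omega)).2,
          fac_le_one N (ihb (i+1) (by omega)).1 (ihd i (by omega)) (ihb i (by omega)).2⟩
      have hmu0 : 0 ≤ mu (N+1) a m :=
        Finset.prod_nonneg fun i hi => (hfac i (Finset.mem_range.mp hi)).1
      have hmu1 : mu (N+1) a m ≤ 1 :=
        Finset.prod_le_one (fun i hi => (hfac i (Finset.mem_range.mp hi)).1)
          (fun i hi => (hfac i (Finset.mem_range.mp hi)).2)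
      have ham := ihb m (le_refl m)
      have hp0 : 0 ≤ a m ^ (N+1) := pow_nonneg ham.1 _
      have hp1 : a m ^ (N+1) ≤ a m := pow_le_of_le_one ham.1 ham.2 (by omega)
      have h1 : 0 ≤ a (m+1) := by
        rw [harec m]
        exact mul_nonneg (mul_nonneg hlam0.le hp0) hmu0
      have h2 : a (m+1) ≤ a m := by
        rw [harec m]
        calc lam * a m ^ (N+1) * mu (N+1) a m ≤ lam * a m ^ (N+1) * 1 :=
              mul_le_mul_of_nonneg_left hmu1 (mul_nonneg hlam0.le hp0)
          _ = lam * a m ^ (N+1) := mul_one _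
          _ ≤ 1 * a m ^ (N+1) := mul_le_mul_of_nonneg_right hlam1.le hp0
          _ = a m ^ (N+1) := one_mul _
          _ ≤ a m := hp1
      refine ⟨fun i hi => ?_, fun i hi => ?_⟩
      · rcases Nat.lt_succ_iff_lt_or_eq.mp (Nat.lt_succ_of_le hi) with h | h
        · exact ihb i (by omega)
        · subst h; exact ⟨h1, le_trans h2 ham.2⟩
      · rcases Nat.lt_succ_iff_lt_or_eq.mp (Nat.lt_succ_of_le hi) with h | h
        · exact ihd i (by omega)
        · have : i = m := by omega
          subst this; exact h2
  exact ⟨ha0, fun k => (key (k+1)).2 k le_rfl, fun k => (key k).1 k le_rfl⟩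

lemma a_one (hn : 1 ≤ n) (ha0 : a 0 = 1)
    (harec : ∀ k, a (k + 1) = lam * a k ^ n * mu n a k) : a 1 = lam := by
  have := harec 0
  rw [ha0, mu_zero, one_pow] at this
  simpa using this

lemma a_antitone (ha : Ord a) : Antitone a :=
  antitone_nat_of_succ_le ha.2.1

section Shift
variable (hj : 1 ≤ j) (haj : ∀ k, aj k = a (k - j))

include haj in
lemma aj_ord (ha : Ord a) (ha0 : a 0 = 1) : Ord aj := by
  refine ⟨by rw [haj]; simpa using ha0, fun k => ?_, fun k => by rw [haj]; exact ha.2.2 _⟩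
  rw [haj, haj]
  rcases Nat.lt_or_ge k j with h | h
  · have e : k + 1 - j = k - j := by omega
    rw [e]
  · have : k + 1 - j = (k - j) + 1 := by omega
    rw [this]; exact ha.2.1 _

include haj in
lemma aj_eq_one (ha0 : a 0 = 1) {k : ℕ} (hk : k ≤ j) : aj k = 1 := by
  rw [haj]
  have : k - j = 0 := by omega
  rw [this, ha0]

include haj in
lemma aj_succ_j (hj : 1 ≤ j) : aj (j + 1) = a 1 := by
  rw [haj]; congr 1; omega

include haj in
lemma aj_le_lam (ha : Ord a) (halam : a 1 = lam) {k : ℕ} (hk : j < k) : aj k ≤ lam := by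
  rw [haj, ← halam]
  exact a_antitone ha (by omega)

include haj in
lemma mu_aj_low {n : ℕ} (hn : 1 ≤ n) (ha0 : a 0 = 1) {k : ℕ} (hk : k ≤ j) :
    mu n aj k = 1 := by
  apply Finset.prod_eq_one
  intro i hi
  rw [Finset.mem_range] at hi
  rw [muFactor_eq_fac, aj_eq_one haj ha0 (by omega), aj_eq_one haj ha0 (by omega)]
  exact fac_one_one hn

include haj in
lemma mu_aj_shift {n : ℕ} (hn : 1 ≤ n) (ha0 : a 0 = 1) {k : ℕ} (hk : j ≤ k) :
    mu n aj k = mu n a (k - j) := by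
  induction k, hk using Nat.le_induction with
  | base =>
    rw [mu_aj_low haj hn ha0 (le_refl j)]
    have : j - j = 0 := by omega
    rw [this, mu_zero]
  | succ k hk ih =>
    have e1 : k + 1 - j = (k - j) + 1 := by omega
    have e2 : aj (k + 1) = a ((k - j) + 1) := by rw [haj, e1]
    rw [mu_succ, ih, e1, mu_succ]
    congr 1
    rw [muFactor_eq_fac, muFactor_eq_fac, haj, e2]


include haj in
lemma fixed_point {n : ℕ} (hn : 1 ≤ n) (hj : 1 ≤ j) (ha0 : a 0 = 1)
    (halam : a 1 = lam)
    (harec : ∀ k, a (k + 1) = lam * a k ^ n * mu n a k) :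
    ∀ k, 1 ≤ k →
      vfield lam n aj k + (aj j - aj (j + 1)) * (if k = j then 1 else 0) = 0 := by
  intro k hk
  rcases lt_trichotomy k j with h | h | h
  · rw [if_neg (by omega), mul_zero, add_zero, vfield]
    rw [aj_eq_one haj ha0 (by omega : k - 1 ≤ j), aj_eq_one haj ha0 (by omega : k ≤ j),
      aj_eq_one haj ha0 (by omega : k + 1 ≤ j),
      mu_aj_low haj hn ha0 (by omega : k - 1 ≤ j), mu_aj_low haj hn ha0 (by omega : k ≤ j)]
    ring
  · subst h
    rw [if_pos rfl, mul_one, vfield]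
    rw [aj_eq_one haj ha0 (by omega : k - 1 ≤ k), aj_eq_one haj ha0 (le_refl k),
      aj_succ_j haj hk, halam,
      mu_aj_low haj hn ha0 (by omega : k - 1 ≤ k), mu_aj_low haj hn ha0 (le_refl k)]
    ring
  · rw [if_neg (by omega), mul_zero, add_zero, vfield]
    obtain ⟨m, rfl⟩ : ∃ m, k = j + m + 1 := ⟨k - j - 1, by omega⟩
    have e1 : aj (j + m + 1 - 1) = a m := by rw [haj]; congr 1; omega
    have e2 : aj (j + m + 1) = a (m + 1) := by rw [haj]; congr 1; omega
    have e3 : aj (j + m + 1 + 1) = a (m + 2) := by rw [haj]; congr 1; omega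
    have e4 : mu n aj (j + m + 1 - 1) = mu n a m := by
      have e : j + m + 1 - 1 = j + m := by omega
      rw [e, mu_aj_shift haj hn ha0 (by omega)]
      congr 1; omega
    have e5 : mu n aj (j + m + 1) = mu n a (m + 1) := by
      rw [mu_aj_shift haj hn ha0 (by omega)]
      congr 1; omega
    rw [e1, e2, e3, e4, e5, ← harec m, ← harec (m + 1)]
    ring

end Shift
end Seq

lemma vfield_le_one {lam : ℝ} (hlam0 : 0 < lam) (hlam1 : lam < 1) {n : ℕ} (hn : 1 ≤ n)
    {z : ℕ → ℝ} (hz : Ord z) {k : ℕ} (hk : 1 ≤ k) : vfield lam n z k ≤ 1 := by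
  obtain ⟨m, rfl⟩ : ∃ m, k = m + 1 := ⟨k - 1, by omega⟩
  obtain ⟨N, rfl⟩ : ∃ N, n = N + 1 := ⟨n - 1, by omega⟩
  rw [vfield_eq]
  have h1 : mu (N+1) z m ≤ 1 := mu_le_one hn hz m
  have h0 : 0 ≤ mu (N+1) z m := mu_nonneg hn hz m
  have h2 : Rtil (N+1) (z m) (z (m+1)) ≤ 1 :=
    Rtil_le_one N (hz.nonneg _) (hz.anti m) (hz.le_one m)
  have h3 : 0 ≤ Rtil (N+1) (z m) (z (m+1)) :=
    Rtil_nonneg N (hz.nonneg _) (hz.anti m) (hz.le_one m)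
  have h4 := hz.anti (m+1)
  have h5 : mu (N+1) z m * Rtil (N+1) (z m) (z (m+1)) ≤ 1 := mul_le_one₀ h1 h3 h2
  have h6 : lam * (mu (N+1) z m * Rtil (N+1) (z m) (z (m+1))) ≤ lam * 1 :=
    mul_le_mul_of_nonneg_left h5 hlam0.le
  nlinarith [h6]

lemma ord_min {z b : ℕ → ℝ} (hz : Ord z) (hb : Ord b) :
    Ord (fun i => min (z i) (b i)) := by
  refine ⟨by simp [hz.1, hb.1], fun k => ?_, fun k => ?_⟩
  · exact le_min ((min_le_left _ _).trans (hz.anti k)) ((min_le_right _ _).trans (hb.anti k))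
  · constructor
    · exact le_min (hz.nonneg k) (hb.nonneg k)
    · exact (min_le_left _ _).trans (hz.le_one k)

/-- product difference bounded by sum of factor differences. -/
lemma prod_diff_le (m : ℕ) (F G : ℕ → ℝ)
    (h : ∀ i, i < m → 0 ≤ G i ∧ G i ≤ F i ∧ F i ≤ 1) :
    (∏ i ∈ Finset.range m, F i) - (∏ i ∈ Finset.range m, G i)
      ≤ ∑ i ∈ Finset.range m, (F i - G i) := by
  induction m with
  | zero => simp
  | succ m ih =>
    have hFm := h m (by omega)
    have hG0 : 0 ≤ ∏ i ∈ Finset.range m, G i :=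
      Finset.prod_nonneg fun i hi => (h i (by simp at hi; omega)).1
    have hF1 : ∏ i ∈ Finset.range m, F i ≤ 1 :=
      Finset.prod_le_one (fun i hi => le_trans (h i (by simp at hi; omega)).1
          (h i (by simp at hi; omega)).2.1)
        (fun i hi => (h i (by simp at hi; omega)).2.2)
    have hGF : ∏ i ∈ Finset.range m, G i ≤ ∏ i ∈ Finset.range m, F i :=
      Finset.prod_le_prod (fun i hi => (h i (by simp at hi; omega)).1)
        (fun i hi => (h i (by simp at hi; omega)).2.1)
    have ih' := ih (fun i hi => h i (by omega))
    rw [Finset.prod_range_succ, Finset.prod_range_succ, Finset.sum_range_succ]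
    have e : (∏ i ∈ Finset.range m, F i) * F m - (∏ i ∈ Finset.range m, G i) * G m
        = ((∏ i ∈ Finset.range m, F i) - (∏ i ∈ Finset.range m, G i)) * F m
          + (∏ i ∈ Finset.range m, G i) * (F m - G m) := by ring
    rw [e]
    have t1 : ((∏ i ∈ Finset.range m, F i) - (∏ i ∈ Finset.range m, G i)) * F m
        ≤ (∏ i ∈ Finset.range m, F i) - (∏ i ∈ Finset.range m, G i) := by
      nlinarith [sub_nonneg.mpr hGF, hFm.1.trans hFm.2.1, hFm.2.2]
    have t2 : (∏ i ∈ Finset.range m, G i) * (F m - G m) ≤ F m - G m := by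
      nlinarith [sub_nonneg.mpr hFm.2.1, hG0, le_trans hGF hF1]
    linarith

lemma sum_shift_le (Y : ℕ → ℝ) (hY : ∀ i, 0 ≤ Y i) (m M : ℕ) (h : m + 1 ≤ M) :
    ∑ i ∈ Finset.range m, Y (i + 1) ≤ ∑ i ∈ Finset.range M, Y i := by
  have e := Finset.sum_range_succ' Y m
  have h2 : ∑ i ∈ Finset.range (m+1), Y i ≤ ∑ i ∈ Finset.range M, Y i := by
    apply Finset.sum_le_sum_of_subset_of_nonneg
    · exact Finset.range_subset_range.mpr h
    · intro i _ _; exact hY i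
  have h3 : 0 ≤ Y 0 := hY 0
  linarith [e, h2, h3]

set_option maxHeartbeats 1000000 in
/-- THE CRUX: one-sided Lipschitz bound for the vector field at points above `b`. -/
lemma crux {lam : ℝ} (hlam0 : 0 < lam) (hlam1 : lam < 1) {n : ℕ} (hn : 1 ≤ n)
    {j : ℕ} (hj : 1 ≤ j) {b : ℕ → ℝ} (hb : Ord b)
    (hb1 : ∀ i, i ≤ j → b i = 1) (hblam : ∀ i, j < i → b i ≤ lam)
    (hbj1 : b (j + 1) = lam)
    (hvb : ∀ k, 1 ≤ k → k ≠ j → vfield lam n b k = 0)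
    {z : ℕ → ℝ} (hz : Ord z)
    (hreg : ∀ i, z i ≤ b i + (1 - lam) / 2)
    {k : ℕ} (hk : 1 ≤ k) (hzk : b k < z k) :
    vfield lam n z k ≤ (2 * ((n : ℝ) / ((1-lam)/2 * lam / 4) ^ 2) + n + 1)
      * ∑ i ∈ Finset.range (k + 2), max (z i - b i) 0 := by
  obtain ⟨N, rfl⟩ : ∃ N, n = N + 1 := ⟨n - 1, by omega⟩
  obtain ⟨m, rfl⟩ : ∃ m, k = m + 1 := ⟨k - 1, by omega⟩
  have hn' : 1 ≤ N + 1 := by omega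
  push_cast
  set m₀ : ℝ := (1 - lam) / 2 with hm₀
  set d₀ : ℝ := m₀ * lam / 4 with hd₀
  set C : ℝ := ((N:ℝ) + 1) / d₀ ^ 2 with hC
  have hm₀pos : 0 < m₀ := by rw [hm₀]; linarith
  have hd₀pos : 0 < d₀ := by rw [hd₀]; positivity
  have hd₀m₀ : d₀ ≤ m₀ := by rw [hd₀]; nlinarith
  have hd₀lam : d₀ ≤ lam := by rw [hd₀]; nlinarith
  have hd₀q : d₀ ≤ 1 / 4 := by rw [hd₀]; nlinarith
  have hCpos : 0 < C := by rw [hC]; positivity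
  set Y : ℕ → ℝ := fun i => max (z i - b i) 0 with hYdef
  set w : ℕ → ℝ := fun i => min (z i) (b i) with hwdef
  have hw : Ord w := ord_min hz hb
  have hwb : ∀ i, w i ≤ b i := fun i => min_le_right _ _
  have hwz : ∀ i, w i ≤ z i := fun i => min_le_left _ _
  have hzw : ∀ i, z i - w i = Y i := by
    intro i
    rw [hYdef, hwdef]
    simp only
    rcases le_total (z i) (b i) with h | h
    · rw [min_eq_left h, max_eq_right (by linarith)]; ring
    · rw [min_eq_right h, max_eq_left (by linarith)]
  have hY0 : ∀ i, 0 ≤ Y i := fun i => le_max_right _ _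
  have hYm : ∀ i, Y i ≤ m₀ := by
    intro i
    rw [hYdef]
    simp only [max_le_iff]
    exact ⟨by linarith [hreg i], hm₀pos.le⟩
  have hYlow : ∀ i, i ≤ j → Y i = 0 := by
    intro i hi
    rw [hYdef]
    simp only [max_eq_right_iff]
    rw [hb1 i hi]
    linarith [hz.le_one i]
  have hkj : j < m + 1 := by
    by_contra hc
    push_neg at hc
    have := hb1 (m+1) hc
    linarith [hz.le_one (m+1), hzk]
  -- positive-part facts at the touching configuration
  have hwk : w (m+1) = b (m+1) := by
    rw [hwdef]; simp only; rw [min_eq_right hzk.le]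
  -- high coordinates of z are below 1 - m₀
  have hzhigh : ∀ i, j < i → z i ≤ 1 - m₀ := by
    intro i hi
    have := hreg i
    have := hblam i hi
    rw [hm₀]; linarith
  -- denominators at modified coordinates are at least d₀
  -- (x, y) any pair with y' below; several cases handled in the factor lemma below
  have hfaclip : ∀ i, muFactor (N+1) z i - muFactor (N+1) w i ≤ C * (Y i + Y (i + 1)) := by
    intro i
    rw [muFactor_eq_fac, muFactor_eq_fac]
    have hzi1 : 0 ≤ z (i+1) := hz.nonneg _
    have hwi1 : 0 ≤ w (i+1) := hw.nonneg _
    have term1 : fac (N+1) (z i) (z (i+1)) - fac (N+1) (z i) (w (i+1)) ≤ C * Y (i+1) := by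
      rcases le_total (z (i+1)) (b (i+1)) with h | h
      · have : w (i+1) = z (i+1) := by rw [hwdef]; simp only; rw [min_eq_left h]
        rw [this, sub_self]
        exact mul_nonneg hCpos.le (hY0 _)
      · have hwi : w (i+1) = b (i+1) := by rw [hwdef]; simp only; rw [min_eq_right h]
        rcases Nat.lt_or_ge j (i+1) with hij | hij
        case inr =>
          -- i + 1 ≤ j : z (i+1) = b (i+1) = 1, difference vanishes
          have hbi : b (i+1) = 1 := hb1 (i+1) hij
          have hzi : z (i+1) = b (i+1) := le_antisymm (by rw [hbi]; exact hz.le_one _) h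
          have : w (i+1) = z (i+1) := by rw [hwi, hzi]
          rw [this, sub_self]
          exact mul_nonneg hCpos.le (hY0 _)
        -- now establish denominator bounds
        have hyx : z (i+1) ≤ z i := hz.anti i
        have hy'x : w (i+1) ≤ z i := le_trans (hwz _) hyx
        have hx1 : z i ≤ 1 := hz.le_one i
        have hdd : d₀ ≤ dnm (N+1) (z i) (z (i+1)) ∧ d₀ ≤ dnm (N+1) (z i) (w (i+1)) := by
          rcases Nat.eq_zero_or_pos N with rfl | hN1
          · -- n = 1
            have e1 : dnm 1 (z i) (z (i+1)) = 1 - z i + z (i+1) := by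
              rw [dnm]; push_cast; ring_nf
            have e2 : dnm 1 (z i) (w (i+1)) = 1 - z i + w (i+1) := by
              rw [dnm]; push_cast; ring_nf
            have hij' : j ≤ i := by omega
            rcases Nat.eq_or_lt_of_le hij' with heq | hij''
            · -- i = j : y' = b (j+1) = lam
              have hbl : b (i + 1) = lam := by rw [← heq]; exact hbj1
              have hzl : lam ≤ z (i+1) := by rw [← hbl]; exact h
              rw [e1, e2, hwi, hbl]
              constructor
              · linarith [hz.le_one i, hd₀lam]
              · linarith [hz.le_one i, hd₀lam]
            · -- i > j
              have := hzhigh i hij''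
              rw [e1, e2]
              constructor
              · linarith [hzi1]
              · linarith [hwi1]
          · -- n ≥ 2
            constructor
            · exact le_trans hd₀q (dnm_ge_quarter N hN1 hzi1 hyx hx1)
            · exact le_trans hd₀q (dnm_ge_quarter N hN1 hwi1 hy'x hx1)
        have := fac_lip_y N hwi1 (by rw [hwi]; exact h) hyx hx1 hd₀pos hdd.1 hdd.2
        calc fac (N+1) (z i) (z (i+1)) - fac (N+1) (z i) (w (i+1))
            ≤ ((N:ℝ) + 1) * (z (i+1) - w (i+1)) / d₀ ^ 2 := this
          _ = C * Y (i+1) := by rw [hC, hzw (i+1)]; ring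
    have term2 : fac (N+1) (z i) (w (i+1)) - fac (N+1) (w i) (w (i+1)) ≤ C * Y i := by
      rcases le_total (z i) (b i) with h | h
      · have : w i = z i := by rw [hwdef]; simp only; rw [min_eq_left h]
        rw [this, sub_self]
        exact mul_nonneg hCpos.le (hY0 _)
      · have hwi : w i = b i := by rw [hwdef]; simp only; rw [min_eq_right h]
        rcases Nat.lt_or_ge j i with hij | hij'
        case inr =>
          have hbi : b i = 1 := hb1 i hij'
          have hzi : z i = b i := le_antisymm (by rw [hbi]; exact hz.le_one _) h
          have : w i = z i := by rw [hwi, hzi]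
          rw [this, sub_self]
          exact mul_nonneg hCpos.le (hY0 _)
        have hy'x' : w (i+1) ≤ w i := hw.anti i
        have hxx : w i ≤ z i := hwz i
        have hx1 : z i ≤ 1 := hz.le_one i
        have hdd : d₀ ≤ dnm (N+1) (z i) (w (i+1)) ∧ d₀ ≤ dnm (N+1) (w i) (w (i+1)) := by
          rcases Nat.eq_zero_or_pos N with rfl | hN1
          · have e1 : dnm 1 (z i) (w (i+1)) = 1 - z i + w (i+1) := by
              rw [dnm]; push_cast; ring_nf
            have e2 : dnm 1 (w i) (w (i+1)) = 1 - w i + w (i+1) := by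
              rw [dnm]; push_cast; ring_nf
            have h1 := hzhigh i hij
            have h2 : w i ≤ lam := by rw [hwi]; exact hblam i hij
            rw [e1, e2]
            constructor
            · linarith [hwi1]
            · linarith [hwi1]
          · constructor
            · exact le_trans hd₀q (dnm_ge_quarter N hN1 hwi1 (le_trans hy'x' hxx) hx1)
            · exact le_trans hd₀q
                (dnm_ge_quarter N hN1 hwi1 hy'x' (le_trans hxx hx1))
        have := fac_lip_x N hwi1 hy'x' hxx hx1 hd₀pos hdd.1 hdd.2
        calc fac (N+1) (z i) (w (i+1)) - fac (N+1) (w i) (w (i+1))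
            ≤ ((N:ℝ) + 1) * (z i - w i) / d₀ ^ 2 := this
          _ = C * Y i := by rw [hC, hzw i]; ring
    linarith [term1, term2]
  -- assemble
  set S : ℝ := ∑ i ∈ Finset.range (m + 1 + 2), Y i with hS
  have hS0 : 0 ≤ S := Finset.sum_nonneg fun i _ => hY0 i
  have hsingle : ∀ i, i < m + 3 → Y i ≤ S := by
    intro i hi
    rw [hS]
    exact Finset.single_le_sum (fun i _ => hY0 i) (Finset.mem_range.mpr (by omega))
  -- part B : vfield at w is nonpositive
  have hvb0 : vfield lam (N+1) b (m+1) = 0 := hvb (m+1) (by omega) (by omega)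
  have hwm1 : w (m+1) = b (m+1) := hwk
  have hB : vfield lam (N+1) w (m+1) ≤ 0 := by
    rw [vfield_eq, hwm1]
    rw [vfield_eq] at hvb0
    have hcw : b (m+1) ≤ w m := by
      rw [← hwm1]; exact hw.anti m
    have h1 : mu (N+1) w m ≤ mu (N+1) b m := mu_mono hn' hw hb hwb m
    have h2 : Rtil (N+1) (w m) (b (m+1)) ≤ Rtil (N+1) (b m) (b (m+1)) :=
      Rtil_mono N (hb.nonneg _) hcw (hwb m) (hb.le_one m)
    have h3 : 0 ≤ Rtil (N+1) (w m) (b (m+1)) :=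
      Rtil_nonneg N (hb.nonneg _) hcw (hw.le_one m)
    have h4 : 0 ≤ mu (N+1) b m := mu_nonneg hn' hb m
    have h5 : mu (N+1) w m * Rtil (N+1) (w m) (b (m+1))
        ≤ mu (N+1) b m * Rtil (N+1) (b m) (b (m+1)) :=
      mul_le_mul h1 h2 h3 h4
    have h6 : w (m+2) ≤ b (m+2) := hwb _
    have h7 : lam * (mu (N+1) w m * Rtil (N+1) (w m) (b (m+1)))
        ≤ lam * (mu (N+1) b m * Rtil (N+1) (b m) (b (m+1))) :=
      mul_le_mul_of_nonneg_left h5 hlam0.le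
    nlinarith [h7, h6]
  -- part A : Lipschitz control of the difference
  have hT2 : w (m+1) ^ (N+1) * mu (N+1) w (m+1) ≤ z (m+1) ^ (N+1) * mu (N+1) z (m+1) :=
    T_mono hn' hw hz hwz (m+1)
  have hmuz1 : mu (N+1) z m ≤ 1 := mu_le_one hn' hz m
  have hmuw0 : 0 ≤ mu (N+1) w m := mu_nonneg hn' hw m
  have hmudiff : mu (N+1) z m - mu (N+1) w m
      ≤ ∑ i ∈ Finset.range m, (muFactor (N+1) z i - muFactor (N+1) w i) := by
    exact prod_diff_le m (muFactor (N+1) z) (muFactor (N+1) w)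
      (fun i _ => ⟨muFactor_nonneg hn' hw i, muFactor_mono hn' hw hz hwz i,
        muFactor_le_one hn' hz i⟩)
  have hmudiff2 : mu (N+1) z m - mu (N+1) w m
      ≤ ∑ i ∈ Finset.range m, C * (Y i + Y (i+1)) :=
    le_trans hmudiff (Finset.sum_le_sum fun i _ => hfaclip i)
  have hpowd : z m ^ (N+1) - w m ^ (N+1) ≤ ((N:ℝ)+1) * Y m := by
    have := pow_diff_le (N+1) (hw.nonneg m) (hwz m) (hz.le_one m)
    rw [← hzw m]
    push_cast at this ⊢
    linarith
  have hT1 : z m ^ (N+1) * mu (N+1) z m - w m ^ (N+1) * mu (N+1) w m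
      ≤ ((N:ℝ)+1) * Y m + ∑ i ∈ Finset.range m, C * (Y i + Y (i+1)) := by
    have e : z m ^ (N+1) * mu (N+1) z m - w m ^ (N+1) * mu (N+1) w m
        = (z m ^ (N+1) - w m ^ (N+1)) * mu (N+1) z m
          + w m ^ (N+1) * (mu (N+1) z m - mu (N+1) w m) := by ring
    have h1 : (z m ^ (N+1) - w m ^ (N+1)) * mu (N+1) z m ≤ z m ^ (N+1) - w m ^ (N+1) := by
      have hd : 0 ≤ z m ^ (N+1) - w m ^ (N+1) :=
        sub_nonneg.mpr (pow_le_pow_left₀ (hw.nonneg m) (hwz m) _)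
      nlinarith [mu_nonneg hn' hz m]
    have h2 : w m ^ (N+1) * (mu (N+1) z m - mu (N+1) w m)
        ≤ mu (N+1) z m - mu (N+1) w m := by
      have hd : 0 ≤ mu (N+1) z m - mu (N+1) w m :=
        sub_nonneg.mpr (mu_mono hn' hw hz hwz m)
      have hw1 : w m ^ (N+1) ≤ 1 := pow_le_one₀ (hw.nonneg m) (hw.le_one m)
      nlinarith [pow_nonneg (hw.nonneg m) (N+1)]
    linarith [e.le, e.ge, h1, h2, hpowd, hmudiff2]
  have hsum : ∑ i ∈ Finset.range m, C * (Y i + Y (i+1)) ≤ 2 * C * S := by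
    have e : ∑ i ∈ Finset.range m, C * (Y i + Y (i+1))
        = C * ((∑ i ∈ Finset.range m, Y i) + ∑ i ∈ Finset.range m, Y (i+1)) := by
      rw [← Finset.sum_add_distrib, Finset.mul_sum]
    rw [e]
    have h1 : ∑ i ∈ Finset.range m, Y i ≤ S := by
      apply Finset.sum_le_sum_of_subset_of_nonneg
      · exact Finset.range_subset_range.mpr (by omega)
      · intro i _ _; exact hY0 i
    have h2 : ∑ i ∈ Finset.range m, Y (i+1) ≤ S := sum_shift_le Y hY0 m (m+1+2) (by omega)
    nlinarith [hCpos]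
  -- decomposition
  have hdec : vfield lam (N+1) z (m+1)
      = vfield lam (N+1) w (m+1)
        + lam * (z m ^ (N+1) * mu (N+1) z m - w m ^ (N+1) * mu (N+1) w m)
        - lam * (z (m+1) ^ (N+1) * mu (N+1) z (m+1) - w (m+1) ^ (N+1) * mu (N+1) w (m+1))
        - (z (m+1) - w (m+1)) + (z (m+2) - w (m+2)) := by
    simp only [vfield, Nat.add_sub_cancel]
    ring
  have hDpos : 0 ≤ ((N:ℝ)+1) * Y m + ∑ i ∈ Finset.range m, C * (Y i + Y (i+1)) := by
    apply add_nonneg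
    · exact mul_nonneg (by positivity) (hY0 m)
    · exact Finset.sum_nonneg fun i _ =>
        mul_nonneg hCpos.le (add_nonneg (hY0 i) (hY0 (i+1)))
  have h8 : lam * (z m ^ (N+1) * mu (N+1) z m - w m ^ (N+1) * mu (N+1) w m)
      ≤ ((N:ℝ)+1) * Y m + ∑ i ∈ Finset.range m, C * (Y i + Y (i+1)) := by
    calc lam * (z m ^ (N+1) * mu (N+1) z m - w m ^ (N+1) * mu (N+1) w m)
        ≤ lam * (((N:ℝ)+1) * Y m + ∑ i ∈ Finset.range m, C * (Y i + Y (i+1))) :=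
          mul_le_mul_of_nonneg_left hT1 hlam0.le
      _ ≤ 1 * (((N:ℝ)+1) * Y m + ∑ i ∈ Finset.range m, C * (Y i + Y (i+1))) :=
          mul_le_mul_of_nonneg_right hlam1.le hDpos
      _ = _ := one_mul _
  have h9 : z (m+1) - w (m+1) = Y (m+1) := hzw (m+1)
  have h10 : z (m+2) - w (m+2) = Y (m+2) := hzw (m+2)
  have final : vfield lam (N+1) z (m+1) ≤ (2 * C + ((N:ℝ)+1) + 1) * S := by
    have hYm' : Y m ≤ S := hsingle m (by omega)
    have hYm2 : Y (m+2) ≤ S := hsingle (m+2) (by omega)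
    have hlamT2 : 0 ≤ lam * (z (m+1) ^ (N+1) * mu (N+1) z (m+1)
        - w (m+1) ^ (N+1) * mu (N+1) w (m+1)) :=
      mul_nonneg hlam0.le (sub_nonneg.mpr hT2)
    have hNS : ((N:ℝ)+1) * Y m ≤ ((N:ℝ)+1) * S :=
      mul_le_mul_of_nonneg_left hYm' (by positivity)
    have hYm1 : 0 ≤ Y (m+1) := hY0 (m+1)
    rw [hdec]
    rw [h9, h10]
    nlinarith [hB, h8, hsum, hNS, hYm2]
  refine le_trans final (le_of_eq ?_)
  rw [hS]
lemma deriv_comp {f g : ℝ → ℝ} {σ T : ℝ} (hσT : σ ≤ T)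
    (hf : ContinuousOn f (Icc σ T)) (hg : ContinuousOn g (Icc σ T))
    (hder : ∀ s ∈ Ioo σ T, ∃ f' g', HasDerivAt f f' s ∧ HasDerivAt g g' s ∧ f' ≤ g') :
    f T - f σ ≤ g T - g σ := by
  have hmono : MonotoneOn (fun x => g x - f x) (Icc σ T) := by
    apply monotoneOn_of_deriv_nonneg (convex_Icc σ T) (hg.sub hf)
    · rw [interior_Icc]
      intro x hx
      obtain ⟨f', g', hf', hg', _⟩ := hder x hx
      exact (hg'.sub hf').differentiableAt.differentiableWithinAt
    · rw [interior_Icc]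
      intro x hx
      obtain ⟨f', g', hf', hg', hle⟩ := hder x hx
      rw [(hg'.sub hf').deriv]
      linarith
  have := hmono (left_mem_Icc.mpr hσT) (right_mem_Icc.mpr hσT) hσT
  simp only at this
  linarith

lemma pos_part {f G g : ℝ → ℝ} {σ T : ℝ} (hσT : σ ≤ T)
    (hf : ContinuousOn f (Icc σ T)) (hfσ : f σ ≤ 0)
    (hG : ∀ s, HasDerivAt G (g s) s) (hGσ : G σ = 0)
    (hg0 : ∀ s, s ∈ Icc σ T → 0 ≤ g s)
    (hder : ∀ s ∈ Ioo σ T, 0 < f s → ∃ f', HasDerivAt f f' s ∧ f' ≤ g s) :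
    f T ≤ G T := by
  have hGc : ∀ (u v : ℝ), ContinuousOn G (Icc u v) :=
    fun u v s _ => (hG s).continuousAt.continuousWithinAt
  have hGmono : MonotoneOn G (Icc σ T) := by
    apply monotoneOn_of_deriv_nonneg (convex_Icc σ T) (hGc σ T)
    · intro x _
      exact (hG x).differentiableAt.differentiableWithinAt
    · rw [interior_Icc]
      intro x hx
      rw [(hG x).deriv]
      exact hg0 x (Ioo_subset_Icc_self hx)
  have hGT0 : 0 ≤ G T := by
    rw [← hGσ]
    exact hGmono (left_mem_Icc.mpr hσT) (right_mem_Icc.mpr hσT) hσT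
  set Sset : Set ℝ := Icc σ T ∩ f ⁻¹' (Iic 0) with hSset
  have hclosed : IsClosed Sset := hf.preimage_isClosed_of_isClosed isClosed_Icc isClosed_Iic
  have hne : Sset.Nonempty := ⟨σ, left_mem_Icc.mpr hσT, by simpa using hfσ⟩
  have hcomp : IsCompact Sset :=
    isCompact_Icc.of_isClosed_subset hclosed inter_subset_left
  set t₁ := sSup Sset with ht₁def
  have ht₁ : t₁ ∈ Sset := hcomp.sSup_mem hne
  have ht₁Icc : t₁ ∈ Icc σ T := ht₁.1
  have hft₁ : f t₁ ≤ 0 := ht₁.2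
  rcases eq_or_lt_of_le ht₁Icc.2 with hEq | hLt
  · rw [← hEq]
    have h0 : 0 ≤ G t₁ := by rw [hEq]; exact hGT0
    linarith
  · have hbdd : BddAbove Sset := ⟨T, fun x hx => hx.1.2⟩
    have hpos : ∀ s, s ∈ Ioc t₁ T → 0 < f s := by
      intro s hs
      by_contra hc
      push_neg at hc
      have hmem : s ∈ Sset := ⟨⟨le_trans ht₁Icc.1 hs.1.le, hs.2⟩, by simpa using hc⟩
      have := le_csSup hbdd hmem
      rw [← ht₁def] at this
      linarith [hs.1]
    have hstep : f T - f t₁ ≤ G T - G t₁ := by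
      apply deriv_comp hLt.le (hf.mono (Icc_subset_Icc ht₁Icc.1 le_rfl)) (hGc t₁ T)
      intro s hs
      obtain ⟨f', hf', hle⟩ := hder s ⟨lt_of_le_of_lt ht₁Icc.1 hs.1, hs.2⟩
        (hpos s ⟨hs.1, hs.2.le⟩)
      exact ⟨f', g s, hf', hG s, hle⟩
    have hGt₁0 : 0 ≤ G t₁ := by
      rw [← hGσ]
      exact hGmono (left_mem_Icc.mpr hσT) ht₁Icc ht₁Icc.1
    linarith

/-- derivative of the polynomial barrier. -/
lemma barrier_deriv (c τ : ℝ) (m : ℕ) (s : ℝ) :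
    HasDerivAt (fun u => c * ((u - τ) ^ (m + 2) / (m + 2)!))
      (c * ((s - τ) ^ (m + 1) / (m + 1)!)) s := by
  have h1 : HasDerivAt (fun u : ℝ => u - τ) 1 s := (hasDerivAt_id s).sub_const τ
  have h2 := h1.pow (m + 2)
  have e : (fun u => c * ((u - τ) ^ (m + 2) / (m + 2)!))
      = fun u => (c / (m + 2)!) * (u - τ) ^ (m + 2) := by
    funext u; ring
  rw [e]
  have h3 := h2.const_mul (c / (m + 2)!)
  refine h3.congr_deriv ?_
  have hfac : ((m + 2)! : ℝ) = (m + 2) * (m + 1)! := by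
    rw [Nat.factorial_succ]; push_cast; ring
  have hne : ((m + 1)! : ℝ) ≠ 0 := by positivity
  have hne2 : ((m + 2)! : ℝ) ≠ 0 := by positivity
  have hne3 : ((m+2:ℕ):ℝ) ≠ 0 := by positivity
  rw [show m + 2 - 1 = m + 1 by omega]
  rw [hfac]
  field_simp
  push_cast
  ring

lemma sum_pow_two_le (M : ℕ) : ∑ i ∈ Finset.range M, (2:ℝ) ^ i ≤ 2 ^ M := by
  induction M with
  | zero => norm_num
  | succ M ih =>
    rw [Finset.sum_range_succ, pow_succ]
    nlinarith [ih]

/-- Part (ii) of statement 17, with all sequence facts supplied as hypotheses. -/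
lemma part2 {lam : ℝ} (hlam0 : 0 < lam) (hlam1 : lam < 1) {n : ℕ} (hn : 1 ≤ n)
    {j : ℕ} (hj : 1 ≤ j) {b : ℕ → ℝ} (hb : Ord b)
    (hb1 : ∀ i, i ≤ j → b i = 1) (hblam : ∀ i, j < i → b i ≤ lam)
    (hbj1 : b (j + 1) = lam)
    (hvb : ∀ k, 1 ≤ k → k ≠ j → vfield lam n b k = 0)
    (z : ℕ → ℝ → ℝ) (hz : IsSolution lam n z) (hinit : ∀ k, 1 ≤ k → z k 0 ≤ b k) :
    ∀ k, 1 ≤ k → ∀ t : ℝ, 0 ≤ t → z k t ≤ b k := by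
  set m₀ : ℝ := (1 - lam) / 2 with hm₀
  have hm₀pos : 0 < m₀ := by rw [hm₀]; linarith
  set L : ℝ := 2 * ((n : ℝ) / (m₀ * lam / 4) ^ 2) + n + 1 with hL
  have hLpos : 0 < L := by
    rw [hL]
    have : 0 < (n:ℝ) := by exact_mod_cast hn
    positivity
  set K : ℝ := 4 * L with hK
  have hKpos : 0 < K := by rw [hK]; linarith
  clear_value K L m₀
  -- basic solution facts
  have hOrd : ∀ s : ℝ, 0 ≤ s → Ord (fun i => z i s) := by
    intro s hs
    obtain ⟨h1, h2, h3, -⟩ := hz.1 s hs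
    exact ⟨h1, h2, h3⟩
  have hcont : ∀ k, 1 ≤ k → ContinuousOn (z k) (Ici 0) :=
    fun k hk s hs => (hz.2 k hk s hs).continuousWithinAt
  have hderiv : ∀ k, 1 ≤ k → ∀ s : ℝ, 0 < s →
      HasDerivAt (z k) (vfield lam n (fun i => z i s) k) s :=
    fun k hk s hs => (hz.2 k hk s hs.le).hasDerivAt (Ici_mem_nhds hs)
  -- the one-step lemma
  have hstep : ∀ τ : ℝ, 0 ≤ τ → (∀ k, 1 ≤ k → z k τ ≤ b k) →
      ∀ t, t ∈ Icc τ (τ + m₀) → ∀ k, 1 ≤ k → z k t ≤ b k := by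
    intro τ hτ hGood
    -- S1 : linear growth
    have hS1 : ∀ i, 1 ≤ i → ∀ s, s ∈ Icc τ (τ + m₀) → z i s ≤ b i + (s - τ) := by
      intro i hi s hs
      have hcmp : z i s - z i τ ≤ s - τ := by
        have h := deriv_comp (f := z i) (g := fun u => u) hs.1
          ((hcont i hi).mono (fun u hu => le_trans hτ hu.1))
          (continuous_id.continuousOn)
          (fun u hu => ⟨vfield lam n (fun l => z l u) i, 1,
            hderiv i hi u (lt_of_le_of_lt hτ hu.1),
            hasDerivAt_id u,
            vfield_le_one hlam0 hlam1 hn (hOrd u (le_trans hτ hu.1.le)) hi⟩)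
        simpa using h
      have := hGood i hi
      linarith
    -- S2 : region control
    have hS2 : ∀ s, s ∈ Icc τ (τ + m₀) → ∀ i, z i s ≤ b i + m₀ := by
      intro s hs i
      rcases Nat.eq_zero_or_pos i with rfl | hi
      · have h1 : z 0 s = 1 := (hz.1 s (le_trans hτ hs.1)).1
        have h2 : b 0 = 1 := hb.1
        rw [h1, h2]; linarith
      · have := hS1 i hi s hs
        have h2 : s - τ ≤ m₀ := by linarith [hs.2]
        linarith
    -- S3 : Picard iteration
    have hS3 : ∀ m : ℕ, ∀ k, 1 ≤ k → ∀ s, s ∈ Icc τ (τ + m₀) →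
        z k s - b k ≤ 2 ^ k * (K ^ m * (s - τ) ^ (m + 1) / (m + 1)!) := by
      intro m
      induction m with
      | zero =>
        intro k hk s hs
        have h1 := hS1 k hk s hs
        have h2 : (1:ℝ) ≤ 2 ^ k := one_le_pow₀ (by norm_num)
        have h3 : 0 ≤ s - τ := by linarith [hs.1]
        have e : 2 ^ k * (K ^ 0 * (s - τ) ^ (0 + 1) / (0 + 1)!) = 2 ^ k * (s - τ) := by
          norm_num
        rw [e]
        nlinarith [hGood k hk]
      | succ m ih =>
        intro k hk s hs
        have hτs : τ ≤ s := hs.1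
        have hA0 : ∀ u, u ∈ Icc τ s → (0:ℝ) ≤ K ^ m * (u - τ) ^ (m + 1) / (m + 1)! := by
          intro u hu
          have : 0 ≤ u - τ := by linarith [hu.1]
          positivity
        have key := pos_part (f := fun u => z k u - b k)
          (G := fun u => (2 ^ k * K ^ (m+1)) * ((u - τ) ^ (m + 2) / (m + 2)!))
          (g := fun u => (2 ^ k * K ^ (m+1)) * ((u - τ) ^ (m + 1) / (m + 1)!))
          hτs
          (ContinuousOn.sub ((hcont k hk).mono (fun u hu => le_trans hτ hu.1))
            continuousOn_const)
          (by simpa using hGood k hk)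
          (barrier_deriv _ τ m)
          (by simp)
          (by
            intro u hu
            have h1 : 0 ≤ u - τ := by linarith [hu.1]
            positivity)
          ?hder
        · -- conclude step
          have e : (2 ^ k * K ^ (m+1)) * ((s - τ) ^ (m + 2) / (m + 2)!)
              = 2 ^ k * (K ^ (m+1) * (s - τ) ^ (m + 1 + 1) / (m + 1 + 1)!) := by
            ring_nf
          calc z k s - b k ≤ _ := key
            _ = _ := e
        case hder =>
          intro u hu hfu
          have hu0 : 0 < u := lt_of_le_of_lt hτ hu.1
          have huIcc : u ∈ Icc τ (τ + m₀) := ⟨hu.1.le, by linarith [hu.2, hs.2]⟩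
          refine ⟨vfield lam n (fun i => z i u) k, (hderiv k hk u hu0).sub_const _, ?_⟩
          have hcx := crux hlam0 hlam1 hn hj hb hb1 hblam hbj1 hvb
            (hOrd u hu0.le) (by
              intro i
              have h := hS2 u huIcc i
              rw [← hm₀]
              exact h)
            hk (by simpa using hfu)
          rw [← hm₀, ← hL] at hcx
          refine le_trans hcx ?_
          have hterm : ∀ i, i ∈ Finset.range (k + 2) →
              max (z i u - b i) 0 ≤ 2 ^ i * (K ^ m * (u - τ) ^ (m + 1) / (m + 1)!) := by
            intro i _
            have hA := hA0 u ⟨hu.1.le, hu.2.le⟩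
            rcases Nat.eq_zero_or_pos i with rfl | hi
            · have h1 : z 0 u = 1 := (hz.1 u hu0.le).1
              have h2 : b 0 = 1 := hb.1
              simp only [h1, h2, sub_self, pow_zero, one_mul, max_self]
              exact hA
            · have := ih i hi u huIcc
              have h2 : (0:ℝ) ≤ 2 ^ i * (K ^ m * (u - τ) ^ (m + 1) / (m + 1)!) := by
                positivity
              exact max_le this h2
          have hsum := Finset.sum_le_sum hterm
          have hgeo : ∑ i ∈ Finset.range (k + 2), (2:ℝ) ^ i * (K ^ m * (u - τ) ^ (m + 1) / (m + 1)!)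
              = (∑ i ∈ Finset.range (k + 2), (2:ℝ) ^ i) * (K ^ m * (u - τ) ^ (m + 1) / (m + 1)!) := by
            rw [Finset.sum_mul]
          have hgeo2 : (∑ i ∈ Finset.range (k + 2), (2:ℝ) ^ i) ≤ 2 ^ (k + 2) :=
            sum_pow_two_le (k + 2)
          have hA := hA0 u ⟨hu.1.le, hu.2.le⟩
          calc L * ∑ i ∈ Finset.range (k + 2), max (z i u - b i) 0
              ≤ L * (2 ^ (k + 2) * (K ^ m * (u - τ) ^ (m + 1) / (m + 1)!)) := by
                apply mul_le_mul_of_nonneg_left _ hLpos.le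
                rw [hgeo] at hsum
                calc ∑ i ∈ Finset.range (k + 2), max (z i u - b i) 0
                    ≤ (∑ i ∈ Finset.range (k + 2), (2:ℝ) ^ i)
                        * (K ^ m * (u - τ) ^ (m + 1) / (m + 1)!) := hsum
                  _ ≤ 2 ^ (k + 2) * (K ^ m * (u - τ) ^ (m + 1) / (m + 1)!) :=
                      mul_le_mul_of_nonneg_right hgeo2 hA
            _ = (2 ^ k * K ^ (m+1)) * ((u - τ) ^ (m + 1) / (m + 1)!) := by
                rw [hK]; ring
    -- S4 : take the limit
    intro t ht k hk
    have hbound : ∀ m : ℕ, z k t - b k ≤ (2 ^ k * m₀) * ((K * m₀) ^ m / m !) := by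
      intro m
      have h1 := hS3 m k hk t ht
      have hx0 : 0 ≤ t - τ := by linarith [ht.1]
      have hxδ : t - τ ≤ m₀ := by linarith [ht.2]
      have hpow : (t - τ) ^ (m+1) ≤ m₀ ^ (m+1) := pow_le_pow_left₀ hx0 hxδ _
      have h2 : K ^ m * (t - τ) ^ (m + 1) / (m + 1)! ≤ K ^ m * m₀ ^ (m + 1) / (m + 1)! := by
        have hnum : K ^ m * (t - τ) ^ (m+1) ≤ K ^ m * m₀ ^ (m+1) :=
          mul_le_mul_of_nonneg_left hpow (by positivity)
        have hfpos' : (0:ℝ) < ((m+1)! : ℝ) := by positivity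
        exact div_le_div_of_nonneg_right hnum hfpos'.le
      have hfle : (m ! : ℝ) ≤ ((m+1)! : ℝ) := by
        exact_mod_cast Nat.factorial_le (Nat.le_succ m)
      have hfpos : (0:ℝ) < (m ! : ℝ) := by positivity
      have h3 : K ^ m * m₀ ^ (m + 1) / ((m+1)! : ℝ) ≤ K ^ m * m₀ ^ (m+1) / (m ! : ℝ) :=
        div_le_div_of_nonneg_left (by positivity) hfpos hfle
      have e : 2 ^ k * (K ^ m * m₀ ^ (m + 1) / (m ! : ℝ)) = (2 ^ k * m₀) * ((K * m₀) ^ m / m !) := by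
        rw [mul_pow, pow_succ]; ring
      calc z k t - b k ≤ 2 ^ k * (K ^ m * (t - τ) ^ (m + 1) / (m + 1)!) := h1
        _ ≤ 2 ^ k * (K ^ m * m₀ ^ (m + 1) / (m + 1)!) :=
            mul_le_mul_of_nonneg_left h2 (by positivity)
        _ ≤ 2 ^ k * (K ^ m * m₀ ^ (m+1) / (m ! : ℝ)) :=
            mul_le_mul_of_nonneg_left h3 (by positivity)
        _ = _ := e
    have hlim : Tendsto (fun m : ℕ => (2 ^ k * m₀) * ((K * m₀) ^ m / m !)) atTop (𝓝 0) := by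
      have := FloorSemiring.tendsto_pow_div_factorial_atTop (K * m₀)
      have h2 := this.const_mul (2 ^ k * m₀)
      simpa using h2
    have hfin : z k t - b k ≤ 0 := ge_of_tendsto' hlim hbound
    linarith
  -- iterate the step
  have hmain : ∀ M : ℕ, ∀ t, t ∈ Icc (0:ℝ) (M * m₀) → ∀ k, 1 ≤ k → z k t ≤ b k := by
    intro M
    induction M with
    | zero =>
      intro t ht k hk
      have : t = 0 := le_antisymm (by simpa using ht.2) ht.1
      rw [this]; exact hinit k hk
    | succ M ih =>
      intro t ht k hk
      rcases le_total t (M * m₀) with h | h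
      · exact ih t ⟨ht.1, h⟩ k hk
      · have hM0 : (0:ℝ) ≤ M * m₀ := by positivity
        apply hstep (M * m₀) hM0 (fun k' hk' => ih (M * m₀) ⟨hM0, le_refl _⟩ k' hk') t
          ⟨h, ?_⟩ k hk
        have := ht.2
        push_cast at this ⊢
        linarith
  intro k hk t ht
  obtain ⟨M, hM⟩ := exists_nat_ge (t / m₀)
  have htM : t ≤ M * m₀ := by
    rw [div_le_iff₀ hm₀pos] at hM
    linarith
  exact hmain M t ⟨ht, htM⟩ k hk


end St17


/-- the shifted sequence a^(j), a^(j)_k = a_(max(k-j,0)), is a fixed point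
of the modified dynamics, and solutions starting below a^(j) stay below a^(j). -/
theorem stmt17 (lam : ℝ) (hlam0 : 0 < lam) (hlam1 : lam < 1) (n : ℕ) (hn : 1 ≤ n)
    (a : ℕ → ℝ) (ha0 : a 0 = 1)
    (harec : ∀ k, a (k + 1) = lam * a k ^ n * mu n a k)
    (j : ℕ) (hj : 1 ≤ j) (aj : ℕ → ℝ) (haj : ∀ k, aj k = a (k - j)) :
    (∀ k : ℕ, 1 ≤ k →
      vfield lam n aj k + (aj j - aj (j + 1)) * (if k = j then 1 else 0) = 0) ∧
    (∀ z : ℕ → ℝ → ℝ, IsSolution lam n z → (∀ k, 1 ≤ k → z k 0 ≤ aj k) →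
      ∀ k, 1 ≤ k → ∀ t : ℝ, 0 ≤ t → z k t ≤ aj k) := by
  have halam : a 1 = lam := St17.a_one hn ha0 harec
  have ha : St17.Ord a := St17.a_ord hlam0 hlam1 hn ha0 harec
  have hb : St17.Ord aj := St17.aj_ord haj ha ha0
  have hfix := St17.fixed_point haj hn hj ha0 halam harec
  refine ⟨hfix, ?_⟩
  intro z hsol hinit k hk t ht
  have hb1 : ∀ i, i ≤ j → aj i = 1 := fun i hi => St17.aj_eq_one haj ha0 hi
  have hblam : ∀ i, j < i → aj i ≤ lam := fun i hi => St17.aj_le_lam haj ha halam hi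
  have hbj1 : aj (j + 1) = lam := by rw [St17.aj_succ_j haj hj, halam]
  have hvb : ∀ k', 1 ≤ k' → k' ≠ j → vfield lam n aj k' = 0 := by
    intro k' hk' hne
    have h := hfix k' hk'
    rw [if_neg hne, mul_zero, add_zero] at h
    exact h
  exact St17.part2 hlam0 hlam1 hn hj hb hb1 hblam hbj1 hvb z hsol hinit k hk t ht

end
end
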